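/- arXiv:2101.11953 — 10 statements merged into one kernel-verified Lean document; each statement's English description precedes it below -/
import Mathlib

section
/- Let 𝔤 be a finite-dimensional real Lie algebra, let J be a complex structure on 𝔤, let ω_cs be a symplectic form on 𝔤 with respect to which J is symmetric, and let ω_pK be a symplectic form on 𝔤 with respect to which J is skew-symmetric. Let E = ω_pK⁻¹ ∘ ω_cs and define g(X,Y) = ω_pK(X,JY). Then g(EX,EY) = −g(X,Y) holds for all X,Y ∈ 𝔤 if and only if E² = id. -/
/-- The Nijenhuis tensor of a linear map `A` on a Lie algebra. -/
def nijenhuis {L : Type*} [LieRing L] [LieAlgebra ℝ L] (A : L →ₗ[ℝ] L) (X Y : L) : L :=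
  -A (A ⁅X, Y⁆) + A ⁅A X, Y⁆ + A ⁅X, A Y⁆ - ⁅A X, A Y⁆

/-- A complex structure on a Lie algebra: `J² = -id` with vanishing Nijenhuis tensor. -/
def IsComplexStructure {L : Type*} [LieRing L] [LieAlgebra ℝ L] (J : L →ₗ[ℝ] L) : Prop :=
  (∀ X, J (J X) = -X) ∧ (∀ X Y, nijenhuis J X Y = 0)

/-- A symplectic form: an alternating bilinear form which is closed and nondegenerate. -/
def IsSymplecticForm {L : Type*} [LieRing L] [LieAlgebra ℝ L]
    (ω : L →ₗ[ℝ] L →ₗ[ℝ] ℝ) : Prop :=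
  (∀ X, ω X X = 0) ∧
  (∀ X Y Z, ω ⁅X, Y⁆ Z + ω ⁅Y, Z⁆ X + ω ⁅Z, X⁆ Y = 0) ∧
  (∀ X, (∀ Y, ω X Y = 0) → X = 0)

theorem stmt2 {L : Type*} [LieRing L] [LieAlgebra ℝ L] [FiniteDimensional ℝ L]
    (J E : L →ₗ[ℝ] L) (ωcs ωpK : L →ₗ[ℝ] L →ₗ[ℝ] ℝ)
    (hJ : IsComplexStructure J)
    (hcs : IsSymplecticForm ωcs) (hsym : ∀ X Y, ωcs (J X) Y = ωcs X (J Y))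
    (hpK : IsSymplecticForm ωpK) (hskew : ∀ X Y, ωpK (J X) Y = -ωpK X (J Y))
    (hE : ∀ X Y, ωpK (E X) Y = ωcs X Y)
    (g : L → L → ℝ) (hg : ∀ X Y, g X Y = ωpK X (J Y)) :
    (∀ X Y, g (E X) (E Y) = -g X Y) ↔ E ∘ₗ E = LinearMap.id := by
  have skewpK : ∀ X Y, ωpK X Y = -ωpK Y X := by
    intro X Y
    have h1 := hpK.1 (X + Y)
    have h2 := hpK.1 X
    have h3 := hpK.1 Y
    simp [map_add] at h1
    linarith
  have skewcs : ∀ X Y, ωcs X Y = -ωcs Y X := by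
    intro X Y
    have h1 := hcs.1 (X + Y)
    have h2 := hcs.1 X
    have h3 := hcs.1 Y
    simp [map_add] at h1
    linarith
  have hJJ := hJ.1
  -- nondegeneracy against all `J X` suffices
  have ndeg : ∀ Z : L, (∀ X, ωpK Z (J X) = 0) → Z = 0 := by
    intro Z hZ
    apply hpK.2.2
    intro W
    simpa [hJJ] using hZ (-(J W))
  -- E anticommutes with J
  have hEJ : ∀ X, E (J X) = -J (E X) := by
    intro X
    have key : ∀ Y, ωpK (E (J X) + J (E X)) Y = 0 := by
      intro Y
      have h1 : ωpK (E (J X)) Y = ωpK (E X) (J Y) := by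
        rw [hE, hsym, ← hE]
      have h2 : ωpK (J (E X)) Y = -ωpK (E X) (J Y) := hskew _ _
      simp [map_add, h1, h2]
    exact add_eq_zero_iff_eq_neg.mp (hpK.2.2 _ key)
  constructor
  · intro h
    ext Y
    simp only [LinearMap.comp_apply, LinearMap.id_apply]
    have key : ∀ X, ωpK (E (E Y) - Y) (J X) = 0 := by
      intro X
      have h0 := h X Y
      rw [hg, hg] at h0
      have l1 : ωpK (E X) (J (E Y)) = -ωpK (E (E Y)) (J X) := by
        rw [hE, ← hsym, skewcs, ← hE]
      have l2 : ωpK X (J Y) = ωpK Y (J X) := by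
        rw [skewpK X (J Y), hskew, neg_neg]
      rw [l1, l2] at h0
      have : ωpK (E (E Y)) (J X) = ωpK Y (J X) := by linarith
      simp [map_sub, this]
    have := ndeg _ key
    exact sub_eq_zero.mp this
  · intro h X Y
    have hid : ∀ Z, E (E Z) = Z := by
      intro Z
      have := LinearMap.ext_iff.mp h Z
      simpa using this
    have hJE : J (E Y) = -E (J Y) := by
      rw [hEJ, neg_neg]
    rw [hg, hg, hJE, map_neg]
    rw [hE, skewcs, ← hE, hid, skewpK (J Y) X]
    ring
end

section
/- Let 𝔤 be a finite-dimensional real Lie algebra, let ω_cs and ω_pK be symplectic forms on 𝔤, and let E = ω_pK⁻¹ ∘ ω_cs. If E² = id, then the Nijenhuis tensor of E vanishes identically, i.e., N_E(X,Y) = −E²[X,Y] + E[EX,Y] + E[X,EY] − [EX,EY] = 0 for all X,Y ∈ 𝔤. -/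
theorem stmt5 {L : Type*} [LieRing L] [LieAlgebra ℝ L] [FiniteDimensional ℝ L]
    (E : L →ₗ[ℝ] L) (ωcs ωpK : L →ₗ[ℝ] L →ₗ[ℝ] ℝ)
    (hcs : IsSymplecticForm ωcs) (hpK : IsSymplecticForm ωpK)
    (hE : ∀ X Y, ωpK (E X) Y = ωcs X Y)
    (hE2 : E ∘ₗ E = LinearMap.id) :
    ∀ X Y, nijenhuis E X Y = 0 := by
  obtain ⟨hcs_alt, hcs_cl, _⟩ := hcs
  obtain ⟨hpK_alt, hpK_cl, hpK_nd⟩ := hpK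
  have hEE : ∀ X : L, E (E X) = X := fun X => congrFun (congrArg (fun f => f.toFun) hE2) X
  have skewpK : ∀ X Y, ωpK X Y = - ωpK Y X := by
    intro X Y
    have h := hpK_alt (X + Y)
    simp only [map_add, LinearMap.add_apply, hpK_alt X, hpK_alt Y] at h
    linarith
  have skewcs : ∀ X Y, ωcs X Y = - ωcs Y X := by
    intro X Y
    have h := hcs_alt (X + Y)
    simp only [map_add, LinearMap.add_apply, hcs_alt X, hcs_alt Y] at h
    linarith
  have sa : ∀ X Y, ωpK (E X) Y = ωpK X (E Y) := by
    intro X Y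
    rw [hE, skewcs, ← hE, skewpK]; exact neg_neg _
  intro X Y
  apply hpK_nd
  intro Z
  have e1 : ωcs ⁅E X, Y⁆ Z = - ωpK ⁅Y, Z⁆ X - ωpK ⁅Z, E X⁆ (E Y) := by
    have h1 := hcs_cl (E X) Y Z
    have a : ωcs ⁅Y, Z⁆ (E X) = ωpK ⁅Y, Z⁆ X := by rw [← hE, sa, hEE]
    have b : ωcs ⁅Z, E X⁆ Y = ωpK ⁅Z, E X⁆ (E Y) := by rw [← hE, sa]
    linarith
  have e2 : ωcs ⁅X, E Y⁆ Z = - ωpK ⁅E Y, Z⁆ (E X) - ωpK ⁅Z, X⁆ Y := by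
    have h2 := hcs_cl X (E Y) Z
    have a : ωcs ⁅E Y, Z⁆ X = ωpK ⁅E Y, Z⁆ (E X) := by rw [← hE, sa]
    have b : ωcs ⁅Z, X⁆ (E Y) = ωpK ⁅Z, X⁆ Y := by rw [← hE, sa, hEE]
    linarith
  have h3 := hpK_cl X Y Z
  have h4 := hpK_cl (E X) (E Y) Z
  simp only [nijenhuis, hEE, map_add, map_sub, map_neg, LinearMap.add_apply,
    LinearMap.sub_apply, LinearMap.neg_apply, hE]
  linarith
end

section
/- Let 𝔤 be a nonzero finite-dimensional real Lie algebra, let J be a complex structure on 𝔤, let ω_cs be a symplectic form on 𝔤 with respect to which J is symmetric, and let ω_pK be a symplectic form on 𝔤 with respect to which J is skew-symmetric. Define E = ω_pK⁻¹ ∘ ω_cs and g(X,Y) = ω_pK(X,JY). Then (J,E,g) is a hypersymplectic structure on 𝔤 if and only if E² = id. -/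
/-- A hypersymplectic structure `(J, E, g)` on a Lie algebra. -/
def IsHypersymplectic {L : Type*} [LieRing L] [LieAlgebra ℝ L]
    (J E : L →ₗ[ℝ] L) (g : L →ₗ[ℝ] L →ₗ[ℝ] ℝ) : Prop :=
  IsComplexStructure J ∧
  E ∘ₗ E = LinearMap.id ∧ E ≠ LinearMap.id ∧ E ≠ -LinearMap.id ∧
  (∀ X Y, nijenhuis E X Y = 0) ∧
  (∀ X, J (E X) = -E (J X)) ∧
  (∀ X Y, g X Y = g Y X) ∧ (∀ X, (∀ Y, g X Y = 0) → X = 0) ∧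
  (∀ X Y, g (J X) (J Y) = g X Y) ∧ (∀ X Y, g (E X) (E Y) = -g X Y) ∧
  (∀ X Y Z, g (J ⁅X, Y⁆) Z + g (J ⁅Y, Z⁆) X + g (J ⁅Z, X⁆) Y = 0) ∧
  (∀ X Y Z, g (J (E ⁅X, Y⁆)) Z + g (J (E ⁅Y, Z⁆)) X + g (J (E ⁅Z, X⁆)) Y = 0)

theorem stmt6 {L : Type*} [LieRing L] [LieAlgebra ℝ L] [FiniteDimensional ℝ L] [Nontrivial L]
    (J E : L →ₗ[ℝ] L) (ωcs ωpK : L →ₗ[ℝ] L →ₗ[ℝ] ℝ)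
    (hJ : IsComplexStructure J)
    (hcs : IsSymplecticForm ωcs) (hsym : ∀ X Y, ωcs (J X) Y = ωcs X (J Y))
    (hpK : IsSymplecticForm ωpK) (hskew : ∀ X Y, ωpK (J X) Y = -ωpK X (J Y))
    (hE : ∀ X Y, ωpK (E X) Y = ωcs X Y)
    (g : L →ₗ[ℝ] L →ₗ[ℝ] ℝ) (hg : ∀ X Y, g X Y = ωpK X (J Y)) :
    IsHypersymplectic J E g ↔ E ∘ₗ E = LinearMap.id := by
  constructor
  · exact fun h => h.2.1
  intro hE2
  have hE2' : ∀ X, E (E X) = X := fun X => by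
    have := LinearMap.ext_iff.mp hE2 X
    simpa using this
  obtain ⟨hcsA, hcsC, hcsN⟩ := hcs
  obtain ⟨hpA, hpC, hpN⟩ := hpK
  have pAnti : ∀ X Y, ωpK X Y = -ωpK Y X := by
    intro X Y
    have h := hpA (X + Y)
    simp [map_add, hpA X, hpA Y] at h
    linarith
  have csAnti : ∀ X Y, ωcs X Y = -ωcs Y X := by
    intro X Y
    have h := hcsA (X + Y)
    simp [map_add, hcsA X, hcsA Y] at h
    linarith
  have Esym : ∀ X Y, ωpK (E X) Y = ωpK X (E Y) := by
    intro X Y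
    rw [hE, csAnti, ← hE, pAnti]
    ring
  have EE : ∀ X Y, ωpK (E X) (E Y) = ωpK X Y := by
    intro X Y
    rw [Esym, hE2']
  have hJ2 := hJ.1
  have Jsur : ∀ Z : L, ∃ Y, J Y = Z := fun Z => ⟨-(J Z), by simp [hJ2]⟩
  have JJ : ∀ X Y, ωpK (J X) (J Y) = ωpK X Y := by
    intro X Y
    rw [hskew, hJ2]
    simp
  have anti : ∀ X, J (E X) = -E (J X) := by
    intro X
    have key : ∀ Y, ωpK (J (E X) + E (J X)) Y = 0 := by
      intro Y
      have h1 : ωpK (E (J X)) Y = ωcs (J X) Y := hE _ _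
      have h2 : ωcs (J X) Y = ωcs X (J Y) := hsym _ _
      have h3 : ωcs X (J Y) = ωpK (E X) (J Y) := (hE _ _).symm
      have h4 : ωpK (J (E X)) Y = -ωpK (E X) (J Y) := hskew _ _
      simp only [map_add, LinearMap.add_apply]
      linarith
    have h0 := hpN _ key
    exact eq_neg_of_add_eq_zero_left h0
  have τC : ∀ X Y Z, ωpK (E ⁅X, Y⁆) Z + ωpK (E ⁅Y, Z⁆) X + ωpK (E ⁅Z, X⁆) Y = 0 := by
    intro X Y Z
    rw [hE, hE, hE]
    exact hcsC X Y Z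
  have NE : ∀ X Y, nijenhuis E X Y = 0 := by
    intro X Y
    apply hpN
    intro Z
    have c1 := τC (E X) Y Z
    have c2 := τC X (E Y) Z
    have c3 := hpC (E X) (E Y) Z
    have c4 := hpC X Y Z
    rw [EE ⁅Y, Z⁆ X] at c1
    rw [EE ⁅Z, X⁆ Y] at c2
    rw [← Esym ⁅E Y, Z⁆ X, ← Esym ⁅Z, E X⁆ Y] at c3
    show ωpK (nijenhuis E X Y) Z = 0
    simp only [nijenhuis, hE2', map_add, map_sub, map_neg, LinearMap.add_apply,
      LinearMap.sub_apply, LinearMap.neg_apply]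
    linarith
  have gsymm : ∀ X Y, g X Y = g Y X := by
    intro X Y
    rw [hg X Y, hg Y X, pAnti Y (J X), hskew X Y]
    ring
  have gnd : ∀ X, (∀ Y, g X Y = 0) → X = 0 := by
    intro X h
    apply hpN
    intro Z
    obtain ⟨Y, hY⟩ := Jsur Z
    rw [← hY]
    have := h Y
    rwa [hg] at this
  have gJJ : ∀ X Y, g (J X) (J Y) = g X Y := by
    intro X Y
    rw [hg, hg, hJ2, map_neg, hskew]
    ring
  have gEE : ∀ X Y, g (E X) (E Y) = -g X Y := by
    intro X Y
    rw [hg, hg, anti, map_neg, EE]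
  have gJ : ∀ A B, g (J A) B = ωpK A B := by
    intro A B
    rw [hg, JJ]
  have ω1C : ∀ X Y Z, g (J ⁅X, Y⁆) Z + g (J ⁅Y, Z⁆) X + g (J ⁅Z, X⁆) Y = 0 := by
    intro X Y Z
    rw [gJ, gJ, gJ]
    exact hpC X Y Z
  have ω3C : ∀ X Y Z, g (J (E ⁅X, Y⁆)) Z + g (J (E ⁅Y, Z⁆)) X + g (J (E ⁅Z, X⁆)) Y = 0 := by
    intro X Y Z
    rw [gJ, gJ, gJ, hE, hE, hE]
    exact hcsC X Y Z
  obtain ⟨x, hx⟩ := exists_ne (0 : L)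
  have neid : E ≠ LinearMap.id := by
    intro h
    have hcp : ∀ X Y, ωcs X Y = ωpK X Y := by
      intro X Y
      have h' := hE X Y
      rw [h] at h'
      simpa using h'.symm
    apply hx
    apply hpN
    intro Z
    obtain ⟨Y, hY⟩ := Jsur Z
    rw [← hY]
    have h1 := hsym x Y
    have h2 := hskew x Y
    rw [hcp, hcp] at h1
    linarith
  have nenegid : E ≠ -LinearMap.id := by
    intro h
    have hcp : ∀ X Y, ωcs X Y = -ωpK X Y := by
      intro X Y
      have h' := hE X Y
      rw [h] at h'
      simp only [LinearMap.neg_apply, LinearMap.id_coe, id_eq, map_neg,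
        LinearMap.neg_apply] at h'
      linarith [h']
    apply hx
    apply hpN
    intro Z
    obtain ⟨Y, hY⟩ := Jsur Z
    rw [← hY]
    have h1 := hsym x Y
    have h2 := hskew x Y
    rw [hcp, hcp] at h1
    linarith
  exact ⟨hJ, hE2, neid, nenegid, NE, anti, gsymm, gnd, gJJ, gEE, ω1C, ω3C⟩
end

section
/- Let 𝔯'₂ be the 4-dimensional real Lie algebra with basis e₁,e₂,e₃,e₄ and nonzero brackets [e₁,e₃] = e₃, [e₁,e₄] = e₄, [e₂,e₃] = e₄, [e₂,e₄] = −e₃. For ξ ∈ ℂ with Im(ξ) ≠ 0, let J_ξ : 𝔯'₂ → 𝔯'₂ be the linear map with J_ξ(e₁) = (Re(ξ)/Im(ξ))e₁ + (|ξ|²/Im(ξ))e₂, J_ξ(e₂) = −(1/Im(ξ))e₁ − (Re(ξ)/Im(ξ))e₂, J_ξ(e₃) = e₄, J_ξ(e₄) = −e₃. Then there exists a symplectic form ω on 𝔯'₂ with respect to which J_ξ is symmetric if and only if ξ = i. -/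
set_option maxHeartbeats 1600000

theorem stmt8 {L : Type*} [LieRing L] [LieAlgebra ℝ L]
    (b : Module.Basis (Fin 4) ℝ L)
    (hb01 : ⁅b 0, b 1⁆ = 0) (hb02 : ⁅b 0, b 2⁆ = b 2) (hb03 : ⁅b 0, b 3⁆ = b 3)
    (hb12 : ⁅b 1, b 2⁆ = b 3) (hb13 : ⁅b 1, b 3⁆ = -b 2) (hb23 : ⁅b 2, b 3⁆ = 0)
    (ξ : ℂ) (hξ : ξ.im ≠ 0) (J : L →ₗ[ℝ] L)
    (hJ0 : J (b 0) = (ξ.re / ξ.im) • b 0 + (Complex.normSq ξ / ξ.im) • b 1)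
    (hJ1 : J (b 1) = -((1 / ξ.im) • b 0) - (ξ.re / ξ.im) • b 1)
    (hJ2 : J (b 2) = b 3) (hJ3 : J (b 3) = -b 2) :
    (∃ ω : L →ₗ[ℝ] L →ₗ[ℝ] ℝ, IsSymplecticForm ω ∧ ∀ X Y, ω (J X) Y = ω X (J Y)) ↔
      ξ = Complex.I := by
  constructor
  · rintro ⟨ω, ⟨halt, hclosed, hnondeg⟩, hsym⟩
    have skew : ∀ X Y : L, ω Y X = -ω X Y := by
      intro X Y
      have h := halt (X + Y)
      simp only [map_add, LinearMap.add_apply, halt] at h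
      linarith
    have h20 : ⁅b 2, b 0⁆ = -b 2 := by rw [← lie_skew, hb02]
    have h30 : ⁅b 3, b 0⁆ = -b 3 := by rw [← lie_skew, hb03]
    have h31 : ⁅b 3, b 1⁆ = b 2 := by rw [← lie_skew, hb13, neg_neg]
    -- closedness conditions
    have e1 := hclosed (b 0) (b 1) (b 2)
    rw [hb01, hb12, h20] at e1
    simp only [map_zero, LinearMap.zero_apply, map_neg, LinearMap.neg_apply, zero_add] at e1
    have e2 := hclosed (b 0) (b 1) (b 3)
    rw [hb01, hb13, h30] at e2
    simp only [map_zero, LinearMap.zero_apply, map_neg, LinearMap.neg_apply, zero_add] at e2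
    have e3 := hclosed (b 0) (b 2) (b 3)
    rw [hb02, hb23, h30] at e3
    simp only [map_zero, LinearMap.zero_apply, map_neg, LinearMap.neg_apply, add_zero] at e3
    have s03 := skew (b 0) (b 3)
    have s12 := skew (b 1) (b 2)
    have s02 := skew (b 0) (b 2)
    have s13 := skew (b 1) (b 3)
    have s23 := skew (b 2) (b 3)
    -- e1 : ω b3 b0 + -(ω b2 b1) = 0  ⟹ w12 = w03
    have hw12 : ω (b 1) (b 2) = ω (b 0) (b 3) := by linarith
    have hw13 : ω (b 1) (b 3) = -ω (b 0) (b 2) := by linarith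
    have hw23 : ω (b 2) (b 3) = 0 := by linarith
    -- symmetry conditions
    have f02 := hsym (b 0) (b 2)
    rw [hJ0, hJ2] at f02
    simp only [map_add, map_smul, LinearMap.add_apply, LinearMap.smul_apply,
      smul_eq_mul] at f02
    have f03 := hsym (b 0) (b 3)
    rw [hJ0, hJ3] at f03
    simp only [map_add, map_smul, map_neg, LinearMap.add_apply, LinearMap.smul_apply,
      LinearMap.neg_apply, smul_eq_mul] at f03
    have f12 := hsym (b 1) (b 2)
    rw [hJ1, hJ2] at f12
    simp only [map_add, map_sub, map_smul, map_neg, LinearMap.add_apply, LinearMap.sub_apply,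
      LinearMap.smul_apply, LinearMap.neg_apply, smul_eq_mul] at f12
    set r := ξ.re with hr
    set s := ξ.im with hs
    set w02 := ω (b 0) (b 2) with hw02d
    set w03 := ω (b 0) (b 3) with hw03d
    rw [hw12] at f02 f12
    rw [hw13] at f03 f12
    rw [Complex.normSq_apply, ← hr, ← hs] at f02 f03
    field_simp at f02 f03 f12
    -- f02 : r * w02 + (r*r + s*s) * w03 = w03 * s  (roughly)
    have keyS : s ^ 2 * ((r * r + (s - 1) * (s - 1)) * w03) = 0 := by
      linear_combination (s * (s - 1)) * f02 - (s * r) * f12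
    have key : (r * r + (s - 1) * (s - 1)) * w03 = 0 :=
      (mul_eq_zero.mp keyS).resolve_left (pow_ne_zero 2 hξ)
    rcases mul_eq_zero.mp key with hk | hk
    · have hr0 : r = 0 := by nlinarith [sq_nonneg r, sq_nonneg (s - 1)]
      have hs1 : s = 1 := by nlinarith [sq_nonneg r, sq_nonneg (s - 1)]
      exact Complex.ext (by simp [← hr, hr0]) (by simp [← hs, hs1])
    · -- w03 = 0; nondegeneracy forces w02 ≠ 0
      have hw02 : w02 ≠ 0 := by
        intro h0
        have hz : ∀ Y : L, ω (b 2) Y = 0 := by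
          intro Y
          conv_lhs => rw [← b.sum_repr Y]
          rw [Fin.sum_univ_four]
          simp only [map_add, map_smul, smul_eq_mul]
          have z0 : ω (b 2) (b 0) = 0 := by rw [s02, h0, neg_zero]
          have z1 : ω (b 2) (b 1) = 0 := by rw [s12, hw12, hk, neg_zero]
          have z2 : ω (b 2) (b 2) = 0 := halt _
          rw [z0, z1, z2, hw23]; ring
        exact b.ne_zero 2 (hnondeg _ hz)
      rw [hk] at f12 f02
      have hs1 : s = 1 := by
        have h1 : s * ((s - 1) * w02) = 0 := by linear_combination s * f12
        rcases mul_eq_zero.mp ((mul_eq_zero.mp h1).resolve_left hξ) with h | h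
        · linarith
        · exact absurd h hw02
      have hr0 : r = 0 := by
        have h1 : r * w02 = 0 := by linear_combination f02
        exact (mul_eq_zero.mp h1).resolve_right hw02
      exact Complex.ext (by simp [← hr, hr0]) (by simp [← hs, hs1])
  · rintro rfl
    simp only [Complex.I_re, Complex.I_im, Complex.normSq_apply, zero_div, zero_smul,
      mul_zero, mul_one, zero_add, div_one, one_smul, neg_zero, sub_zero] at hJ0 hJ1
    -- hJ0 : J (b 0) = b 1, hJ1 : J (b 1) = -b 0
    have h10 : ⁅b 1, b 0⁆ = 0 := by rw [← lie_skew, hb01, neg_zero]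
    have h20 : ⁅b 2, b 0⁆ = -b 2 := by rw [← lie_skew, hb02]
    have h30 : ⁅b 3, b 0⁆ = -b 3 := by rw [← lie_skew, hb03]
    have h21 : ⁅b 2, b 1⁆ = -b 3 := by rw [← lie_skew, hb12]
    have h31 : ⁅b 3, b 1⁆ = b 2 := by rw [← lie_skew, hb13, neg_neg]
    have h32 : ⁅b 3, b 2⁆ = 0 := by rw [← lie_skew, hb23, neg_zero]
    have brack : ∀ X Y : L, ⁅X, Y⁆ =
        (b.repr X 0 * b.repr Y 2 - b.repr X 1 * b.repr Y 3 - b.repr X 2 * b.repr Y 0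
          + b.repr X 3 * b.repr Y 1) • b 2 +
        (b.repr X 0 * b.repr Y 3 + b.repr X 1 * b.repr Y 2 - b.repr X 3 * b.repr Y 0
          - b.repr X 2 * b.repr Y 1) • b 3 := by
      intro X Y
      conv_lhs => rw [← b.sum_repr X, ← b.sum_repr Y]
      rw [Fin.sum_univ_four, Fin.sum_univ_four]
      simp only [add_lie, lie_add, smul_lie, lie_smul, lie_self,
        hb01, hb02, hb03, hb12, hb13, hb23, h10, h20, h21, h30, h31, h32]
      module
    have hJX : ∀ X : L, J X =
        (-(b.repr X 1)) • b 0 + (b.repr X 0) • b 1 + (-(b.repr X 3)) • b 2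
          + (b.repr X 2) • b 3 := by
      intro X
      conv_lhs => rw [← b.sum_repr X]
      rw [Fin.sum_univ_four]
      simp only [map_add, map_smul, hJ0, hJ1, hJ2, hJ3]
      module
    refine ⟨LinearMap.mk₂ ℝ
      (fun X Y => b.repr X 0 * b.repr Y 2 - b.repr X 2 * b.repr Y 0
        - b.repr X 1 * b.repr Y 3 + b.repr X 3 * b.repr Y 1)
      (by intro X X' Y; simp only [map_add, Finsupp.add_apply]; ring)
      (by intro c X Y; simp only [map_smul, Finsupp.smul_apply, smul_eq_mul]; ring)
      (by intro X Y Y'; simp only [map_add, Finsupp.add_apply]; ring)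
      (by intro c X Y; simp only [map_smul, Finsupp.smul_apply, smul_eq_mul]; ring),
      ⟨?_, ?_, ?_⟩, ?_⟩
    · intro X
      simp only [LinearMap.mk₂_apply]
      ring
    · intro X Y Z
      simp only [LinearMap.mk₂_apply, brack X Y, brack Y Z, brack Z X]
      simp [Module.Basis.repr_self_apply]
      ring
    · intro X hX
      have h0 := hX (b 2)
      have h1 := hX (b 3)
      have h2 := hX (b 0)
      have h3 := hX (b 1)
      simp [Module.Basis.repr_self_apply] at h0 h1 h2 h3
      apply b.repr.injective
      ext i
      fin_cases i <;> simp_all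
    · intro X Y
      simp only [LinearMap.mk₂_apply, hJX X, hJX Y]
      simp [Module.Basis.repr_self_apply]
      ring
end

section
/- Let 𝔯'₂ be the 4-dimensional real Lie algebra with basis e₁,e₂,e₃,e₄ and nonzero brackets [e₁,e₃] = e₃, [e₁,e₄] = e₄, [e₂,e₃] = e₄, [e₂,e₄] = −e₃, and let J_i be the complex structure with J_i(e₁) = e₂, J_i(e₂) = −e₁, J_i(e₃) = e₄, J_i(e₄) = −e₃. Then for every symplectic form ω on 𝔯'₂ with respect to which J_i is symmetric, the complex symplectic structure (J_i, ω) is equivalent to (J_i, e¹³ − e²⁴). -/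
/-- The elementary alternating 2-form `e^{ij}` relative to a basis `b`. -/
noncomputable def e2 {L : Type*} [AddCommGroup L] [Module ℝ L] {n : ℕ}
    (b : Module.Basis (Fin n) ℝ L) (i j : Fin n) (X Y : L) : ℝ :=
  b.repr X i * b.repr Y j - b.repr X j * b.repr Y i

set_option maxHeartbeats 2000000 in
theorem stmt9 {L : Type*} [LieRing L] [LieAlgebra ℝ L]
    (b : Module.Basis (Fin 4) ℝ L)
    (hb01 : ⁅b 0, b 1⁆ = 0) (hb02 : ⁅b 0, b 2⁆ = b 2) (hb03 : ⁅b 0, b 3⁆ = b 3)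
    (hb12 : ⁅b 1, b 2⁆ = b 3) (hb13 : ⁅b 1, b 3⁆ = -b 2) (hb23 : ⁅b 2, b 3⁆ = 0)
    (J : L →ₗ[ℝ] L)
    (hJ0 : J (b 0) = b 1) (hJ1 : J (b 1) = -b 0)
    (hJ2 : J (b 2) = b 3) (hJ3 : J (b 3) = -b 2) :
    ∀ ω : L →ₗ[ℝ] L →ₗ[ℝ] ℝ, IsSymplecticForm ω → (∀ X Y, ω (J X) Y = ω X (J Y)) →
      ∃ φ : L ≃ₗ[ℝ] L, (∀ x y : L, φ ⁅x, y⁆ = ⁅φ x, φ y⁆) ∧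
        (∀ x, φ (J x) = J (φ x)) ∧
        (∀ X Y, e2 b 0 2 (φ X) (φ Y) - e2 b 1 3 (φ X) (φ Y) = ω X Y) := by
  
  intro ω hω hsym
  obtain ⟨halt, hclosed, hnondeg⟩ := hω
  have hskew : ∀ X Y : L, ω Y X = - ω X Y := by
    intro X Y
    have h := halt (X + Y)
    simp only [map_add, LinearMap.add_apply, halt X, halt Y] at h
    linarith
  -- reversed brackets
  have hb10 : ⁅b 1, b 0⁆ = 0 := by rw [← lie_skew, hb01, neg_zero]
  have hb20 : ⁅b 2, b 0⁆ = -b 2 := by rw [← lie_skew, hb02]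
  have hb30 : ⁅b 3, b 0⁆ = -b 3 := by rw [← lie_skew, hb03]
  have hb21 : ⁅b 2, b 1⁆ = -b 3 := by rw [← lie_skew, hb12]
  have hb31 : ⁅b 3, b 1⁆ = b 2 := by rw [← lie_skew, hb13, neg_neg]
  have hb32 : ⁅b 3, b 2⁆ = 0 := by rw [← lie_skew, hb23, neg_zero]
  -- ω values on the basis
  have h01 : ω (b 0) (b 1) = 0 := by
    have h := hsym (b 0) (b 0)
    rw [hJ0] at h
    have h2 := hskew (b 0) (b 1)
    linarith
  have h23 : ω (b 2) (b 3) = 0 := by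
    have h := hsym (b 2) (b 2)
    rw [hJ2] at h
    have h2 := hskew (b 2) (b 3)
    linarith
  have h12 : ω (b 1) (b 2) = ω (b 0) (b 3) := by
    have h := hclosed (b 0) (b 1) (b 2)
    rw [hb01, hb12, hb20] at h
    simp only [map_zero, LinearMap.zero_apply, map_neg, LinearMap.neg_apply] at h
    have s1 := hskew (b 0) (b 3)
    have s2 := hskew (b 1) (b 2)
    linarith
  have h13 : ω (b 1) (b 3) = - ω (b 0) (b 2) := by
    have h := hclosed (b 0) (b 1) (b 3)
    rw [hb01, hb13, hb30] at h
    simp only [map_zero, LinearMap.zero_apply, map_neg, LinearMap.neg_apply] at h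
    have s1 := hskew (b 0) (b 2)
    have s2 := hskew (b 1) (b 3)
    linarith
  set a : ℝ := ω (b 0) (b 2) with ha
  set c : ℝ := ω (b 0) (b 3) with hc
  -- nondegeneracy gives a ≠ 0 or c ≠ 0
  have hd : a ^ 2 + c ^ 2 ≠ 0 := by
    intro h0
    have haz : a = 0 := by nlinarith [sq_nonneg a, sq_nonneg c]
    have hcz : c = 0 := by nlinarith [sq_nonneg a, sq_nonneg c]
    have hzero : b 0 = 0 := by
      apply hnondeg
      have : ω (b 0) = 0 := by
        apply b.ext
        intro i
        fin_cases i
        · simpa using halt (b 0)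
        · simpa using h01
        · simpa using haz
        · simpa using hcz
      intro Y; rw [this]; rfl
    exact b.ne_zero 0 hzero
  set d : ℝ := a ^ 2 + c ^ 2 with hdd
  let φ₀ : L →ₗ[ℝ] L := b.constr ℝ ![b 0, b 1, a • b 2 - c • b 3, c • b 2 + a • b 3]
  let ψ₀ : L →ₗ[ℝ] L :=
    b.constr ℝ ![b 0, b 1, (a/d) • b 2 + (c/d) • b 3, (-c/d) • b 2 + (a/d) • b 3]
  have hφ0 : φ₀ (b 0) = b 0 := by simp [φ₀]
  have hφ1 : φ₀ (b 1) = b 1 := by simp [φ₀]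
  have hφ2 : φ₀ (b 2) = a • b 2 - c • b 3 := by simp [φ₀]
  have hφ3 : φ₀ (b 3) = c • b 2 + a • b 3 := by simp [φ₀]
  have hψ0 : ψ₀ (b 0) = b 0 := by simp [ψ₀]
  have hψ1 : ψ₀ (b 1) = b 1 := by simp [ψ₀]
  have hψ2 : ψ₀ (b 2) = (a/d) • b 2 + (c/d) • b 3 := by simp [ψ₀]
  have hψ3 : ψ₀ (b 3) = (-c/d) • b 2 + (a/d) • b 3 := by simp [ψ₀]
  have hcomp1 : φ₀.comp ψ₀ = LinearMap.id := by
    apply b.ext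
    intro i
    fin_cases i <;>
      simp [LinearMap.comp_apply, LinearMap.id_apply, hφ0, hφ1, hφ2, hφ3,
        hψ0, hψ1, hψ2, hψ3, map_add, map_sub, map_smul, smul_sub, smul_add, smul_smul] <;>
      match_scalars <;> field_simp <;> ring
  have hcomp2 : ψ₀.comp φ₀ = LinearMap.id := by
    apply b.ext
    intro i
    fin_cases i <;>
      simp [LinearMap.comp_apply, LinearMap.id_apply, hφ0, hφ1, hφ2, hφ3,
        hψ0, hψ1, hψ2, hψ3, map_add, map_sub, map_smul, smul_sub, smul_add, smul_smul] <;>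
      match_scalars <;> field_simp <;> ring
  refine ⟨LinearEquiv.ofLinear φ₀ ψ₀ hcomp1 hcomp2, ?_, ?_, ?_⟩
  · -- automorphism
    let T : L →ₗ[ℝ] L →ₗ[ℝ] L := LinearMap.mk₂ ℝ (fun x y => φ₀ ⁅x, y⁆ - ⁅φ₀ x, φ₀ y⁆)
      (fun m₁ m₂ n => by simp only [add_lie, map_add]; abel)
      (fun r m n => by simp only [smul_lie, map_smul, smul_sub])
      (fun m n₁ n₂ => by simp only [lie_add, map_add]; abel)
      (fun r m n => by simp only [lie_smul, map_smul, smul_sub])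
    have hT : T = 0 := by
      apply b.ext; intro i; apply b.ext; intro j
      fin_cases i <;> fin_cases j <;>
        simp [T, LinearMap.mk₂_apply, LinearMap.zero_apply, lie_self,
          hb01, hb02, hb03, hb12, hb13, hb23, hb10, hb20, hb30, hb21, hb31, hb32,
          hφ0, hφ1, hφ2, hφ3, map_zero, map_neg, map_add, map_sub, map_smul,
          lie_add, add_lie, lie_sub, sub_lie, lie_smul, smul_lie, lie_neg, neg_lie,
          smul_zero, smul_neg, neg_neg, sub_self, lie_zero, zero_lie] <;>
        module
    intro x y
    have h := LinearMap.congr_fun (LinearMap.congr_fun hT x) y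
    simp only [T, LinearMap.mk₂_apply, LinearMap.zero_apply, sub_eq_zero] at h
    simpa [LinearEquiv.ofLinear_apply] using h
  · -- commutes with J
    have h : φ₀.comp J = J.comp φ₀ := by
      apply b.ext
      intro i
      fin_cases i <;>
        simp [LinearMap.comp_apply, hJ0, hJ1, hJ2, hJ3, hφ0, hφ1, hφ2, hφ3,
          map_sub, map_add, map_smul, map_neg, smul_neg] <;>
        try abel
    intro x
    have := LinearMap.congr_fun h x
    simpa [LinearEquiv.ofLinear_apply] using this
  · -- symplectic form
    let Ω : L →ₗ[ℝ] L →ₗ[ℝ] ℝ := LinearMap.mk₂ ℝ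
      (fun X Y => e2 b 0 2 (φ₀ X) (φ₀ Y) - e2 b 1 3 (φ₀ X) (φ₀ Y))
      (fun m₁ m₂ n => by
        simp only [e2, map_add, Finsupp.add_apply]; ring)
      (fun r m n => by
        simp only [e2, map_smul, Finsupp.smul_apply, smul_eq_mul]; ring)
      (fun m n₁ n₂ => by
        simp only [e2, map_add, Finsupp.add_apply]; ring)
      (fun r m n => by
        simp only [e2, map_smul, Finsupp.smul_apply, smul_eq_mul]; ring)
    have hΩ : Ω = ω := by
      apply b.ext; intro i; apply b.ext; intro j
      have s01 := hskew (b 0) (b 1)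
      have s02 := hskew (b 0) (b 2)
      have s03 := hskew (b 0) (b 3)
      have s12 := hskew (b 1) (b 2)
      have s13 := hskew (b 1) (b 3)
      have s23 := hskew (b 2) (b 3)
      have z0 := halt (b 0); have z1 := halt (b 1)
      have z2 := halt (b 2); have z3 := halt (b 3)
      fin_cases i <;> fin_cases j <;>
        simp [Ω, LinearMap.mk₂_apply, e2,
          hφ0, hφ1, hφ2, hφ3, map_sub, map_add, map_smul, Module.Basis.repr_self,
          Finsupp.sub_apply, Finsupp.add_apply, Finsupp.smul_apply,
          Finsupp.single_apply, smul_eq_mul] <;>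
        try linarith
    intro X Y
    have h := LinearMap.congr_fun (LinearMap.congr_fun hΩ X) Y
    simp only [Ω, LinearMap.mk₂_apply] at h
    simpa [LinearEquiv.ofLinear_apply] using h
end

section
/- Let 𝔡₄,₂ be the 4-dimensional real Lie algebra with basis e₁,e₂,e₃,e₄ and nonzero brackets [e₁,e₂] = e₃, [e₁,e₄] = −2e₁, [e₂,e₄] = e₂, [e₃,e₄] = −e₃, and let J₂ be the complex structure with J₂(e₁) = e₃, J₂(e₂) = e₄, J₂(e₃) = −e₁, J₂(e₄) = −e₂. Then: (i) a 2-form ω on 𝔡₄,₂ is symplectic with J₂ symmetric with respect to ω if and only if ω = ω_{a,b} := a(e¹² − e³⁴) + b(e¹⁴ − e²³) for some real numbers a, b with (a,b) ≠ (0,0); and (ii) for (a,b) ≠ (0,0) and (a',b') ≠ (0,0), the complex symplectic structures (J₂, ω_{a,b}) and (J₂, ω_{a',b'}) are equivalent if and only if ab' = a'b. -/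
namespace Stmt11Aux

section LieStuff

variable {L : Type*} [LieRing L] [LieAlgebra ℝ L]
    (b : Module.Basis (Fin 4) ℝ L)
    (hb01 : ⁅b 0, b 1⁆ = b 2) (hb02 : ⁅b 0, b 2⁆ = 0) (hb03 : ⁅b 0, b 3⁆ = -((2 : ℝ) • b 0))
    (hb12 : ⁅b 1, b 2⁆ = 0) (hb13 : ⁅b 1, b 3⁆ = b 1) (hb23 : ⁅b 2, b 3⁆ = -b 2)

include hb01 hb02 hb03 hb12 hb13 hb23 in
lemma brkt (X Y : L) : ⁅X, Y⁆ =
    (-2*(b.repr X 0 * b.repr Y 3 - b.repr X 3 * b.repr Y 0)) • b 0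
    + (b.repr X 1 * b.repr Y 3 - b.repr X 3 * b.repr Y 1) • b 1
    + (b.repr X 0 * b.repr Y 1 - b.repr X 1 * b.repr Y 0
       - b.repr X 2 * b.repr Y 3 + b.repr X 3 * b.repr Y 2) • b 2 := by
  have h10 : ⁅b 1, b 0⁆ = -b 2 := by rw [← lie_skew, hb01]
  have h20 : ⁅b 2, b 0⁆ = 0 := by rw [← lie_skew, hb02]; simp
  have h30 : ⁅b 3, b 0⁆ = (2:ℝ) • b 0 := by rw [← lie_skew, hb03]; simp
  have h21 : ⁅b 2, b 1⁆ = 0 := by rw [← lie_skew, hb12]; simp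
  have h31 : ⁅b 3, b 1⁆ = -b 1 := by rw [← lie_skew, hb13]
  have h32 : ⁅b 3, b 2⁆ = b 2 := by rw [← lie_skew, hb23]; simp
  conv_lhs => rw [← b.sum_repr X, ← b.sum_repr Y]
  simp only [Fin.sum_univ_four, add_lie, lie_add, smul_lie, lie_smul, lie_self,
    hb01, hb02, hb03, hb12, hb13, hb23, h10, h20, h30, h21, h31, h32,
    smul_zero, smul_neg, smul_smul]
  module

include hb01 hb02 hb03 hb12 hb13 hb23 in
lemma brepr0 (X Y : L) : b.repr ⁅X, Y⁆ 0 =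
    -2*(b.repr X 0 * b.repr Y 3 - b.repr X 3 * b.repr Y 0) := by
  rw [brkt b hb01 hb02 hb03 hb12 hb13 hb23 X Y]
  simp [Module.Basis.repr_self, Finsupp.single_apply]

include hb01 hb02 hb03 hb12 hb13 hb23 in
lemma brepr1 (X Y : L) : b.repr ⁅X, Y⁆ 1 =
    b.repr X 1 * b.repr Y 3 - b.repr X 3 * b.repr Y 1 := by
  rw [brkt b hb01 hb02 hb03 hb12 hb13 hb23 X Y]
  simp [Module.Basis.repr_self, Finsupp.single_apply]

include hb01 hb02 hb03 hb12 hb13 hb23 in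
lemma brepr2 (X Y : L) : b.repr ⁅X, Y⁆ 2 =
    b.repr X 0 * b.repr Y 1 - b.repr X 1 * b.repr Y 0
      - b.repr X 2 * b.repr Y 3 + b.repr X 3 * b.repr Y 2 := by
  rw [brkt b hb01 hb02 hb03 hb12 hb13 hb23 X Y]
  simp [Module.Basis.repr_self, Finsupp.single_apply]

include hb01 hb02 hb03 hb12 hb13 hb23 in
lemma brepr3 (X Y : L) : b.repr ⁅X, Y⁆ 3 = 0 := by
  rw [brkt b hb01 hb02 hb03 hb12 hb13 hb23 X Y]
  simp [Module.Basis.repr_self, Finsupp.single_apply]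

end LieStuff

section JStuff

variable {L : Type*} [AddCommGroup L] [Module ℝ L] (b : Module.Basis (Fin 4) ℝ L)
    (J : L →ₗ[ℝ] L)
    (hJ0 : J (b 0) = b 2) (hJ1 : J (b 1) = b 3)
    (hJ2 : J (b 2) = -b 0) (hJ3 : J (b 3) = -b 1)

include hJ0 hJ1 hJ2 hJ3 in
lemma Jform (X : L) : J X = (-(b.repr X 2)) • b 0 + (-(b.repr X 3)) • b 1
    + (b.repr X 0) • b 2 + (b.repr X 1) • b 3 := by
  conv_lhs => rw [← b.sum_repr X]
  simp only [map_sum, Fin.sum_univ_four, map_add, map_smul, hJ0, hJ1, hJ2, hJ3]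
  module

include hJ0 hJ1 hJ2 hJ3 in
lemma Jrepr0 (X : L) : b.repr (J X) 0 = -(b.repr X 2) := by
  rw [Jform b J hJ0 hJ1 hJ2 hJ3 X]; simp [Module.Basis.repr_self, Finsupp.single_apply]

include hJ0 hJ1 hJ2 hJ3 in
lemma Jrepr1 (X : L) : b.repr (J X) 1 = -(b.repr X 3) := by
  rw [Jform b J hJ0 hJ1 hJ2 hJ3 X]; simp [Module.Basis.repr_self, Finsupp.single_apply]

include hJ0 hJ1 hJ2 hJ3 in
lemma Jrepr2 (X : L) : b.repr (J X) 2 = b.repr X 0 := by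
  rw [Jform b J hJ0 hJ1 hJ2 hJ3 X]; simp [Module.Basis.repr_self, Finsupp.single_apply]

include hJ0 hJ1 hJ2 hJ3 in
lemma Jrepr3 (X : L) : b.repr (J X) 3 = b.repr X 1 := by
  rw [Jform b J hJ0 hJ1 hJ2 hJ3 X]; simp [Module.Basis.repr_self, Finsupp.single_apply]

end JStuff

section OmExp

variable {L : Type*} [LieRing L] [LieAlgebra ℝ L] (b : Module.Basis (Fin 4) ℝ L)

lemma omexp (ω : L →ₗ[ℝ] L →ₗ[ℝ] ℝ) (X Y : L) : ω X Y =
    b.repr X 0 * b.repr Y 0 * ω (b 0) (b 0) + b.repr X 0 * b.repr Y 1 * ω (b 0) (b 1)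
  + b.repr X 0 * b.repr Y 2 * ω (b 0) (b 2) + b.repr X 0 * b.repr Y 3 * ω (b 0) (b 3)
  + b.repr X 1 * b.repr Y 0 * ω (b 1) (b 0) + b.repr X 1 * b.repr Y 1 * ω (b 1) (b 1)
  + b.repr X 1 * b.repr Y 2 * ω (b 1) (b 2) + b.repr X 1 * b.repr Y 3 * ω (b 1) (b 3)
  + b.repr X 2 * b.repr Y 0 * ω (b 2) (b 0) + b.repr X 2 * b.repr Y 1 * ω (b 2) (b 1)
  + b.repr X 2 * b.repr Y 2 * ω (b 2) (b 2) + b.repr X 2 * b.repr Y 3 * ω (b 2) (b 3)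
  + b.repr X 3 * b.repr Y 0 * ω (b 3) (b 0) + b.repr X 3 * b.repr Y 1 * ω (b 3) (b 1)
  + b.repr X 3 * b.repr Y 2 * ω (b 3) (b 2) + b.repr X 3 * b.repr Y 3 * ω (b 3) (b 3) := by
  conv_lhs => rw [← b.sum_repr X, ← b.sum_repr Y]
  simp only [map_sum, map_smul, Fin.sum_univ_four, map_add, LinearMap.add_apply,
    LinearMap.smul_apply, smul_eq_mul]
  ring

end OmExp

section FStuff

variable {L : Type*} [AddCommGroup L] [Module ℝ L] (b : Module.Basis (Fin 4) ℝ L)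

/-- The linear map sending `b 0 ↦ t • b 0`, `b 1 ↦ b 1`, `b 2 ↦ t • b 2`, `b 3 ↦ b 3`. -/
noncomputable def F (t : ℝ) : L →ₗ[ℝ] L :=
  b.constr ℝ (fun i => (![t, 1, t, 1] i) • b i)

lemma F_basis (t : ℝ) (i : Fin 4) : F b t (b i) = (![t, 1, t, 1] i) • b i :=
  b.constr_basis _ _ _

lemma F_comp {s : ℝ} (hs : s ≠ 0) : (F b s).comp (F b s⁻¹) = LinearMap.id := by
  apply b.ext
  intro i
  fin_cases i <;>
    simp [F_basis, smul_smul, inv_mul_cancel₀ hs, mul_inv_cancel₀ hs]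

lemma F_comp' {s : ℝ} (hs : s ≠ 0) : (F b s⁻¹).comp (F b s) = LinearMap.id := by
  apply b.ext
  intro i
  fin_cases i <;>
    simp [F_basis, smul_smul, inv_mul_cancel₀ hs, mul_inv_cancel₀ hs]

lemma F_form (s : ℝ) (X : L) : F b s X = (s * b.repr X 0) • b 0 + (b.repr X 1) • b 1
    + (s * b.repr X 2) • b 2 + (b.repr X 3) • b 3 := by
  conv_lhs => rw [← b.sum_repr X]
  simp only [map_sum, Fin.sum_univ_four, map_add, map_smul, F_basis]
  simp only [Matrix.cons_val_zero, Matrix.cons_val_one, Matrix.head_cons,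
    Matrix.cons_val_two, Matrix.tail_cons, Matrix.cons_val_three]
  module

lemma Frepr0 (s : ℝ) (X : L) : b.repr (F b s X) 0 = s * b.repr X 0 := by
  rw [F_form]; simp [Module.Basis.repr_self, Finsupp.single_apply]

lemma Frepr1 (s : ℝ) (X : L) : b.repr (F b s X) 1 = b.repr X 1 := by
  rw [F_form]; simp [Module.Basis.repr_self, Finsupp.single_apply]

lemma Frepr2 (s : ℝ) (X : L) : b.repr (F b s X) 2 = s * b.repr X 2 := by
  rw [F_form]; simp [Module.Basis.repr_self, Finsupp.single_apply]

lemma Frepr3 (s : ℝ) (X : L) : b.repr (F b s X) 3 = b.repr X 3 := by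
  rw [F_form]; simp [Module.Basis.repr_self, Finsupp.single_apply]

end FStuff

end Stmt11Aux

open Stmt11Aux

theorem stmt11 {L : Type*} [LieRing L] [LieAlgebra ℝ L]
    (b : Module.Basis (Fin 4) ℝ L)
    (hb01 : ⁅b 0, b 1⁆ = b 2) (hb02 : ⁅b 0, b 2⁆ = 0) (hb03 : ⁅b 0, b 3⁆ = -((2 : ℝ) • b 0))
    (hb12 : ⁅b 1, b 2⁆ = 0) (hb13 : ⁅b 1, b 3⁆ = b 1) (hb23 : ⁅b 2, b 3⁆ = -b 2)
    (J : L →ₗ[ℝ] L)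
    (hJ0 : J (b 0) = b 2) (hJ1 : J (b 1) = b 3)
    (hJ2 : J (b 2) = -b 0) (hJ3 : J (b 3) = -b 1) :
    (∀ ω : L →ₗ[ℝ] L →ₗ[ℝ] ℝ,
      (IsSymplecticForm ω ∧ ∀ X Y, ω (J X) Y = ω X (J Y)) ↔
        (∃ a c : ℝ, (a, c) ≠ (0, 0) ∧ ∀ X Y, ω X Y =
          a * (e2 b 0 1 X Y - e2 b 2 3 X Y) + c * (e2 b 0 3 X Y - e2 b 1 2 X Y))) ∧
    (∀ a c a' c' : ℝ, (a, c) ≠ (0, 0) → (a', c') ≠ (0, 0) →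
      ((∃ φ : L ≃ₗ[ℝ] L, (∀ x y : L, φ ⁅x, y⁆ = ⁅φ x, φ y⁆) ∧
          (∀ x, φ (J x) = J (φ x)) ∧
          (∀ X Y, a' * (e2 b 0 1 (φ X) (φ Y) - e2 b 2 3 (φ X) (φ Y))
              + c' * (e2 b 0 3 (φ X) (φ Y) - e2 b 1 2 (φ X) (φ Y))
            = a * (e2 b 0 1 X Y - e2 b 2 3 X Y) + c * (e2 b 0 3 X Y - e2 b 1 2 X Y))) ↔
        a * c' = a' * c)) := by
  constructor
  · intro ω
    constructor
    · rintro ⟨⟨halt, hcl, hnd⟩, hsym⟩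
      have hskew : ∀ X Y : L, ω Y X = -(ω X Y) := by
        intro X Y
        have h := halt (X + Y)
        simp only [map_add, LinearMap.add_apply] at h
        have h1 := halt X; have h2 := halt Y; linarith
      have h02 : ω (b 0) (b 2) = 0 := by
        have h := hsym (b 0) (b 0); rw [hJ0] at h
        have h' := hskew (b 0) (b 2); linarith
      have h13 : ω (b 1) (b 3) = 0 := by
        have h := hsym (b 1) (b 1); rw [hJ1] at h
        have h' := hskew (b 1) (b 3); linarith
      have h23 : ω (b 2) (b 3) = -(ω (b 0) (b 1)) := by
        have h := hsym (b 0) (b 3); rw [hJ0, hJ3] at h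
        simp only [map_neg] at h
        linarith
      have h12 : ω (b 1) (b 2) = -(ω (b 0) (b 3)) := by
        have h := hsym (b 0) (b 1); rw [hJ0, hJ1] at h
        have h' := hskew (b 1) (b 2); linarith
      refine ⟨ω (b 0) (b 1), ω (b 0) (b 3), ?_, ?_⟩
      · intro hac
        rw [Prod.mk.injEq] at hac
        obtain ⟨ha, hc⟩ := hac
        refine b.ne_zero 0 (hnd (b 0) ?_)
        intro Y
        rw [omexp b ω (b 0) Y]
        simp [Module.Basis.repr_self, Finsupp.single_apply, halt, ha, hc, h02]
      · intro X Y
        have h10 := hskew (b 0) (b 1)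
        have h20 := hskew (b 0) (b 2)
        have h30 := hskew (b 0) (b 3)
        have h21 := hskew (b 1) (b 2)
        have h31 := hskew (b 1) (b 3)
        have h32 := hskew (b 2) (b 3)
        rw [omexp b ω X Y]
        simp only [e2, halt, h10, h20, h30, h21, h31, h32, h02, h13, h23, h12]
        ring
    · rintro ⟨a, c, hac, hω⟩
      have haor : a ≠ 0 ∨ c ≠ 0 := by
        by_contra h
        push_neg at h
        exact hac (by simp [h.1, h.2])
      have hsq : a ^ 2 + c ^ 2 ≠ 0 := by
        rcases haor with h | h <;> positivity
      refine ⟨⟨?_, ?_, ?_⟩, ?_⟩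
      · intro X; rw [hω]; simp only [e2]; ring
      · intro X Y Z
        rw [hω, hω, hω]
        simp only [e2, brepr0 b hb01 hb02 hb03 hb12 hb13 hb23,
          brepr1 b hb01 hb02 hb03 hb12 hb13 hb23,
          brepr2 b hb01 hb02 hb03 hb12 hb13 hb23,
          brepr3 b hb01 hb02 hb03 hb12 hb13 hb23]
        ring
      · intro X hX
        have h0 := hX (b 0); have h1 := hX (b 1); have h2 := hX (b 2); have h3 := hX (b 3)
        rw [hω] at h0 h1 h2 h3
        simp [e2, Module.Basis.repr_self, Finsupp.single_apply] at h0 h1 h2 h3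
        have e0 : b.repr X 0 = 0 := by
          have h : (a ^ 2 + c ^ 2) * b.repr X 0 = 0 := by linear_combination a * h1 + c * h3
          exact (mul_eq_zero.mp h).resolve_left hsq
        have e1 : b.repr X 1 = 0 := by
          have h : (a ^ 2 + c ^ 2) * b.repr X 1 = 0 := by linear_combination -a * h0 - c * h2
          exact (mul_eq_zero.mp h).resolve_left hsq
        have e2' : b.repr X 2 = 0 := by
          have h : (a ^ 2 + c ^ 2) * b.repr X 2 = 0 := by linear_combination c * h1 - a * h3
          exact (mul_eq_zero.mp h).resolve_left hsq
        have e3 : b.repr X 3 = 0 := by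
          have h : (a ^ 2 + c ^ 2) * b.repr X 3 = 0 := by linear_combination -c * h0 + a * h2
          exact (mul_eq_zero.mp h).resolve_left hsq
        apply b.ext_elem
        intro i
        fin_cases i <;> simp [e0, e1, e2', e3]
      · intro X Y
        rw [hω, hω]
        simp only [e2, Jrepr0 b J hJ0 hJ1 hJ2 hJ3, Jrepr1 b J hJ0 hJ1 hJ2 hJ3,
          Jrepr2 b J hJ0 hJ1 hJ2 hJ3, Jrepr3 b J hJ0 hJ1 hJ2 hJ3]
        ring
  · intro a c a' c' hac hac'
    have B0 := brepr0 b hb01 hb02 hb03 hb12 hb13 hb23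
    have B1 := brepr1 b hb01 hb02 hb03 hb12 hb13 hb23
    have B2 := brepr2 b hb01 hb02 hb03 hb12 hb13 hb23
    have B3 := brepr3 b hb01 hb02 hb03 hb12 hb13 hb23
    have J0 := Jrepr0 b J hJ0 hJ1 hJ2 hJ3
    have J1 := Jrepr1 b J hJ0 hJ1 hJ2 hJ3
    have J2 := Jrepr2 b J hJ0 hJ1 hJ2 hJ3
    have J3 := Jrepr3 b J hJ0 hJ1 hJ2 hJ3
    constructor
    · rintro ⟨φ, hbr, hcomJ, hωeq⟩
      have h3q : φ (b 3) = J (φ (b 1)) := by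
        conv_lhs => rw [← hJ1]
        rw [hcomJ]
      have hq : ⁅φ (b 1), J (φ (b 1))⁆ = φ (b 1) := by
        rw [← h3q, ← hbr, hb13]
      have c3 : b.repr (φ (b 1)) 3 = 0 := by
        conv_lhs => rw [← hq]
        rw [B3]
      have c2 : b.repr (φ (b 1)) 2 = 0 := by
        conv_lhs => rw [← hq]
        rw [B2, J0, J1, J2, J3]
        ring
      have c1 : b.repr (φ (b 1)) 1 * b.repr (φ (b 1)) 1 = b.repr (φ (b 1)) 1 := by
        conv_rhs => rw [← hq]
        rw [B1, J1, J3, c3]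
        ring
      have c0 : -2 * (b.repr (φ (b 1)) 0 * b.repr (φ (b 1)) 1) = b.repr (φ (b 1)) 0 := by
        conv_rhs => rw [← hq]
        rw [B0, J0, J3, c3]
        ring
      have hq1 : b.repr (φ (b 1)) 1 = 1 := by
        by_contra hne1
        have hq1' : b.repr (φ (b 1)) 1 = 0 := by
          have h : b.repr (φ (b 1)) 1 * (b.repr (φ (b 1)) 1 - 1) = 0 := by
            linear_combination c1
          rcases mul_eq_zero.mp h with h | h
          · exact h
          · exact absurd (by linarith) hne1
        have hq0 : b.repr (φ (b 1)) 0 = 0 := by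
          rw [hq1'] at c0; linarith
        have hz : φ (b 1) = 0 := by
          apply b.ext_elem; intro i; fin_cases i <;> simp [hq0, hq1', c2, c3]
        exact b.ne_zero 1 ((LinearEquiv.map_eq_zero_iff φ).mp hz)
      have hq0 : b.repr (φ (b 1)) 0 = 0 := by
        rw [hq1] at c0; linarith
      have hr0 : b.repr (φ (b 3)) 0 = 0 := by rw [h3q, J0, c2]; ring
      have hr1 : b.repr (φ (b 3)) 1 = 0 := by rw [h3q, J1, c3]; ring
      have hr2 : b.repr (φ (b 3)) 2 = 0 := by rw [h3q, J2, hq0]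
      have hr3 : b.repr (φ (b 3)) 3 = 1 := by rw [h3q, J3, hq1]
      have hp : ⁅φ (b 0), φ (b 3)⁆ = -((2:ℝ) • φ (b 0)) := by
        rw [← hbr, hb03, map_neg, map_smul]
      have d3 : b.repr (φ (b 0)) 3 = 0 := by
        have h := congrArg (fun z => b.repr z 3) hp
        simp only [B3] at h
        simp at h
        linarith
      have d1 : b.repr (φ (b 0)) 1 = 0 := by
        have h := congrArg (fun z => b.repr z 1) hp
        simp only [B1] at h
        simp [hr1, hr3, d3] at h
        linarith
      have d2 : b.repr (φ (b 0)) 2 = 0 := by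
        have h := congrArg (fun z => b.repr z 2) hp
        simp only [B2] at h
        simp [hr0, hr1, hr2, hr3, d1, d3] at h
        linarith
      have E1 := hωeq (b 0) (b 1)
      have E2 := hωeq (b 0) (b 3)
      simp [e2, Module.Basis.repr_self, Finsupp.single_apply, hq0, hq1, c2, c3,
        hr0, hr1, hr2, hr3, d1, d2, d3] at E1 E2
      linear_combination a' * E2 - c' * E1
    · intro heq
      obtain ⟨s, hs0, hsa, hsc⟩ : ∃ s : ℝ, s ≠ 0 ∧ s * a' = a ∧ s * c' = c := by
        by_cases ha' : a' = 0
        · have hc' : c' ≠ 0 := by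
            intro h; exact hac' (by simp [ha', h])
          have ha0 : a = 0 := by
            have h : a * c' = 0 := by rw [heq, ha']; ring
            exact (mul_eq_zero.mp h).resolve_right hc'
          have hc0 : c ≠ 0 := by
            intro h; exact hac (by simp [ha0, h])
          exact ⟨c / c', div_ne_zero hc0 hc', by simp [ha', ha0], by field_simp⟩
        · have ha0 : a ≠ 0 := by
            intro h
            rw [h] at heq
            have : c = 0 := by
              have h' : a' * c = 0 := by linarith [heq]
              exact (mul_eq_zero.mp h').resolve_left ha'
            exact hac (by simp [h, this])
          refine ⟨a / a', div_ne_zero ha0 ha', by field_simp, ?_⟩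
          field_simp
          linear_combination heq
      have hF0 := Frepr0 b s
      have hF1 := Frepr1 b s
      have hF2 := Frepr2 b s
      have hF3 := Frepr3 b s
      refine ⟨LinearEquiv.ofLinear (F b s) (F b s⁻¹) (F_comp b hs0) (F_comp' b hs0),
        ?_, ?_, ?_⟩
      · intro x y
        simp only [LinearEquiv.ofLinear_apply]
        apply b.ext_elem
        intro i
        fin_cases i <;>
          simp [B0, B1, B2, B3, hF0, hF1, hF2, hF3] <;> ring
      · intro x
        simp only [LinearEquiv.ofLinear_apply]
        apply b.ext_elem
        intro i
        fin_cases i <;>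
          simp [J0, J1, J2, J3, hF0, hF1, hF2, hF3]
      · intro X Y
        simp only [LinearEquiv.ofLinear_apply, e2, hF0, hF1, hF2, hF3]
        rw [← hsa, ← hsc]
        ring
end

section
/- Let 𝔤 be the 8-dimensional real Lie algebra with basis e₁,…,e₈ and nonzero brackets [e₁,e₂] = −e₅, [e₁,e₄] = −e₆, [e₂,e₃] = −e₆ (this is 𝔥₄ ⊕ ℝ²), and let J be the complex structure with J(e₁) = e₂, J(e₂) = −e₁, J(e₃) = −e₄, J(e₄) = e₃, J(e₅) = 2e₇, J(e₇) = −(1/2)e₅, J(e₆) = −e₈, J(e₈) = e₆. Then there exist a linear map E : 𝔤 → 𝔤 and a symmetric bilinear form g on 𝔤 such that (J,E,g) is a hypersymplectic structure on 𝔤. -/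
set_option maxHeartbeats 1000000
theorem stmt13 {L : Type*} [LieRing L] [LieAlgebra ℝ L]
    (b : Module.Basis (Fin 8) ℝ L)
    (hb01 : ⁅b 0, b 1⁆ = -b 4) (hb03 : ⁅b 0, b 3⁆ = -b 5) (hb12 : ⁅b 1, b 2⁆ = -b 5)
    (hbz : ∀ i j : Fin 8, i < j →
      (i, j) ∉ ([(0, 1), (0, 3), (1, 2)] : List (Fin 8 × Fin 8)) → ⁅b i, b j⁆ = 0)
    (J : L →ₗ[ℝ] L)
    (hJ0 : J (b 0) = b 1) (hJ1 : J (b 1) = -b 0)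
    (hJ2 : J (b 2) = -b 3) (hJ3 : J (b 3) = b 2)
    (hJ4 : J (b 4) = (2 : ℝ) • b 6) (hJ6 : J (b 6) = -((1 / 2 : ℝ) • b 4))
    (hJ5 : J (b 5) = -b 7) (hJ7 : J (b 7) = b 5) :
    ∃ (E : L →ₗ[ℝ] L) (g : L →ₗ[ℝ] L →ₗ[ℝ] ℝ), IsHypersymplectic J E g := by
  have k00 : ⁅b 0, b 0⁆ = 0 := lie_self _
  have k01 : ⁅b 0, b 1⁆ = -b 4 := hb01
  have k02 : ⁅b 0, b 2⁆ = 0 := hbz 0 2 (by decide) (by decide)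
  have k03 : ⁅b 0, b 3⁆ = -b 5 := hb03
  have k04 : ⁅b 0, b 4⁆ = 0 := hbz 0 4 (by decide) (by decide)
  have k05 : ⁅b 0, b 5⁆ = 0 := hbz 0 5 (by decide) (by decide)
  have k06 : ⁅b 0, b 6⁆ = 0 := hbz 0 6 (by decide) (by decide)
  have k07 : ⁅b 0, b 7⁆ = 0 := hbz 0 7 (by decide) (by decide)
  have k10 : ⁅b 1, b 0⁆ = b 4 := by rw [← lie_skew, hb01, neg_neg]
  have k11 : ⁅b 1, b 1⁆ = 0 := lie_self _
  have k12 : ⁅b 1, b 2⁆ = -b 5 := hb12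
  have k13 : ⁅b 1, b 3⁆ = 0 := hbz 1 3 (by decide) (by decide)
  have k14 : ⁅b 1, b 4⁆ = 0 := hbz 1 4 (by decide) (by decide)
  have k15 : ⁅b 1, b 5⁆ = 0 := hbz 1 5 (by decide) (by decide)
  have k16 : ⁅b 1, b 6⁆ = 0 := hbz 1 6 (by decide) (by decide)
  have k17 : ⁅b 1, b 7⁆ = 0 := hbz 1 7 (by decide) (by decide)
  have k20 : ⁅b 2, b 0⁆ = 0 := by rw [← lie_skew, hbz 0 2 (by decide) (by decide), neg_zero]
  have k21 : ⁅b 2, b 1⁆ = b 5 := by rw [← lie_skew, hb12, neg_neg]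
  have k22 : ⁅b 2, b 2⁆ = 0 := lie_self _
  have k23 : ⁅b 2, b 3⁆ = 0 := hbz 2 3 (by decide) (by decide)
  have k24 : ⁅b 2, b 4⁆ = 0 := hbz 2 4 (by decide) (by decide)
  have k25 : ⁅b 2, b 5⁆ = 0 := hbz 2 5 (by decide) (by decide)
  have k26 : ⁅b 2, b 6⁆ = 0 := hbz 2 6 (by decide) (by decide)
  have k27 : ⁅b 2, b 7⁆ = 0 := hbz 2 7 (by decide) (by decide)
  have k30 : ⁅b 3, b 0⁆ = b 5 := by rw [← lie_skew, hb03, neg_neg]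
  have k31 : ⁅b 3, b 1⁆ = 0 := by rw [← lie_skew, hbz 1 3 (by decide) (by decide), neg_zero]
  have k32 : ⁅b 3, b 2⁆ = 0 := by rw [← lie_skew, hbz 2 3 (by decide) (by decide), neg_zero]
  have k33 : ⁅b 3, b 3⁆ = 0 := lie_self _
  have k34 : ⁅b 3, b 4⁆ = 0 := hbz 3 4 (by decide) (by decide)
  have k35 : ⁅b 3, b 5⁆ = 0 := hbz 3 5 (by decide) (by decide)
  have k36 : ⁅b 3, b 6⁆ = 0 := hbz 3 6 (by decide) (by decide)
  have k37 : ⁅b 3, b 7⁆ = 0 := hbz 3 7 (by decide) (by decide)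
  have k40 : ⁅b 4, b 0⁆ = 0 := by rw [← lie_skew, hbz 0 4 (by decide) (by decide), neg_zero]
  have k41 : ⁅b 4, b 1⁆ = 0 := by rw [← lie_skew, hbz 1 4 (by decide) (by decide), neg_zero]
  have k42 : ⁅b 4, b 2⁆ = 0 := by rw [← lie_skew, hbz 2 4 (by decide) (by decide), neg_zero]
  have k43 : ⁅b 4, b 3⁆ = 0 := by rw [← lie_skew, hbz 3 4 (by decide) (by decide), neg_zero]
  have k44 : ⁅b 4, b 4⁆ = 0 := lie_self _
  have k45 : ⁅b 4, b 5⁆ = 0 := hbz 4 5 (by decide) (by decide)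
  have k46 : ⁅b 4, b 6⁆ = 0 := hbz 4 6 (by decide) (by decide)
  have k47 : ⁅b 4, b 7⁆ = 0 := hbz 4 7 (by decide) (by decide)
  have k50 : ⁅b 5, b 0⁆ = 0 := by rw [← lie_skew, hbz 0 5 (by decide) (by decide), neg_zero]
  have k51 : ⁅b 5, b 1⁆ = 0 := by rw [← lie_skew, hbz 1 5 (by decide) (by decide), neg_zero]
  have k52 : ⁅b 5, b 2⁆ = 0 := by rw [← lie_skew, hbz 2 5 (by decide) (by decide), neg_zero]
  have k53 : ⁅b 5, b 3⁆ = 0 := by rw [← lie_skew, hbz 3 5 (by decide) (by decide), neg_zero]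
  have k54 : ⁅b 5, b 4⁆ = 0 := by rw [← lie_skew, hbz 4 5 (by decide) (by decide), neg_zero]
  have k55 : ⁅b 5, b 5⁆ = 0 := lie_self _
  have k56 : ⁅b 5, b 6⁆ = 0 := hbz 5 6 (by decide) (by decide)
  have k57 : ⁅b 5, b 7⁆ = 0 := hbz 5 7 (by decide) (by decide)
  have k60 : ⁅b 6, b 0⁆ = 0 := by rw [← lie_skew, hbz 0 6 (by decide) (by decide), neg_zero]
  have k61 : ⁅b 6, b 1⁆ = 0 := by rw [← lie_skew, hbz 1 6 (by decide) (by decide), neg_zero]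
  have k62 : ⁅b 6, b 2⁆ = 0 := by rw [← lie_skew, hbz 2 6 (by decide) (by decide), neg_zero]
  have k63 : ⁅b 6, b 3⁆ = 0 := by rw [← lie_skew, hbz 3 6 (by decide) (by decide), neg_zero]
  have k64 : ⁅b 6, b 4⁆ = 0 := by rw [← lie_skew, hbz 4 6 (by decide) (by decide), neg_zero]
  have k65 : ⁅b 6, b 5⁆ = 0 := by rw [← lie_skew, hbz 5 6 (by decide) (by decide), neg_zero]
  have k66 : ⁅b 6, b 6⁆ = 0 := lie_self _
  have k67 : ⁅b 6, b 7⁆ = 0 := hbz 6 7 (by decide) (by decide)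
  have k70 : ⁅b 7, b 0⁆ = 0 := by rw [← lie_skew, hbz 0 7 (by decide) (by decide), neg_zero]
  have k71 : ⁅b 7, b 1⁆ = 0 := by rw [← lie_skew, hbz 1 7 (by decide) (by decide), neg_zero]
  have k72 : ⁅b 7, b 2⁆ = 0 := by rw [← lie_skew, hbz 2 7 (by decide) (by decide), neg_zero]
  have k73 : ⁅b 7, b 3⁆ = 0 := by rw [← lie_skew, hbz 3 7 (by decide) (by decide), neg_zero]
  have k74 : ⁅b 7, b 4⁆ = 0 := by rw [← lie_skew, hbz 4 7 (by decide) (by decide), neg_zero]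
  have k75 : ⁅b 7, b 5⁆ = 0 := by rw [← lie_skew, hbz 5 7 (by decide) (by decide), neg_zero]
  have k76 : ⁅b 7, b 6⁆ = 0 := by rw [← lie_skew, hbz 6 7 (by decide) (by decide), neg_zero]
  have k77 : ⁅b 7, b 7⁆ = 0 := lie_self _
  have hX : ∀ X : L, X = b.repr X 0 • b 0 + b.repr X 1 • b 1 + b.repr X 2 • b 2 +
      b.repr X 3 • b 3 + b.repr X 4 • b 4 + b.repr X 5 • b 5 + b.repr X 6 • b 6 +
      b.repr X 7 • b 7 := by
    intro X
    have h := b.sum_repr X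
    rw [Fin.sum_univ_eight] at h
    exact h.symm
  have hbrXY : ∀ X Y : L, ⁅X, Y⁆ =
      (b.repr X 1 * b.repr Y 0 - b.repr X 0 * b.repr Y 1) • b 4 +
      (b.repr X 3 * b.repr Y 0 + b.repr X 2 * b.repr Y 1 - b.repr X 0 * b.repr Y 3 -
        b.repr X 1 * b.repr Y 2) • b 5 := by
    intro X Y
    conv_lhs => rw [hX X, hX Y]
    simp only [add_lie, lie_add, smul_lie, lie_smul, k00, k01, k02, k03, k04, k05, k06, k07, k10, k11, k12, k13, k14, k15, k16, k17, k20, k21, k22, k23, k24, k25, k26, k27, k30, k31, k32, k33, k34, k35, k36, k37, k40, k41, k42, k43, k44, k45, k46, k47, k50, k51, k52, k53, k54, k55, k56, k57, k60, k61, k62, k63, k64, k65, k66, k67, k70, k71, k72, k73, k74, k75, k76, k77,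
      smul_zero, zero_add, add_zero, smul_neg]
    module
  have hJX : ∀ X : L, J X = (-b.repr X 1) • b 0 + (b.repr X 0) • b 1 + (b.repr X 3) • b 2 +
      (-b.repr X 2) • b 3 + (-((1/2 : ℝ) * b.repr X 6)) • b 4 + (b.repr X 7) • b 5 +
      ((2 : ℝ) * b.repr X 4) • b 6 + (-b.repr X 5) • b 7 := by
    intro X
    conv_lhs => rw [hX X]
    simp only [map_add, map_smul, hJ0, hJ1, hJ2, hJ3, hJ4, hJ5, hJ6, hJ7]
    module
  refine ⟨(b.coord 0).smulRight (b 0) - (b.coord 1).smulRight (b 1) +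
      (b.coord 2).smulRight (b 2) - (b.coord 3).smulRight (b 3) +
      (b.coord 4).smulRight (b 4) + (b.coord 5).smulRight (b 5) -
      (b.coord 6).smulRight (b 6) - (b.coord 7).smulRight (b 7),
    (b.coord 0).smulRight (b.coord 7) + (b.coord 7).smulRight (b.coord 0) +
      (b.coord 1).smulRight (b.coord 5) + (b.coord 5).smulRight (b.coord 1) +
      (b.coord 3).smulRight (b.coord 4) + (b.coord 4).smulRight (b.coord 3) +
      (b.coord 2).smulRight ((1/2 : ℝ) • b.coord 6) +
      (b.coord 6).smulRight ((1/2 : ℝ) • b.coord 2), ?_⟩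
  set E : L →ₗ[ℝ] L := (b.coord 0).smulRight (b 0) - (b.coord 1).smulRight (b 1) +
      (b.coord 2).smulRight (b 2) - (b.coord 3).smulRight (b 3) +
      (b.coord 4).smulRight (b 4) + (b.coord 5).smulRight (b 5) -
      (b.coord 6).smulRight (b 6) - (b.coord 7).smulRight (b 7) with hEdef
  set g : L →ₗ[ℝ] L →ₗ[ℝ] ℝ := (b.coord 0).smulRight (b.coord 7) +
      (b.coord 7).smulRight (b.coord 0) +
      (b.coord 1).smulRight (b.coord 5) + (b.coord 5).smulRight (b.coord 1) +
      (b.coord 3).smulRight (b.coord 4) + (b.coord 4).smulRight (b.coord 3) +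
      (b.coord 2).smulRight ((1/2 : ℝ) • b.coord 6) +
      (b.coord 6).smulRight ((1/2 : ℝ) • b.coord 2) with hgdef
  have hEX : ∀ X : L, E X = b.repr X 0 • b 0 - b.repr X 1 • b 1 + b.repr X 2 • b 2 -
      b.repr X 3 • b 3 + b.repr X 4 • b 4 + b.repr X 5 • b 5 - b.repr X 6 • b 6 -
      b.repr X 7 • b 7 := by
    intro X
    simp [hEdef, Module.Basis.coord_apply]
  have hgXY : ∀ X Y : L, g X Y = b.repr X 0 * b.repr Y 7 + b.repr X 7 * b.repr Y 0 +
      b.repr X 1 * b.repr Y 5 + b.repr X 5 * b.repr Y 1 + b.repr X 3 * b.repr Y 4 +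
      b.repr X 4 * b.repr Y 3 + (1/2 : ℝ) * (b.repr X 2 * b.repr Y 6) +
      (1/2 : ℝ) * (b.repr X 6 * b.repr Y 2) := by
    intro X Y
    simp [hgdef, Module.Basis.coord_apply, smul_eq_mul]
    ring
  have hrb : ∀ i j : Fin 8, b.repr (b i) j = if i = j then 1 else 0 := by
    intro i j
    simp [Module.Basis.repr_self, Finsupp.single_apply]
  have hrJ0 : ∀ X : L, b.repr (J X) 0 = (-b.repr X 1) := by
    intro X
    conv_lhs => rw [hJX X]
    simp [hrb, map_sub, Finsupp.sub_apply, Finsupp.smul_apply, smul_eq_mul]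
  have hrJ1 : ∀ X : L, b.repr (J X) 1 = (b.repr X 0) := by
    intro X
    conv_lhs => rw [hJX X]
    simp [hrb, map_sub, Finsupp.sub_apply, Finsupp.smul_apply, smul_eq_mul]
  have hrJ2 : ∀ X : L, b.repr (J X) 2 = (b.repr X 3) := by
    intro X
    conv_lhs => rw [hJX X]
    simp [hrb, map_sub, Finsupp.sub_apply, Finsupp.smul_apply, smul_eq_mul]
  have hrJ3 : ∀ X : L, b.repr (J X) 3 = (-b.repr X 2) := by
    intro X
    conv_lhs => rw [hJX X]
    simp [hrb, map_sub, Finsupp.sub_apply, Finsupp.smul_apply, smul_eq_mul]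
  have hrJ4 : ∀ X : L, b.repr (J X) 4 = (-((1/2 : ℝ) * b.repr X 6)) := by
    intro X
    conv_lhs => rw [hJX X]
    simp [hrb, map_sub, Finsupp.sub_apply, Finsupp.smul_apply, smul_eq_mul]
  have hrJ5 : ∀ X : L, b.repr (J X) 5 = (b.repr X 7) := by
    intro X
    conv_lhs => rw [hJX X]
    simp [hrb, map_sub, Finsupp.sub_apply, Finsupp.smul_apply, smul_eq_mul]
  have hrJ6 : ∀ X : L, b.repr (J X) 6 = ((2 : ℝ) * b.repr X 4) := by
    intro X
    conv_lhs => rw [hJX X]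
    simp [hrb, map_sub, Finsupp.sub_apply, Finsupp.smul_apply, smul_eq_mul]
  have hrJ7 : ∀ X : L, b.repr (J X) 7 = (-b.repr X 5) := by
    intro X
    conv_lhs => rw [hJX X]
    simp [hrb, map_sub, Finsupp.sub_apply, Finsupp.smul_apply, smul_eq_mul]
  have hrE0 : ∀ X : L, b.repr (E X) 0 = (b.repr X 0) := by
    intro X
    conv_lhs => rw [hEX X]
    simp [hrb, map_sub, Finsupp.sub_apply, Finsupp.smul_apply, smul_eq_mul]
  have hrE1 : ∀ X : L, b.repr (E X) 1 = (-b.repr X 1) := by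
    intro X
    conv_lhs => rw [hEX X]
    simp [hrb, map_sub, Finsupp.sub_apply, Finsupp.smul_apply, smul_eq_mul]
  have hrE2 : ∀ X : L, b.repr (E X) 2 = (b.repr X 2) := by
    intro X
    conv_lhs => rw [hEX X]
    simp [hrb, map_sub, Finsupp.sub_apply, Finsupp.smul_apply, smul_eq_mul]
  have hrE3 : ∀ X : L, b.repr (E X) 3 = (-b.repr X 3) := by
    intro X
    conv_lhs => rw [hEX X]
    simp [hrb, map_sub, Finsupp.sub_apply, Finsupp.smul_apply, smul_eq_mul]
  have hrE4 : ∀ X : L, b.repr (E X) 4 = (b.repr X 4) := by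
    intro X
    conv_lhs => rw [hEX X]
    simp [hrb, map_sub, Finsupp.sub_apply, Finsupp.smul_apply, smul_eq_mul]
  have hrE5 : ∀ X : L, b.repr (E X) 5 = (b.repr X 5) := by
    intro X
    conv_lhs => rw [hEX X]
    simp [hrb, map_sub, Finsupp.sub_apply, Finsupp.smul_apply, smul_eq_mul]
  have hrE6 : ∀ X : L, b.repr (E X) 6 = (-b.repr X 6) := by
    intro X
    conv_lhs => rw [hEX X]
    simp [hrb, map_sub, Finsupp.sub_apply, Finsupp.smul_apply, smul_eq_mul]
  have hrE7 : ∀ X : L, b.repr (E X) 7 = (-b.repr X 7) := by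
    intro X
    conv_lhs => rw [hEX X]
    simp [hrb, map_sub, Finsupp.sub_apply, Finsupp.smul_apply, smul_eq_mul]
  have hE0 : E (b 0) = b 0 := by
    rw [hEX (b 0)]
    simp [hrb]
  have hE1 : E (b 1) = -b 1 := by
    rw [hEX (b 1)]
    simp [hrb]
  have hE2 : E (b 2) = b 2 := by
    rw [hEX (b 2)]
    simp [hrb]
  have hE3 : E (b 3) = -b 3 := by
    rw [hEX (b 3)]
    simp [hrb]
  have hE4 : E (b 4) = b 4 := by
    rw [hEX (b 4)]
    simp [hrb]
  have hE5 : E (b 5) = b 5 := by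
    rw [hEX (b 5)]
    simp [hrb]
  have hE6 : E (b 6) = -b 6 := by
    rw [hEX (b 6)]
    simp [hrb]
  have hE7 : E (b 7) = -b 7 := by
    rw [hEX (b 7)]
    simp [hrb]
  have hgb6 : ∀ Z : L, g (b 6) Z = (1/2 : ℝ) * b.repr Z 2 := by
    intro Z
    rw [hgXY (b 6) Z]
    simp [hrb]
  have hgb7 : ∀ Z : L, g (b 7) Z = b.repr Z 0 := by
    intro Z
    rw [hgXY (b 7) Z]
    simp [hrb]
  refine ⟨⟨?_, ?_⟩, ?_, ?_, ?_, ?_, ?_, ?_, ?_, ?_, ?_, ?_, ?_⟩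
  · -- J ² = -1
    intro X
    conv_lhs => rw [hJX X]
    simp only [map_add, map_smul, hJ0, hJ1, hJ2, hJ3, hJ4, hJ5, hJ6, hJ7]
    conv_rhs => rw [hX X]
    module
  · -- Nijenhuis J
    intro X Y
    show -J (J ⁅X, Y⁆) + J ⁅J X, Y⁆ + J ⁅X, J Y⁆ - ⁅J X, J Y⁆ = 0
    rw [hbrXY X Y, hbrXY (J X) Y, hbrXY X (J Y), hbrXY (J X) (J Y)]
    simp only [hrJ0, hrJ1, hrJ2, hrJ3, hrJ4, hrJ5, hrJ6, hrJ7]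
    simp only [map_add, map_smul, map_neg, hJ4, hJ5, hJ6, hJ7]
    module
  · -- E ∘ E = id
    refine Module.Basis.ext b ?_
    intro i
    fin_cases i <;>
      simp [LinearMap.comp_apply, hE0, hE1, hE2, hE3, hE4, hE5, hE6, hE7]
  · -- E ≠ id
    intro h
    have h1 : E (b 1) = b 1 := by rw [h]; rfl
    rw [hE1] at h1
    have h2 : b 1 + b 1 = 0 := by
      nth_rewrite 1 [← h1]
      exact neg_add_cancel _
    have h3 : (2 : ℝ) • b 1 = 0 := by rw [two_smul]; exact h2
    rcases smul_eq_zero.mp h3 with h4 | h4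
    · norm_num at h4
    · exact b.ne_zero 1 h4
  · -- E ≠ -id
    intro h
    have h1 : E (b 0) = -b 0 := by rw [h]; rfl
    rw [hE0] at h1
    have h2 : b 0 + b 0 = 0 := by
      nth_rewrite 2 [h1]
      exact add_neg_cancel _
    have h3 : (2 : ℝ) • b 0 = 0 := by rw [two_smul]; exact h2
    rcases smul_eq_zero.mp h3 with h4 | h4
    · norm_num at h4
    · exact b.ne_zero 0 h4
  · -- Nijenhuis E
    intro X Y
    show -E (E ⁅X, Y⁆) + E ⁅E X, Y⁆ + E ⁅X, E Y⁆ - ⁅E X, E Y⁆ = 0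
    rw [hbrXY X Y, hbrXY (E X) Y, hbrXY X (E Y), hbrXY (E X) (E Y)]
    simp only [hrE0, hrE1, hrE2, hrE3, hrE4, hrE5, hrE6, hrE7]
    simp only [map_add, map_smul, map_neg, hE4, hE5]
    module
  · -- J E = -E J
    intro X
    conv_lhs => rw [hEX X]
    simp only [map_add, map_sub, map_smul, hJ0, hJ1, hJ2, hJ3, hJ4, hJ5, hJ6, hJ7]
    conv_rhs => rw [hJX X]
    simp only [map_add, map_smul, hE0, hE1, hE2, hE3, hE4, hE5, hE6, hE7]
    module
  · -- g symmetric
    intro X Y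
    rw [hgXY X Y, hgXY Y X]
    ring
  · -- g nondegenerate
    intro X h
    have c0 : b.repr X 0 = 0 := by have := h (b 7); rw [hgXY X (b 7)] at this; simpa [hrb] using this
    have c1 : b.repr X 1 = 0 := by have := h (b 5); rw [hgXY X (b 5)] at this; simpa [hrb] using this
    have c2 : b.repr X 2 = 0 := by
      have := h (b 6); rw [hgXY X (b 6)] at this; simp [hrb] at this; linarith
    have c3 : b.repr X 3 = 0 := by have := h (b 4); rw [hgXY X (b 4)] at this; simpa [hrb] using this
    have c4 : b.repr X 4 = 0 := by have := h (b 3); rw [hgXY X (b 3)] at this; simpa [hrb] using this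
    have c5 : b.repr X 5 = 0 := by have := h (b 1); rw [hgXY X (b 1)] at this; simpa [hrb] using this
    have c6 : b.repr X 6 = 0 := by
      have := h (b 2); rw [hgXY X (b 2)] at this; simp [hrb] at this; linarith
    have c7 : b.repr X 7 = 0 := by have := h (b 0); rw [hgXY X (b 0)] at this; simpa [hrb] using this
    have hx := hX X
    rw [c0, c1, c2, c3, c4, c5, c6, c7] at hx
    simpa using hx
  · -- g (J X) (J Y) = g X Y
    intro X Y
    rw [hgXY (J X) (J Y), hgXY X Y]
    simp only [hrJ0, hrJ1, hrJ2, hrJ3, hrJ4, hrJ5, hrJ6, hrJ7]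
    ring
  · -- g (E X) (E Y) = -g X Y
    intro X Y
    rw [hgXY (E X) (E Y), hgXY X Y]
    simp only [hrE0, hrE1, hrE2, hrE3, hrE4, hrE5, hrE6, hrE7]
    ring
  · -- ω₁ closed
    intro X Y Z
    rw [hbrXY X Y, hbrXY Y Z, hbrXY Z X]
    simp only [map_add, map_smul, hJ4, hJ5, map_neg, LinearMap.add_apply,
      LinearMap.smul_apply, LinearMap.neg_apply, smul_eq_mul, hgb6, hgb7]
    ring
  · -- ω₃ closed
    intro X Y Z
    rw [hbrXY X Y, hbrXY Y Z, hbrXY Z X]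
    simp only [map_add, map_smul, hE4, hE5, hJ4, hJ5, map_neg, LinearMap.add_apply,
      LinearMap.smul_apply, LinearMap.neg_apply, smul_eq_mul, hgb6, hgb7]
    ring
end

section
/- Let 𝔤 be the 8-dimensional real Lie algebra with basis e₁,…,e₈ and nonzero brackets [e₁,e₂] = −e₄, [e₁,e₃] = −e₅, [e₂,e₄] = −e₅, [e₁,e₄] = −e₆, [e₂,e₃] = e₆, [e₁,e₅] = −e₇, [e₂,e₆] = −e₇, [e₁,e₆] = −e₈, [e₂,e₅] = −7e₈, [e₃,e₄] = −8e₈, and let J be the complex structure with J(e₁) = e₂, J(e₂) = −e₁, J(e₃) = −3e₄, J(e₄) = (1/3)e₃, J(e₅) = −e₆, J(e₆) = e₅, J(e₇) = 3e₈, J(e₈) = −(1/3)e₇. Then there do NOT exist a linear map E : 𝔤 → 𝔤 and a symmetric bilinear form g on 𝔤 such that (J,E,g) is a hypersymplectic structure on 𝔤. -/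
set_option maxHeartbeats 1000000000


theorem stmt14 {L : Type*} [LieRing L] [LieAlgebra ℝ L]
    (b : Module.Basis (Fin 8) ℝ L)
    (hb01 : ⁅b 0, b 1⁆ = -b 3) (hb02 : ⁅b 0, b 2⁆ = -b 4) (hb13 : ⁅b 1, b 3⁆ = -b 4)
    (hb03 : ⁅b 0, b 3⁆ = -b 5) (hb12 : ⁅b 1, b 2⁆ = b 5)
    (hb04 : ⁅b 0, b 4⁆ = -b 6) (hb15 : ⁅b 1, b 5⁆ = -b 6)
    (hb05 : ⁅b 0, b 5⁆ = -b 7) (hb14 : ⁅b 1, b 4⁆ = -((7 : ℝ) • b 7))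
    (hb23 : ⁅b 2, b 3⁆ = -((8 : ℝ) • b 7))
    (hbz : ∀ i j : Fin 8, i < j →
      (i, j) ∉ ([(0, 1), (0, 2), (1, 3), (0, 3), (1, 2), (0, 4), (1, 5), (0, 5), (1, 4),
        (2, 3)] : List (Fin 8 × Fin 8)) → ⁅b i, b j⁆ = 0)
    (J : L →ₗ[ℝ] L)
    (hJ0 : J (b 0) = b 1) (hJ1 : J (b 1) = -b 0)
    (hJ2 : J (b 2) = -((3 : ℝ) • b 3)) (hJ3 : J (b 3) = (1 / 3 : ℝ) • b 2)
    (hJ4 : J (b 4) = -b 5) (hJ5 : J (b 5) = b 4)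
    (hJ6 : J (b 6) = (3 : ℝ) • b 7) (hJ7 : J (b 7) = -((1 / 3 : ℝ) • b 6)) :
    ¬ ∃ (E : L →ₗ[ℝ] L) (g : L →ₗ[ℝ] L →ₗ[ℝ] ℝ), IsHypersymplectic J E g := by
  rintro ⟨E, g, hJc, hE2, _, _, _, hJE, hgsym, hgnd, hgJinv, hgE, hw1, hw3⟩
  obtain ⟨hJJ, _⟩ := hJc
  have hEE : ∀ X : L, E (E X) = X := fun X => by
    have h := LinearMap.congr_fun hE2 X; simpa using h
  have hJanti : ∀ A B : L, g (J A) B = -(g A (J B)) := by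
    intro A B
    have h := hgJinv A (J B)
    rw [hJJ B, map_neg] at h
    linarith [h]
  have hEadj : ∀ A B : L, g (E A) B = -(g A (E B)) := by
    intro A B
    have h := hgE A (E B)
    rwa [hEE B] at h
  have hskew : ∀ A B : L, g (E A) B = -(g (E B) A) := by
    intro A B; rw [hEadj A B, hgsym A (E B)]
  have hflip : ∀ A B : L, g A (E B) = -(g (E A) B) := by
    intro A B; rw [hEadj A B]; ring
  have hsJ : ∀ A B : L, g (E (J A)) B = g (E A) (J B) := by
    intro A B
    have h1 : E (J A) = -(J (E A)) := by rw [hJE A, neg_neg]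
    rw [h1, map_neg, LinearMap.neg_apply, hJanti (E A) B, neg_neg]
  have hz06 : ⁅b 0, b 6⁆ = 0 := hbz 0 6 (by decide) (by decide)
  have hz07 : ⁅b 0, b 7⁆ = 0 := hbz 0 7 (by decide) (by decide)
  have hz16 : ⁅b 1, b 6⁆ = 0 := hbz 1 6 (by decide) (by decide)
  have hz17 : ⁅b 1, b 7⁆ = 0 := hbz 1 7 (by decide) (by decide)
  have hz25 : ⁅b 2, b 5⁆ = 0 := hbz 2 5 (by decide) (by decide)
  have hz26 : ⁅b 2, b 6⁆ = 0 := hbz 2 6 (by decide) (by decide)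
  have hz27 : ⁅b 2, b 7⁆ = 0 := hbz 2 7 (by decide) (by decide)
  have hz47 : ⁅b 4, b 7⁆ = 0 := hbz 4 7 (by decide) (by decide)
  have hr20 : ⁅b 2, b 0⁆ = b 4 := by
    rw [← lie_skew, hb02]; module
  have hr30 : ⁅b 3, b 0⁆ = b 5 := by
    rw [← lie_skew, hb03]; module
  have hr40 : ⁅b 4, b 0⁆ = b 6 := by
    rw [← lie_skew, hb04]; module
  have hr50 : ⁅b 5, b 0⁆ = b 7 := by
    rw [← lie_skew, hb05]; module
  have hr60 : ⁅b 6, b 0⁆ = 0 := by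
    rw [← lie_skew, hz06]; module
  have hr70 : ⁅b 7, b 0⁆ = 0 := by
    rw [← lie_skew, hz07]; module
  have aJ04 := hgJinv (b 0) (b 4)
  simp only [hJ0, hJ1, hJ2, hJ3, hJ4, hJ5, hJ6, hJ7, map_neg, map_smul, map_zero, LinearMap.neg_apply, LinearMap.smul_apply, LinearMap.zero_apply, smul_eq_mul, neg_neg, mul_neg, neg_mul, zero_mul, mul_zero, add_zero, zero_add, neg_zero] at aJ04
  have aJ22 := hgJinv (b 2) (b 2)
  simp only [hJ0, hJ1, hJ2, hJ3, hJ4, hJ5, hJ6, hJ7, map_neg, map_smul, map_zero, LinearMap.neg_apply, LinearMap.smul_apply, LinearMap.zero_apply, smul_eq_mul, neg_neg, mul_neg, neg_mul, zero_mul, mul_zero, add_zero, zero_add, neg_zero] at aJ22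
  have aJ05 := hgJinv (b 0) (b 5)
  simp only [hJ0, hJ1, hJ2, hJ3, hJ4, hJ5, hJ6, hJ7, map_neg, map_smul, map_zero, LinearMap.neg_apply, LinearMap.smul_apply, LinearMap.zero_apply, smul_eq_mul, neg_neg, mul_neg, neg_mul, zero_mul, mul_zero, add_zero, zero_add, neg_zero] at aJ05
  have aJ23 := hgJinv (b 2) (b 3)
  simp only [hJ0, hJ1, hJ2, hJ3, hJ4, hJ5, hJ6, hJ7, map_neg, map_smul, map_zero, LinearMap.neg_apply, LinearMap.smul_apply, LinearMap.zero_apply, smul_eq_mul, neg_neg, mul_neg, neg_mul, zero_mul, mul_zero, add_zero, zero_add, neg_zero] at aJ23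
  have aJ06 := hgJinv (b 0) (b 6)
  simp only [hJ0, hJ1, hJ2, hJ3, hJ4, hJ5, hJ6, hJ7, map_neg, map_smul, map_zero, LinearMap.neg_apply, LinearMap.smul_apply, LinearMap.zero_apply, smul_eq_mul, neg_neg, mul_neg, neg_mul, zero_mul, mul_zero, add_zero, zero_add, neg_zero] at aJ06
  have aJ24 := hgJinv (b 2) (b 4)
  simp only [hJ0, hJ1, hJ2, hJ3, hJ4, hJ5, hJ6, hJ7, map_neg, map_smul, map_zero, LinearMap.neg_apply, LinearMap.smul_apply, LinearMap.zero_apply, smul_eq_mul, neg_neg, mul_neg, neg_mul, zero_mul, mul_zero, add_zero, zero_add, neg_zero] at aJ24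
  have aJ44 := hgJinv (b 4) (b 4)
  simp only [hJ0, hJ1, hJ2, hJ3, hJ4, hJ5, hJ6, hJ7, map_neg, map_smul, map_zero, LinearMap.neg_apply, LinearMap.smul_apply, LinearMap.zero_apply, smul_eq_mul, neg_neg, mul_neg, neg_mul, zero_mul, mul_zero, add_zero, zero_add, neg_zero] at aJ44
  have aJ45 := hgJinv (b 4) (b 5)
  simp only [hJ0, hJ1, hJ2, hJ3, hJ4, hJ5, hJ6, hJ7, map_neg, map_smul, map_zero, LinearMap.neg_apply, LinearMap.smul_apply, LinearMap.zero_apply, smul_eq_mul, neg_neg, mul_neg, neg_mul, zero_mul, mul_zero, add_zero, zero_add, neg_zero] at aJ45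
  have aJ46 := hgJinv (b 4) (b 6)
  simp only [hJ0, hJ1, hJ2, hJ3, hJ4, hJ5, hJ6, hJ7, map_neg, map_smul, map_zero, LinearMap.neg_apply, LinearMap.smul_apply, LinearMap.zero_apply, smul_eq_mul, neg_neg, mul_neg, neg_mul, zero_mul, mul_zero, add_zero, zero_add, neg_zero] at aJ46
  have aJ47 := hgJinv (b 4) (b 7)
  simp only [hJ0, hJ1, hJ2, hJ3, hJ4, hJ5, hJ6, hJ7, map_neg, map_smul, map_zero, LinearMap.neg_apply, LinearMap.smul_apply, LinearMap.zero_apply, smul_eq_mul, neg_neg, mul_neg, neg_mul, zero_mul, mul_zero, add_zero, zero_add, neg_zero] at aJ47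
  have aJ25 := hgJinv (b 2) (b 5)
  simp only [hJ0, hJ1, hJ2, hJ3, hJ4, hJ5, hJ6, hJ7, map_neg, map_smul, map_zero, LinearMap.neg_apply, LinearMap.smul_apply, LinearMap.zero_apply, smul_eq_mul, neg_neg, mul_neg, neg_mul, zero_mul, mul_zero, add_zero, zero_add, neg_zero] at aJ25
  have aJ07 := hgJinv (b 0) (b 7)
  simp only [hJ0, hJ1, hJ2, hJ3, hJ4, hJ5, hJ6, hJ7, map_neg, map_smul, map_zero, LinearMap.neg_apply, LinearMap.smul_apply, LinearMap.zero_apply, smul_eq_mul, neg_neg, mul_neg, neg_mul, zero_mul, mul_zero, add_zero, zero_add, neg_zero] at aJ07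
  have aJ26 := hgJinv (b 2) (b 6)
  simp only [hJ0, hJ1, hJ2, hJ3, hJ4, hJ5, hJ6, hJ7, map_neg, map_smul, map_zero, LinearMap.neg_apply, LinearMap.smul_apply, LinearMap.zero_apply, smul_eq_mul, neg_neg, mul_neg, neg_mul, zero_mul, mul_zero, add_zero, zero_add, neg_zero] at aJ26
  have aJ27 := hgJinv (b 2) (b 7)
  simp only [hJ0, hJ1, hJ2, hJ3, hJ4, hJ5, hJ6, hJ7, map_neg, map_smul, map_zero, LinearMap.neg_apply, LinearMap.smul_apply, LinearMap.zero_apply, smul_eq_mul, neg_neg, mul_neg, neg_mul, zero_mul, mul_zero, add_zero, zero_add, neg_zero] at aJ27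
  have aJ66 := hgJinv (b 6) (b 6)
  simp only [hJ0, hJ1, hJ2, hJ3, hJ4, hJ5, hJ6, hJ7, map_neg, map_smul, map_zero, LinearMap.neg_apply, LinearMap.smul_apply, LinearMap.zero_apply, smul_eq_mul, neg_neg, mul_neg, neg_mul, zero_mul, mul_zero, add_zero, zero_add, neg_zero] at aJ66
  have aJ67 := hgJinv (b 6) (b 7)
  simp only [hJ0, hJ1, hJ2, hJ3, hJ4, hJ5, hJ6, hJ7, map_neg, map_smul, map_zero, LinearMap.neg_apply, LinearMap.smul_apply, LinearMap.zero_apply, smul_eq_mul, neg_neg, mul_neg, neg_mul, zero_mul, mul_zero, add_zero, zero_add, neg_zero] at aJ67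
  have w012 := hw1 (b 0) (b 1) (b 2)
  simp only [hb01, hb02, hb13, hb03, hb12, hb04, hb15, hb05, hb14, hb23, hz06, hz07, hz16, hz17, hz25, hz26, hz27, hz47, hr20, hr30, hr40, hr50, hr60, hr70, hJ0, hJ1, hJ2, hJ3, hJ4, hJ5, hJ6, hJ7, map_neg, map_smul, map_zero, LinearMap.neg_apply, LinearMap.smul_apply, LinearMap.zero_apply, smul_eq_mul, neg_neg, mul_neg, neg_mul, zero_mul, mul_zero, add_zero, zero_add, neg_zero] at w012
  have w013 := hw1 (b 0) (b 1) (b 3)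
  simp only [hb01, hb02, hb13, hb03, hb12, hb04, hb15, hb05, hb14, hb23, hz06, hz07, hz16, hz17, hz25, hz26, hz27, hz47, hr20, hr30, hr40, hr50, hr60, hr70, hJ0, hJ1, hJ2, hJ3, hJ4, hJ5, hJ6, hJ7, map_neg, map_smul, map_zero, LinearMap.neg_apply, LinearMap.smul_apply, LinearMap.zero_apply, smul_eq_mul, neg_neg, mul_neg, neg_mul, zero_mul, mul_zero, add_zero, zero_add, neg_zero] at w013
  have w014 := hw1 (b 0) (b 1) (b 4)
  simp only [hb01, hb02, hb13, hb03, hb12, hb04, hb15, hb05, hb14, hb23, hz06, hz07, hz16, hz17, hz25, hz26, hz27, hz47, hr20, hr30, hr40, hr50, hr60, hr70, hJ0, hJ1, hJ2, hJ3, hJ4, hJ5, hJ6, hJ7, map_neg, map_smul, map_zero, LinearMap.neg_apply, LinearMap.smul_apply, LinearMap.zero_apply, smul_eq_mul, neg_neg, mul_neg, neg_mul, zero_mul, mul_zero, add_zero, zero_add, neg_zero] at w014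
  have w023 := hw1 (b 0) (b 2) (b 3)
  simp only [hb01, hb02, hb13, hb03, hb12, hb04, hb15, hb05, hb14, hb23, hz06, hz07, hz16, hz17, hz25, hz26, hz27, hz47, hr20, hr30, hr40, hr50, hr60, hr70, hJ0, hJ1, hJ2, hJ3, hJ4, hJ5, hJ6, hJ7, map_neg, map_smul, map_zero, LinearMap.neg_apply, LinearMap.smul_apply, LinearMap.zero_apply, smul_eq_mul, neg_neg, mul_neg, neg_mul, zero_mul, mul_zero, add_zero, zero_add, neg_zero] at w023
  have w016 := hw1 (b 0) (b 1) (b 6)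
  simp only [hb01, hb02, hb13, hb03, hb12, hb04, hb15, hb05, hb14, hb23, hz06, hz07, hz16, hz17, hz25, hz26, hz27, hz47, hr20, hr30, hr40, hr50, hr60, hr70, hJ0, hJ1, hJ2, hJ3, hJ4, hJ5, hJ6, hJ7, map_neg, map_smul, map_zero, LinearMap.neg_apply, LinearMap.smul_apply, LinearMap.zero_apply, smul_eq_mul, neg_neg, mul_neg, neg_mul, zero_mul, mul_zero, add_zero, zero_add, neg_zero] at w016
  have w025 := hw1 (b 0) (b 2) (b 5)
  simp only [hb01, hb02, hb13, hb03, hb12, hb04, hb15, hb05, hb14, hb23, hz06, hz07, hz16, hz17, hz25, hz26, hz27, hz47, hr20, hr30, hr40, hr50, hr60, hr70, hJ0, hJ1, hJ2, hJ3, hJ4, hJ5, hJ6, hJ7, map_neg, map_smul, map_zero, LinearMap.neg_apply, LinearMap.smul_apply, LinearMap.zero_apply, smul_eq_mul, neg_neg, mul_neg, neg_mul, zero_mul, mul_zero, add_zero, zero_add, neg_zero] at w025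
  have w027 := hw1 (b 0) (b 2) (b 7)
  simp only [hb01, hb02, hb13, hb03, hb12, hb04, hb15, hb05, hb14, hb23, hz06, hz07, hz16, hz17, hz25, hz26, hz27, hz47, hr20, hr30, hr40, hr50, hr60, hr70, hJ0, hJ1, hJ2, hJ3, hJ4, hJ5, hJ6, hJ7, map_neg, map_smul, map_zero, LinearMap.neg_apply, LinearMap.smul_apply, LinearMap.zero_apply, smul_eq_mul, neg_neg, mul_neg, neg_mul, zero_mul, mul_zero, add_zero, zero_add, neg_zero] at w027
  have w026 := hw1 (b 0) (b 2) (b 6)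
  simp only [hb01, hb02, hb13, hb03, hb12, hb04, hb15, hb05, hb14, hb23, hz06, hz07, hz16, hz17, hz25, hz26, hz27, hz47, hr20, hr30, hr40, hr50, hr60, hr70, hJ0, hJ1, hJ2, hJ3, hJ4, hJ5, hJ6, hJ7, map_neg, map_smul, map_zero, LinearMap.neg_apply, LinearMap.smul_apply, LinearMap.zero_apply, smul_eq_mul, neg_neg, mul_neg, neg_mul, zero_mul, mul_zero, add_zero, zero_add, neg_zero] at w026
  have w015 := hw1 (b 0) (b 1) (b 5)
  simp only [hb01, hb02, hb13, hb03, hb12, hb04, hb15, hb05, hb14, hb23, hz06, hz07, hz16, hz17, hz25, hz26, hz27, hz47, hr20, hr30, hr40, hr50, hr60, hr70, hJ0, hJ1, hJ2, hJ3, hJ4, hJ5, hJ6, hJ7, map_neg, map_smul, map_zero, LinearMap.neg_apply, LinearMap.smul_apply, LinearMap.zero_apply, smul_eq_mul, neg_neg, mul_neg, neg_mul, zero_mul, mul_zero, add_zero, zero_add, neg_zero] at w015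
  have w017 := hw1 (b 0) (b 1) (b 7)
  simp only [hb01, hb02, hb13, hb03, hb12, hb04, hb15, hb05, hb14, hb23, hz06, hz07, hz16, hz17, hz25, hz26, hz27, hz47, hr20, hr30, hr40, hr50, hr60, hr70, hJ0, hJ1, hJ2, hJ3, hJ4, hJ5, hJ6, hJ7, map_neg, map_smul, map_zero, LinearMap.neg_apply, LinearMap.smul_apply, LinearMap.zero_apply, smul_eq_mul, neg_neg, mul_neg, neg_mul, zero_mul, mul_zero, add_zero, zero_add, neg_zero] at w017
  have w047 := hw1 (b 0) (b 4) (b 7)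
  simp only [hb01, hb02, hb13, hb03, hb12, hb04, hb15, hb05, hb14, hb23, hz06, hz07, hz16, hz17, hz25, hz26, hz27, hz47, hr20, hr30, hr40, hr50, hr60, hr70, hJ0, hJ1, hJ2, hJ3, hJ4, hJ5, hJ6, hJ7, map_neg, map_smul, map_zero, LinearMap.neg_apply, LinearMap.smul_apply, LinearMap.zero_apply, smul_eq_mul, neg_neg, mul_neg, neg_mul, zero_mul, mul_zero, add_zero, zero_add, neg_zero] at w047
  have sJ06 := hsJ (b 0) (b 6)
  simp only [hJ0, hJ1, hJ2, hJ3, hJ4, hJ5, hJ6, hJ7, map_neg, map_smul, map_zero, LinearMap.neg_apply, LinearMap.smul_apply, LinearMap.zero_apply, smul_eq_mul, neg_neg, mul_neg, neg_mul, zero_mul, mul_zero, add_zero, zero_add, neg_zero] at sJ06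
  have sJ07 := hsJ (b 0) (b 7)
  simp only [hJ0, hJ1, hJ2, hJ3, hJ4, hJ5, hJ6, hJ7, map_neg, map_smul, map_zero, LinearMap.neg_apply, LinearMap.smul_apply, LinearMap.zero_apply, smul_eq_mul, neg_neg, mul_neg, neg_mul, zero_mul, mul_zero, add_zero, zero_add, neg_zero] at sJ07
  have sJ25 := hsJ (b 2) (b 5)
  simp only [hJ0, hJ1, hJ2, hJ3, hJ4, hJ5, hJ6, hJ7, map_neg, map_smul, map_zero, LinearMap.neg_apply, LinearMap.smul_apply, LinearMap.zero_apply, smul_eq_mul, neg_neg, mul_neg, neg_mul, zero_mul, mul_zero, add_zero, zero_add, neg_zero] at sJ25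
  have sJ24 := hsJ (b 2) (b 4)
  simp only [hJ0, hJ1, hJ2, hJ3, hJ4, hJ5, hJ6, hJ7, map_neg, map_smul, map_zero, LinearMap.neg_apply, LinearMap.smul_apply, LinearMap.zero_apply, smul_eq_mul, neg_neg, mul_neg, neg_mul, zero_mul, mul_zero, add_zero, zero_add, neg_zero] at sJ24
  have sJ27 := hsJ (b 2) (b 7)
  simp only [hJ0, hJ1, hJ2, hJ3, hJ4, hJ5, hJ6, hJ7, map_neg, map_smul, map_zero, LinearMap.neg_apply, LinearMap.smul_apply, LinearMap.zero_apply, smul_eq_mul, neg_neg, mul_neg, neg_mul, zero_mul, mul_zero, add_zero, zero_add, neg_zero] at sJ27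
  have sJ26 := hsJ (b 2) (b 6)
  simp only [hJ0, hJ1, hJ2, hJ3, hJ4, hJ5, hJ6, hJ7, map_neg, map_smul, map_zero, LinearMap.neg_apply, LinearMap.smul_apply, LinearMap.zero_apply, smul_eq_mul, neg_neg, mul_neg, neg_mul, zero_mul, mul_zero, add_zero, zero_add, neg_zero] at sJ26
  have sJ47 := hsJ (b 4) (b 7)
  simp only [hJ0, hJ1, hJ2, hJ3, hJ4, hJ5, hJ6, hJ7, map_neg, map_smul, map_zero, LinearMap.neg_apply, LinearMap.smul_apply, LinearMap.zero_apply, smul_eq_mul, neg_neg, mul_neg, neg_mul, zero_mul, mul_zero, add_zero, zero_add, neg_zero] at sJ47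
  have sJ66 := hsJ (b 6) (b 6)
  simp only [hJ0, hJ1, hJ2, hJ3, hJ4, hJ5, hJ6, hJ7, map_neg, map_smul, map_zero, LinearMap.neg_apply, LinearMap.smul_apply, LinearMap.zero_apply, smul_eq_mul, neg_neg, mul_neg, neg_mul, zero_mul, mul_zero, add_zero, zero_add, neg_zero] at sJ66
  have sJ44 := hsJ (b 4) (b 4)
  simp only [hJ0, hJ1, hJ2, hJ3, hJ4, hJ5, hJ6, hJ7, map_neg, map_smul, map_zero, LinearMap.neg_apply, LinearMap.smul_apply, LinearMap.zero_apply, smul_eq_mul, neg_neg, mul_neg, neg_mul, zero_mul, mul_zero, add_zero, zero_add, neg_zero] at sJ44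
  have sJ46 := hsJ (b 4) (b 6)
  simp only [hJ0, hJ1, hJ2, hJ3, hJ4, hJ5, hJ6, hJ7, map_neg, map_smul, map_zero, LinearMap.neg_apply, LinearMap.smul_apply, LinearMap.zero_apply, smul_eq_mul, neg_neg, mul_neg, neg_mul, zero_mul, mul_zero, add_zero, zero_add, neg_zero] at sJ46
  have c015 := hw3 (b 0) (b 1) (b 5)
  simp only [hb01, hb02, hb13, hb03, hb12, hb04, hb15, hb05, hb14, hb23, hz06, hz07, hz16, hz17, hz25, hz26, hz27, hz47, hr20, hr30, hr40, hr50, hr60, hr70, map_neg, map_smul, map_zero, LinearMap.neg_apply, LinearMap.smul_apply, LinearMap.zero_apply, smul_eq_mul, neg_neg, mul_neg, neg_mul, zero_mul, mul_zero, add_zero, zero_add, neg_zero] at c015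
  simp only [hJanti, hJ0, hJ1, hJ2, hJ3, hJ4, hJ5, hJ6, hJ7, map_neg, map_smul, map_zero, LinearMap.neg_apply, LinearMap.smul_apply, LinearMap.zero_apply, smul_eq_mul, neg_neg, mul_neg, neg_mul, zero_mul, mul_zero, add_zero, zero_add, neg_zero] at c015
  have c014 := hw3 (b 0) (b 1) (b 4)
  simp only [hb01, hb02, hb13, hb03, hb12, hb04, hb15, hb05, hb14, hb23, hz06, hz07, hz16, hz17, hz25, hz26, hz27, hz47, hr20, hr30, hr40, hr50, hr60, hr70, map_neg, map_smul, map_zero, LinearMap.neg_apply, LinearMap.smul_apply, LinearMap.zero_apply, smul_eq_mul, neg_neg, mul_neg, neg_mul, zero_mul, mul_zero, add_zero, zero_add, neg_zero] at c014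
  simp only [hJanti, hJ0, hJ1, hJ2, hJ3, hJ4, hJ5, hJ6, hJ7, map_neg, map_smul, map_zero, LinearMap.neg_apply, LinearMap.smul_apply, LinearMap.zero_apply, smul_eq_mul, neg_neg, mul_neg, neg_mul, zero_mul, mul_zero, add_zero, zero_add, neg_zero] at c014
  have c016 := hw3 (b 0) (b 1) (b 6)
  simp only [hb01, hb02, hb13, hb03, hb12, hb04, hb15, hb05, hb14, hb23, hz06, hz07, hz16, hz17, hz25, hz26, hz27, hz47, hr20, hr30, hr40, hr50, hr60, hr70, map_neg, map_smul, map_zero, LinearMap.neg_apply, LinearMap.smul_apply, LinearMap.zero_apply, smul_eq_mul, neg_neg, mul_neg, neg_mul, zero_mul, mul_zero, add_zero, zero_add, neg_zero] at c016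
  simp only [hJanti, hJ0, hJ1, hJ2, hJ3, hJ4, hJ5, hJ6, hJ7, map_neg, map_smul, map_zero, LinearMap.neg_apply, LinearMap.smul_apply, LinearMap.zero_apply, smul_eq_mul, neg_neg, mul_neg, neg_mul, zero_mul, mul_zero, add_zero, zero_add, neg_zero] at c016
  have c017 := hw3 (b 0) (b 1) (b 7)
  simp only [hb01, hb02, hb13, hb03, hb12, hb04, hb15, hb05, hb14, hb23, hz06, hz07, hz16, hz17, hz25, hz26, hz27, hz47, hr20, hr30, hr40, hr50, hr60, hr70, map_neg, map_smul, map_zero, LinearMap.neg_apply, LinearMap.smul_apply, LinearMap.zero_apply, smul_eq_mul, neg_neg, mul_neg, neg_mul, zero_mul, mul_zero, add_zero, zero_add, neg_zero] at c017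
  simp only [hJanti, hJ0, hJ1, hJ2, hJ3, hJ4, hJ5, hJ6, hJ7, map_neg, map_smul, map_zero, LinearMap.neg_apply, LinearMap.smul_apply, LinearMap.zero_apply, smul_eq_mul, neg_neg, mul_neg, neg_mul, zero_mul, mul_zero, add_zero, zero_add, neg_zero] at c017
  have c026 := hw3 (b 0) (b 2) (b 6)
  simp only [hb01, hb02, hb13, hb03, hb12, hb04, hb15, hb05, hb14, hb23, hz06, hz07, hz16, hz17, hz25, hz26, hz27, hz47, hr20, hr30, hr40, hr50, hr60, hr70, map_neg, map_smul, map_zero, LinearMap.neg_apply, LinearMap.smul_apply, LinearMap.zero_apply, smul_eq_mul, neg_neg, mul_neg, neg_mul, zero_mul, mul_zero, add_zero, zero_add, neg_zero] at c026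
  simp only [hJanti, hJ0, hJ1, hJ2, hJ3, hJ4, hJ5, hJ6, hJ7, map_neg, map_smul, map_zero, LinearMap.neg_apply, LinearMap.smul_apply, LinearMap.zero_apply, smul_eq_mul, neg_neg, mul_neg, neg_mul, zero_mul, mul_zero, add_zero, zero_add, neg_zero] at c026
  have c027 := hw3 (b 0) (b 2) (b 7)
  simp only [hb01, hb02, hb13, hb03, hb12, hb04, hb15, hb05, hb14, hb23, hz06, hz07, hz16, hz17, hz25, hz26, hz27, hz47, hr20, hr30, hr40, hr50, hr60, hr70, map_neg, map_smul, map_zero, LinearMap.neg_apply, LinearMap.smul_apply, LinearMap.zero_apply, smul_eq_mul, neg_neg, mul_neg, neg_mul, zero_mul, mul_zero, add_zero, zero_add, neg_zero] at c027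
  simp only [hJanti, hJ0, hJ1, hJ2, hJ3, hJ4, hJ5, hJ6, hJ7, map_neg, map_smul, map_zero, LinearMap.neg_apply, LinearMap.smul_apply, LinearMap.zero_apply, smul_eq_mul, neg_neg, mul_neg, neg_mul, zero_mul, mul_zero, add_zero, zero_add, neg_zero] at c027
  have F04 : g (b 0) (b 4) = (3/2 : ℝ) * g (b 3) (b 3) := by
    linear_combination (-1/2 : ℝ) * aJ04 + (-1/6 : ℝ) * aJ22 + (1/2 : ℝ) * w012 + (1/2 : ℝ) * hgsym (b 0) (b 4) + (-1/2 : ℝ) * hgsym (b 1) (b 5)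
  have F14 : g (b 1) (b 4) = 0 := by
    linear_combination (1/2 : ℝ) * aJ05 + (-1/12 : ℝ) * aJ23 + (1/2 : ℝ) * w013 + (1/2 : ℝ) * hgsym (b 0) (b 5) + (1/2 : ℝ) * hgsym (b 1) (b 4) + (1/12 : ℝ) * hgsym (b 2) (b 3)
  have F24 : g (b 2) (b 4) = 0 := by
    linear_combination (1/2 : ℝ) * aJ06 + (-5/24 : ℝ) * aJ24 + (-1/2 : ℝ) * w014 + (5/8 : ℝ) * w023 + (1/2 : ℝ) * hgsym (b 0) (b 6) + (-3/2 : ℝ) * hgsym (b 1) (b 7) + (5/8 : ℝ) * hgsym (b 2) (b 4) + (5/8 : ℝ) * hgsym (b 3) (b 5)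
  have F44 : g (b 4) (b 4) = 0 := by
    linear_combination (-1 : ℝ) * aJ44 + (-1 : ℝ) * w016 + (1 : ℝ) * w025 + (-1/3 : ℝ) * hgsym (b 2) (b 6)
  have F54 : g (b 5) (b 4) = 0 := by
    linear_combination (-1/2 : ℝ) * aJ45 + (-1/2 : ℝ) * hgsym (b 4) (b 5)
  have F64 : g (b 6) (b 4) = 0 := by
    linear_combination (-1 : ℝ) * aJ46 + (-3 : ℝ) * w027 + (-1 : ℝ) * hgsym (b 4) (b 6)
  have F74 : g (b 7) (b 4) = 0 := by
    linear_combination (-1 : ℝ) * aJ47 + (1/3 : ℝ) * w026 + (-1 : ℝ) * hgsym (b 4) (b 7)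
  have F05 : g (b 0) (b 5) = 0 := by
    linear_combination (-1/2 : ℝ) * aJ05 + (-1/12 : ℝ) * aJ23 + (1/2 : ℝ) * w013 + (1/2 : ℝ) * hgsym (b 0) (b 5) + (1/2 : ℝ) * hgsym (b 1) (b 4) + (1/12 : ℝ) * hgsym (b 2) (b 3)
  have F15 : g (b 1) (b 5) = -((3/2 : ℝ) * g (b 3) (b 3)) := by
    linear_combination (-1/2 : ℝ) * aJ04 + (1/6 : ℝ) * aJ22 + (-1/2 : ℝ) * w012 + (-1/2 : ℝ) * hgsym (b 0) (b 4) + (1/2 : ℝ) * hgsym (b 1) (b 5)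
  have F25 : g (b 2) (b 5) = -((3 : ℝ) * g (b 3) (b 4)) := by
    linear_combination (-1 : ℝ) * aJ25
  have F35 : g (b 3) (b 5) = 0 := by
    linear_combination (1/6 : ℝ) * aJ06 + (19/72 : ℝ) * aJ24 + (-1/6 : ℝ) * w014 + (5/24 : ℝ) * w023 + (1/6 : ℝ) * hgsym (b 0) (b 6) + (-1/2 : ℝ) * hgsym (b 1) (b 7) + (5/24 : ℝ) * hgsym (b 2) (b 4) + (5/24 : ℝ) * hgsym (b 3) (b 5)
  have F45 : g (b 4) (b 5) = 0 := by
    linear_combination (-1/2 : ℝ) * aJ45 + (1/2 : ℝ) * hgsym (b 4) (b 5)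
  have F55 : g (b 5) (b 5) = 0 := by
    linear_combination (-1 : ℝ) * w016 + (1 : ℝ) * w025 + (-1/3 : ℝ) * hgsym (b 2) (b 6)
  have F65 : g (b 6) (b 5) = 0 := by
    linear_combination (1 : ℝ) * w026 + (-1 : ℝ) * hgsym (b 5) (b 6)
  have F75 : g (b 7) (b 5) = 0 := by
    linear_combination (1 : ℝ) * w027 + (-1 : ℝ) * hgsym (b 5) (b 7)
  have F06 : g (b 0) (b 6) = 0 := by
    linear_combination (-1/4 : ℝ) * aJ06 + (-1/48 : ℝ) * aJ24 + (1/4 : ℝ) * w014 + (1/16 : ℝ) * w023 + (3/4 : ℝ) * hgsym (b 0) (b 6) + (3/4 : ℝ) * hgsym (b 1) (b 7) + (1/16 : ℝ) * hgsym (b 2) (b 4) + (1/16 : ℝ) * hgsym (b 3) (b 5)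
  have F16 : g (b 1) (b 6) = -((3/2 : ℝ) * g (b 3) (b 4)) := by
    linear_combination (-1/2 : ℝ) * aJ25 + (-9/2 : ℝ) * aJ07 + (3/2 : ℝ) * w015 + (-9/2 : ℝ) * hgsym (b 0) (b 7) + (-1/2 : ℝ) * hgsym (b 1) (b 6)
  have F26 : g (b 2) (b 6) = 0 := by
    linear_combination (-3 : ℝ) * w016
  have F36 : g (b 3) (b 6) = 0 := by
    linear_combination (1 : ℝ) * aJ27 + (-3 : ℝ) * w017
  have F46 : g (b 4) (b 6) = 0 := by
    linear_combination (-1 : ℝ) * aJ46 + (-3 : ℝ) * w027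
  have F56 : g (b 5) (b 6) = 0 := by
    linear_combination (1 : ℝ) * w026
  have F66 : g (b 6) (b 6) = 0 := by
    linear_combination (-1 : ℝ) * aJ66 + (-3 : ℝ) * w047
  have F76 : g (b 7) (b 6) = 0 := by
    linear_combination (-1/2 : ℝ) * aJ67 + (-1/2 : ℝ) * hgsym (b 6) (b 7)
  have F07 : g (b 0) (b 7) = (1/2 : ℝ) * g (b 3) (b 4) := by
    linear_combination (1/6 : ℝ) * aJ25 + (1/2 : ℝ) * aJ07 + (-1/2 : ℝ) * w015 + (3/2 : ℝ) * hgsym (b 0) (b 7) + (1/6 : ℝ) * hgsym (b 1) (b 6)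
  have F17 : g (b 1) (b 7) = 0 := by
    linear_combination (1/4 : ℝ) * aJ06 + (-1/144 : ℝ) * aJ24 + (1/12 : ℝ) * w014 + (1/48 : ℝ) * w023 + (1/4 : ℝ) * hgsym (b 0) (b 6) + (1/4 : ℝ) * hgsym (b 1) (b 7) + (1/48 : ℝ) * hgsym (b 2) (b 4) + (1/48 : ℝ) * hgsym (b 3) (b 5)
  have F27 : g (b 2) (b 7) = 0 := by
    linear_combination (-3 : ℝ) * w017
  have F37 : g (b 3) (b 7) = 0 := by
    linear_combination (-1/9 : ℝ) * aJ26 + (1/3 : ℝ) * w016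
  have F47 : g (b 4) (b 7) = 0 := by
    linear_combination (-1 : ℝ) * aJ47 + (1/3 : ℝ) * w026
  have F57 : g (b 5) (b 7) = 0 := by
    linear_combination (1 : ℝ) * w027
  have F67 : g (b 6) (b 7) = 0 := by
    linear_combination (-1/2 : ℝ) * aJ67 + (1/2 : ℝ) * hgsym (b 6) (b 7)
  have F77 : g (b 7) (b 7) = 0 := by
    linear_combination (-1/3 : ℝ) * w047
  have gexp : ∀ x z : L, g x z = ∑ k : Fin 8, b.repr x k * g (b k) z := by
    intro x z
    conv_lhs => rw [← b.sum_repr x]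
    rw [map_sum, LinearMap.sum_apply]
    refine Finset.sum_congr rfl fun k _ => ?_
    rw [map_smul, LinearMap.smul_apply, smul_eq_mul]
  have gexp2 : ∀ x z : L, g x z = ∑ k : Fin 8, b.repr z k * g x (b k) := by
    intro x z
    conv_lhs => rw [← b.sum_repr z]
    rw [map_sum]
    refine Finset.sum_congr rfl fun k _ => ?_
    rw [map_smul, smul_eq_mul]
  have hf : g (b 3) (b 4) ≠ 0 := by
    intro h0
    have h7 : b 7 = (0 : L) := by
      apply hgnd
      intro Y
      have c70 : g (b 7) (b 0) = 0 := by rw [hgsym]; linear_combination F07 + (1/2 : ℝ) * h0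
      have c71 : g (b 7) (b 1) = 0 := by rw [hgsym]; exact F17
      have c72 : g (b 7) (b 2) = 0 := by rw [hgsym]; exact F27
      have c73 : g (b 7) (b 3) = 0 := by rw [hgsym]; exact F37
      have c74 : g (b 7) (b 4) = 0 := by rw [hgsym]; exact F47
      have c75 : g (b 7) (b 5) = 0 := by rw [hgsym]; exact F57
      have c76 : g (b 7) (b 6) = 0 := by rw [hgsym]; exact F67
      have c77 : g (b 7) (b 7) = 0 := by rw [hgsym]; exact F77
      rw [gexp2 (b 7) Y, Fin.sum_univ_eight, c70, c71, c72, c73, c74, c75, c76, c77]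
      ring
    exact b.ne_zero 7 h7
  have S77 : g (E (b 7)) (b 7) = 0 := by
    linear_combination (1/2 : ℝ) * hskew (b 7) (b 7)
  have S55 : g (E (b 5)) (b 5) = 0 := by
    linear_combination (1/2 : ℝ) * hskew (b 5) (b 5)
  have S07 : g (E (b 0)) (b 7) = (1/4 : ℝ) * g (E (b 3)) (b 4) := by
    linear_combination (-1/4 : ℝ) * sJ06 + (-1/4 : ℝ) * c015 + (1/4 : ℝ) * hskew (b 0) (b 7) + (1/4 : ℝ) * hskew (b 1) (b 6)
  have S17 : g (E (b 1)) (b 7) = -((1/4 : ℝ) * g (E (b 3)) (b 5)) := by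
    linear_combination (-3/4 : ℝ) * sJ07 + (-1/4 : ℝ) * c014 + (1/4 : ℝ) * hskew (b 0) (b 6) + (7/4 : ℝ) * hskew (b 1) (b 7)
  have S06 : g (E (b 0)) (b 6) = (3/4 : ℝ) * g (E (b 3)) (b 5) := by
    linear_combination (21/4 : ℝ) * sJ07 + (3/4 : ℝ) * c014 + (-3/4 : ℝ) * hskew (b 0) (b 6) + (-21/4 : ℝ) * hskew (b 1) (b 7)
  have S24 : g (E (b 2)) (b 4) = -((3 : ℝ) * g (E (b 3)) (b 5)) := by
    linear_combination (-1 : ℝ) * sJ25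
  have S25 : g (E (b 2)) (b 5) = (3 : ℝ) * g (E (b 3)) (b 4) := by
    linear_combination (1 : ℝ) * sJ24
  have S26 : g (E (b 2)) (b 6) = 0 := by
    linear_combination (3 : ℝ) * sJ27 + (3 : ℝ) * c016
  have S27 : g (E (b 2)) (b 7) = 0 := by
    linear_combination (-1/3 : ℝ) * sJ26 + (3 : ℝ) * c017
  have S37 : g (E (b 3)) (b 7) = 0 := by
    linear_combination (1/3 : ℝ) * c016
  have S47 : g (E (b 4)) (b 7) = 0 := by
    linear_combination (1/3 : ℝ) * c026
  have S57 : g (E (b 5)) (b 7) = 0 := by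
    linear_combination (-1 : ℝ) * sJ47 + (-1 : ℝ) * c027
  have S67 : g (E (b 6)) (b 7) = 0 := by
    linear_combination (-1/6 : ℝ) * sJ66 + (1/2 : ℝ) * hskew (b 6) (b 7)
  have S45 : g (E (b 4)) (b 5) = 0 := by
    linear_combination (1/2 : ℝ) * sJ44 + (1/2 : ℝ) * hskew (b 4) (b 5)
  have S56 : g (E (b 5)) (b 6) = 0 := by
    linear_combination (-1 : ℝ) * sJ46 + (-1 : ℝ) * c026
  have S65 : g (E (b 6)) (b 5) = 0 := by
    linear_combination (1 : ℝ) * sJ46 + (1 : ℝ) * c026 + (1 : ℝ) * hskew (b 5) (b 6)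
  have S75 : g (E (b 7)) (b 5) = 0 := by
    linear_combination (1 : ℝ) * sJ47 + (1 : ℝ) * c027 + (1 : ℝ) * hskew (b 5) (b 7)
  obtain ⟨X0, X1, X2, X3, X4, X5, X6, X7, hXexp⟩ :
      ∃ x0 x1 x2 x3 x4 x5 x6 x7 : ℝ, ∀ z : L, g (E (b 0)) z =
        x0 * g (b 0) z + x1 * g (b 1) z + x2 * g (b 2) z + x3 * g (b 3) z +
        x4 * g (b 4) z + x5 * g (b 5) z + x6 * g (b 6) z + x7 * g (b 7) z := by
    refine ⟨b.repr (E (b 0)) 0, b.repr (E (b 0)) 1, b.repr (E (b 0)) 2,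
      b.repr (E (b 0)) 3, b.repr (E (b 0)) 4, b.repr (E (b 0)) 5,
      b.repr (E (b 0)) 6, b.repr (E (b 0)) 7, fun z => ?_⟩
    rw [gexp (E (b 0)) z, Fin.sum_univ_eight]
  obtain ⟨Y0, Y1, Y2, Y3, Y4, Y5, Y6, Y7, hYexp⟩ :
      ∃ x0 x1 x2 x3 x4 x5 x6 x7 : ℝ, ∀ z : L, g (E (b 2)) z =
        x0 * g (b 0) z + x1 * g (b 1) z + x2 * g (b 2) z + x3 * g (b 3) z +
        x4 * g (b 4) z + x5 * g (b 5) z + x6 * g (b 6) z + x7 * g (b 7) z := by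
    refine ⟨b.repr (E (b 2)) 0, b.repr (E (b 2)) 1, b.repr (E (b 2)) 2,
      b.repr (E (b 2)) 3, b.repr (E (b 2)) 4, b.repr (E (b 2)) 5,
      b.repr (E (b 2)) 6, b.repr (E (b 2)) 7, fun z => ?_⟩
    rw [gexp (E (b 2)) z, Fin.sum_univ_eight]
  have A1 := hXexp (b 7)
  have A2 := hXexp (b 6)
  have AQ1 := hXexp (E (b 7))
  have B1 := hYexp (b 7)
  have B2 := hYexp (b 6)
  have B3 := hYexp (b 5)
  have B4 := hYexp (b 4)
  have BQ2 := hYexp (E (b 5))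
  have hgE07 := hgE (b 0) (b 7)
  have hgE25 := hgE (b 2) (b 5)
  have fl07 := hflip (b 0) (b 7)
  have fl05 := hflip (b 0) (b 5)
  have fl17 := hflip (b 1) (b 7)
  have fl15 := hflip (b 1) (b 5)
  have fl27 := hflip (b 2) (b 7)
  have fl25 := hflip (b 2) (b 5)
  have fl37 := hflip (b 3) (b 7)
  have fl35 := hflip (b 3) (b 5)
  have fl47 := hflip (b 4) (b 7)
  have fl45 := hflip (b 4) (b 5)
  have fl57 := hflip (b 5) (b 7)
  have fl55 := hflip (b 5) (b 5)
  have fl67 := hflip (b 6) (b 7)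
  have fl65 := hflip (b 6) (b 5)
  have fl77 := hflip (b 7) (b 7)
  have fl75 := hflip (b 7) (b 5)
  have h1 : g (E (b 3)) (b 4) = 2 * g (b 3) (b 4) * X0 := by
    linear_combination (-4 : ℝ) * S07 + 4 * A1 + 4*X0*F07 + 4*X1*F17 + 4*X2*F27 + 4*X3*F37 + 4*X4*F47 + 4*X5*F57 + 4*X6*F67 + 4*X7*F77
  have h2 : g (E (b 3)) (b 5) = -(2 * g (b 3) (b 4) * X1) := by
    linear_combination (-4/3 : ℝ) * S06 + (4/3 : ℝ) * A2 + (4/3 : ℝ)*X0*F06 + (4/3 : ℝ)*X1*F16 + (4/3 : ℝ)*X2*F26 + (4/3 : ℝ)*X3*F36 + (4/3 : ℝ)*X4*F46 + (4/3 : ℝ)*X5*F56 + (4/3 : ℝ)*X6*F66 + (4/3 : ℝ)*X7*F76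
  have h3 : g (b 3) (b 4) * Y0 = 0 := by
    linear_combination (2 : ℝ) * S27 - 2 * B1 - 2*Y0*F07 - 2*Y1*F17 - 2*Y2*F27 - 2*Y3*F37 - 2*Y4*F47 - 2*Y5*F57 - 2*Y6*F67 - 2*Y7*F77
  have h4 : g (b 3) (b 4) * Y1 = 0 := by
    linear_combination (-2/3 : ℝ) * S26 + (2/3 : ℝ) * B2 + (2/3 : ℝ)*Y0*F06 + (2/3 : ℝ)*Y1*F16 + (2/3 : ℝ)*Y2*F26 + (2/3 : ℝ)*Y3*F36 + (2/3 : ℝ)*Y4*F46 + (2/3 : ℝ)*Y5*F56 + (2/3 : ℝ)*Y6*F66 + (2/3 : ℝ)*Y7*F76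
  have h5 : 6 * g (b 3) (b 4) * X0 + (3/2 : ℝ) * g (b 3) (b 3) * Y1 + 3 * g (b 3) (b 4) * Y2 = 0 := by
    linear_combination (-3 : ℝ) * h1 - S25 + B3 + Y0*F05 + Y1*F15 + Y2*F25 + Y3*F35 + Y4*F45 + Y5*F55 + Y6*F65 + Y7*F75
  have h6 : 6 * g (b 3) (b 4) * X1 - (3/2 : ℝ) * g (b 3) (b 3) * Y0 - g (b 3) (b 4) * Y3 = 0 := by
    linear_combination (3 : ℝ) * h2 - S24 + B4 + Y0*F04 + Y1*F14 + Y2*F24 + Y4*F44 + Y5*F54 + Y6*F64 + Y7*F74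
  have h7 : g (b 3) (b 4) * X0^2 + g (b 3) (b 4) * X1^2 = g (b 3) (b 4) := by
    linear_combination (2 : ℝ) * AQ1 - 2 * hgE07 + 2*X0*fl07 + 2*X1*fl17 + 2*X2*fl27 + 2*X3*fl37 + 2*X4*fl47 + 2*X5*fl57 + 2*X6*fl67 + 2*X7*fl77 - 2*X0*S07 - 2*X1*S17 - 2*X2*S27 - 2*X3*S37 - 2*X4*S47 - 2*X5*S57 - 2*X6*S67 - 2*X7*S77 + 2*F07 - (X0/2)*h1 + (X1/2)*h2
  have h8 : Y0 * g (E (b 0)) (b 5) + Y1 * g (E (b 1)) (b 5) + 6 * g (b 3) (b 4) * X0 * Y2 - 2 * g (b 3) (b 4) * X1 * Y3 + 3 * g (b 3) (b 4) = 0 := by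
    linear_combination BQ2 - hgE25 + Y0*fl05 + Y1*fl15 + Y2*fl25 + Y3*fl35 + Y4*fl45 + Y5*fl55 + Y6*fl65 + Y7*fl75 + F25 - Y2*S25 - 3*Y2*h1 - Y3*h2 - Y4*S45 - Y5*S55 - Y6*S65 - Y7*S75
  have h9 : (9 : ℝ) * g (b 3) (b 4)^3 = 0 := by
    linear_combination (-(g (b 3) (b 4)^2)) * h8 + (g (b 3) (b 4) * g (E (b 0)) (b 5) + 3 * g (b 3) (b 3) * g (b 3) (b 4) * X1) * h3 + (g (b 3) (b 4) * g (E (b 1)) (b 5) - 3 * g (b 3) (b 3) * g (b 3) (b 4) * X0) * h4 + (2 * g (b 3) (b 4)^2 * X0) * h5 + (2 * g (b 3) (b 4)^2 * X1) * h6 + (-(12 * g (b 3) (b 4)^2)) * h7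
  have hcube : g (b 3) (b 4) ^ 3 = 0 := by linarith [h9]
  exact hf ((pow_eq_zero_iff (by norm_num : (3:ℕ) ≠ 0)).mp hcube)
end

section
/- Let 𝔥 be the 8-dimensional real Lie algebra with basis e₁,…,e₈ and nonzero brackets [e₁,e₂] = −e₄, [e₁,e₃] = −e₅, [e₁,e₄] = −e₆, [e₂,e₃] = −e₆, [e₁,e₅] = −e₇, [e₁,e₆] = −e₈, [e₂,e₅] = −2e₈, [e₃,e₄] = −e₈. For c > 0 let J_c : 𝔥 → 𝔥 be the linear map with J_c(e₁) = ((c+1)/c)e₂, J_c(e₂) = −(c/(c+1))e₁, J_c(e₃) = −e₄, J_c(e₄) = e₃, J_c(e₅) = (1/c)e₆, J_c(e₆) = −c·e₅, J_c(e₇) = ((3+2c)/c)e₈, J_c(e₈) = −(c/(3+2c))e₇. Then for c, c' > 0, there exists a Lie algebra automorphism ψ : 𝔥 → 𝔥 with ψ ∘ J_c = J_{c'} ∘ ψ if and only if c = c'. -/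
set_option maxHeartbeats 2000000 in
theorem stmt15 {L : Type*} [LieRing L] [LieAlgebra ℝ L]
    (b : Module.Basis (Fin 8) ℝ L)
    (hb01 : ⁅b 0, b 1⁆ = -b 3) (hb02 : ⁅b 0, b 2⁆ = -b 4)
    (hb03 : ⁅b 0, b 3⁆ = -b 5) (hb12 : ⁅b 1, b 2⁆ = -b 5)
    (hb04 : ⁅b 0, b 4⁆ = -b 6) (hb05 : ⁅b 0, b 5⁆ = -b 7)
    (hb14 : ⁅b 1, b 4⁆ = -((2 : ℝ) • b 7)) (hb23 : ⁅b 2, b 3⁆ = -b 7)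
    (hbz : ∀ i j : Fin 8, i < j →
      (i, j) ∉ ([(0, 1), (0, 2), (0, 3), (1, 2), (0, 4), (0, 5), (1, 4),
        (2, 3)] : List (Fin 8 × Fin 8)) → ⁅b i, b j⁆ = 0)
    (c c' : ℝ) (hc : 0 < c) (hc' : 0 < c') (J J' : L →ₗ[ℝ] L)
    (hJ0 : J (b 0) = ((c + 1) / c) • b 1) (hJ1 : J (b 1) = -((c / (c + 1)) • b 0))
    (hJ2 : J (b 2) = -b 3) (hJ3 : J (b 3) = b 2)
    (hJ4 : J (b 4) = (1 / c) • b 5) (hJ5 : J (b 5) = -(c • b 4))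
    (hJ6 : J (b 6) = ((3 + 2 * c) / c) • b 7) (hJ7 : J (b 7) = -((c / (3 + 2 * c)) • b 6))
    (hJ'0 : J' (b 0) = ((c' + 1) / c') • b 1) (hJ'1 : J' (b 1) = -((c' / (c' + 1)) • b 0))
    (hJ'2 : J' (b 2) = -b 3) (hJ'3 : J' (b 3) = b 2)
    (hJ'4 : J' (b 4) = (1 / c') • b 5) (hJ'5 : J' (b 5) = -(c' • b 4))
    (hJ'6 : J' (b 6) = ((3 + 2 * c') / c') • b 7) (hJ'7 : J' (b 7) = -((c' / (3 + 2 * c')) • b 6))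
    :
    (∃ ψ : L ≃ₗ[ℝ] L, (∀ x y : L, ψ ⁅x, y⁆ = ⁅ψ x, ψ y⁆) ∧ ∀ x, ψ (J x) = J' (ψ x)) ↔
      c = c' := by
  have hc0 : c ≠ 0 := ne_of_gt hc
  have hc'0 : c' ≠ 0 := ne_of_gt hc'
  have hc'1 : c' + 1 ≠ 0 := by positivity
  -- zero brackets
  have h06 := hbz 0 6 (by decide) (by decide)
  have h07 := hbz 0 7 (by decide) (by decide)
  have h13 := hbz 1 3 (by decide) (by decide)
  have h15 := hbz 1 5 (by decide) (by decide)
  have h16 := hbz 1 6 (by decide) (by decide)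
  have h17 := hbz 1 7 (by decide) (by decide)
  have h24 := hbz 2 4 (by decide) (by decide)
  have h25 := hbz 2 5 (by decide) (by decide)
  have h26 := hbz 2 6 (by decide) (by decide)
  have h27 := hbz 2 7 (by decide) (by decide)
  have h34 := hbz 3 4 (by decide) (by decide)
  have h35 := hbz 3 5 (by decide) (by decide)
  have h36 := hbz 3 6 (by decide) (by decide)
  have h37 := hbz 3 7 (by decide) (by decide)
  have h45 := hbz 4 5 (by decide) (by decide)
  have h46 := hbz 4 6 (by decide) (by decide)
  have h47 := hbz 4 7 (by decide) (by decide)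
  have h56 := hbz 5 6 (by decide) (by decide)
  have h57 := hbz 5 7 (by decide) (by decide)
  have h67 := hbz 6 7 (by decide) (by decide)
  -- master bracket formula
  have brk : ∀ x y : L,
      ⁅x, y⁆ = (b.repr x 1 * b.repr y 0 - b.repr x 0 * b.repr y 1) • b 3
        + (b.repr x 2 * b.repr y 0 - b.repr x 0 * b.repr y 2) • b 4
        + (b.repr x 3 * b.repr y 0 - b.repr x 0 * b.repr y 3
           + b.repr x 2 * b.repr y 1 - b.repr x 1 * b.repr y 2) • b 5
        + (b.repr x 4 * b.repr y 0 - b.repr x 0 * b.repr y 4) • b 6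
        + (b.repr x 5 * b.repr y 0 - b.repr x 0 * b.repr y 5
           + 2 * (b.repr x 4 * b.repr y 1 - b.repr x 1 * b.repr y 4)
           + b.repr x 3 * b.repr y 2 - b.repr x 2 * b.repr y 3) • b 7 := by
    intro x y
    conv_lhs => rw [← b.sum_repr x, ← b.sum_repr y]
    simp only [Fin.sum_univ_eight, add_lie, lie_add, smul_lie, lie_smul, lie_self,
      hb01, hb02, hb03, hb12, hb04, hb05, hb14, hb23,
      h06, h07, h13, h15, h16, h17, h24, h25, h26, h27, h34, h35, h36, h37, h45, h46,
      h47, h56, h57, h67,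
      ← lie_skew (b 1) (b 0), ← lie_skew (b 2) (b 0), ← lie_skew (b 3) (b 0),
      ← lie_skew (b 2) (b 1), ← lie_skew (b 4) (b 0), ← lie_skew (b 5) (b 0),
      ← lie_skew (b 4) (b 1), ← lie_skew (b 3) (b 2),
      ← lie_skew (b 6) (b 0), ← lie_skew (b 7) (b 0), ← lie_skew (b 3) (b 1),
      ← lie_skew (b 5) (b 1), ← lie_skew (b 6) (b 1), ← lie_skew (b 7) (b 1),
      ← lie_skew (b 4) (b 2), ← lie_skew (b 5) (b 2), ← lie_skew (b 6) (b 2),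
      ← lie_skew (b 7) (b 2), ← lie_skew (b 4) (b 3), ← lie_skew (b 5) (b 3),
      ← lie_skew (b 6) (b 3), ← lie_skew (b 7) (b 3), ← lie_skew (b 5) (b 4),
      ← lie_skew (b 6) (b 4), ← lie_skew (b 7) (b 4), ← lie_skew (b 6) (b 5),
      ← lie_skew (b 7) (b 5), ← lie_skew (b 7) (b 6)]
    module
  -- component formulas for brackets
  have hr0 : ∀ x y : L, b.repr ⁅x, y⁆ 0 = 0 := fun x y => by
    rw [brk x y]; simp [Finsupp.single_apply]
  have hr1 : ∀ x y : L, b.repr ⁅x, y⁆ 1 = 0 := fun x y => by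
    rw [brk x y]; simp [Finsupp.single_apply]
  have hr2 : ∀ x y : L, b.repr ⁅x, y⁆ 2 = 0 := fun x y => by
    rw [brk x y]; simp [Finsupp.single_apply]
  have hr3 : ∀ x y : L, b.repr ⁅x, y⁆ 3
      = b.repr x 1 * b.repr y 0 - b.repr x 0 * b.repr y 1 := fun x y => by
    rw [brk x y]; simp [Finsupp.single_apply]
  have hr4 : ∀ x y : L, b.repr ⁅x, y⁆ 4
      = b.repr x 2 * b.repr y 0 - b.repr x 0 * b.repr y 2 := fun x y => by
    rw [brk x y]; simp [Finsupp.single_apply]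
  have hr5 : ∀ x y : L, b.repr ⁅x, y⁆ 5
      = b.repr x 3 * b.repr y 0 - b.repr x 0 * b.repr y 3
        + b.repr x 2 * b.repr y 1 - b.repr x 1 * b.repr y 2 := fun x y => by
    rw [brk x y]; simp [Finsupp.single_apply]
  have hr7 : ∀ x y : L, b.repr ⁅x, y⁆ 7
      = b.repr x 5 * b.repr y 0 - b.repr x 0 * b.repr y 5
        + 2 * (b.repr x 4 * b.repr y 1 - b.repr x 1 * b.repr y 4)
        + b.repr x 3 * b.repr y 2 - b.repr x 2 * b.repr y 3 := fun x y => by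
    rw [brk x y]; simp [Finsupp.single_apply]
  constructor
  · rintro ⟨ψ, hbr, hJψ⟩
    -- the inverse also preserves brackets
    have hbr' : ∀ x y : L, ψ.symm ⁅x, y⁆ = ⁅ψ.symm x, ψ.symm y⁆ := by
      intro x y
      apply ψ.injective
      rw [ψ.apply_symm_apply, hbr, ψ.apply_symm_apply, ψ.apply_symm_apply]
    -- derived images
    have himg : ∀ (φ : L ≃ₗ[ℝ] L), (∀ x y : L, φ ⁅x, y⁆ = ⁅φ x, φ y⁆) →
        φ (b 3) = -⁅φ (b 0), φ (b 1)⁆ ∧ φ (b 4) = -⁅φ (b 0), φ (b 2)⁆ ∧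
        φ (b 5) = -⁅φ (b 0), φ (b 3)⁆ := by
      intro φ h
      refine ⟨?_, ?_, ?_⟩
      · have := h (b 0) (b 1); rw [hb01, map_neg] at this
        exact neg_eq_iff_eq_neg.mp this
      · have := h (b 0) (b 2); rw [hb02, map_neg] at this
        exact neg_eq_iff_eq_neg.mp this
      · have := h (b 0) (b 3); rw [hb03, map_neg] at this
        exact neg_eq_iff_eq_neg.mp this
    obtain ⟨hψ3, hψ4, hψ5⟩ := himg ψ hbr
    obtain ⟨hφ3, hφ4, hφ5⟩ := himg ψ.symm hbr'
    -- coordinates of ψ (b 3) : call them q_i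
    have hq0 : b.repr (ψ (b 3)) 0 = 0 := by rw [hψ3, map_neg]; simp [hr0]
    have hq1 : b.repr (ψ (b 3)) 1 = 0 := by rw [hψ3, map_neg]; simp [hr1]
    have hq2 : b.repr (ψ (b 3)) 2 = 0 := by rw [hψ3, map_neg]; simp [hr2]
    -- expansion of J' on an arbitrary vector
    have hJ'x : ∀ x : L, J' x
        = (-(c' / (c' + 1)) * b.repr x 1) • b 0 + ((c' + 1) / c' * b.repr x 0) • b 1
          + (b.repr x 3) • b 2 + (-(b.repr x 2)) • b 3
          + (-(c' * b.repr x 5)) • b 4 + (1 / c' * b.repr x 4) • b 5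
          + (-(c' / (3 + 2 * c') * b.repr x 7)) • b 6
          + ((3 + 2 * c') / c' * b.repr x 6) • b 7 := by
      intro x
      conv_lhs => rw [← b.sum_repr x]
      rw [map_sum]
      simp only [Fin.sum_univ_eight, map_smul, hJ'0, hJ'1, hJ'2, hJ'3, hJ'4, hJ'5,
        hJ'6, hJ'7]
      module
    -- intertwining at b 2 : -ψ (b 3) = J' (ψ (b 2))
    have hI2 : -ψ (b 3) = J' (ψ (b 2)) := by
      have := hJψ (b 2); rw [hJ2, map_neg] at this; exact this
    have hJ'r1 : ∀ x : L, b.repr (J' x) 1 = (c' + 1) / c' * b.repr x 0 := fun x => by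
      rw [hJ'x x]; simp [Finsupp.single_apply]
    -- component 1 gives p0 = 0
    have hp0 : b.repr (ψ (b 2)) 0 = 0 := by
      have e : (0 : ℝ) = (c' + 1) / c' * b.repr (ψ (b 2)) 0 := by
        calc (0 : ℝ) = b.repr (-ψ (b 3)) 1 := by simp [hq1]
        _ = b.repr (J' (ψ (b 2))) 1 := by rw [hI2]
        _ = _ := hJ'r1 _
      have hk : (c' + 1) / c' ≠ 0 := by positivity
      exact ((mul_eq_zero.mp e.symm).resolve_left hk)
    -- component 3 gives q3 = p2
    have hq3p2 : b.repr (ψ (b 3)) 3 = b.repr (ψ (b 2)) 2 := by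
      have e := congrArg (fun v => b.repr v 3) hI2
      simp only [map_neg, Finsupp.neg_apply] at e
      rw [hJ'x (ψ (b 2))] at e
      simp [Finsupp.single_apply] at e
      linarith [e]
    -- value of t = r4 (ψ (b 4)) and s = r5 (ψ (b 5))
    have ht : b.repr (ψ (b 4)) 4 = b.repr (ψ (b 0)) 0 * b.repr (ψ (b 2)) 2 := by
      rw [hψ4, map_neg]
      simp only [Finsupp.neg_apply, hr4, hp0]
      ring
    have hs : b.repr (ψ (b 5)) 5 = b.repr (ψ (b 0)) 0 * b.repr (ψ (b 3)) 3 := by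
      rw [hψ5, map_neg]
      simp only [Finsupp.neg_apply, hr5, hq0, hq1, hq2]
      ring
    -- intertwining at b 5, component 4 : c * t = c' * s
    have hI5 : -(c • ψ (b 4)) = J' (ψ (b 5)) := by
      have := hJψ (b 5); rw [hJ5, map_neg, map_smul] at this; exact this
    have hkey : c * b.repr (ψ (b 4)) 4 = c' * b.repr (ψ (b 5)) 5 := by
      have e := congrArg (fun v => b.repr v 4) hI5
      simp only [map_neg, map_smul, Finsupp.neg_apply, Finsupp.smul_apply,
        smul_eq_mul] at e
      rw [hJ'x (ψ (b 5))] at e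
      simp [Finsupp.single_apply] at e
      linarith [e]
    -- coordinates of ψ.symm (b 3) and ψ.symm (b 5)
    have hq0' : b.repr (ψ.symm (b 3)) 0 = 0 := by rw [hφ3, map_neg]; simp [hr0]
    have hq1' : b.repr (ψ.symm (b 3)) 1 = 0 := by rw [hφ3, map_neg]; simp [hr1]
    have hq2' : b.repr (ψ.symm (b 3)) 2 = 0 := by rw [hφ3, map_neg]; simp [hr2]
    have hs0' : b.repr (ψ.symm (b 5)) 0 = 0 := by rw [hφ5, map_neg]; simp [hr0]
    have hs1' : b.repr (ψ.symm (b 5)) 1 = 0 := by rw [hφ5, map_neg]; simp [hr1]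
    have hs2' : b.repr (ψ.symm (b 5)) 2 = 0 := by rw [hφ5, map_neg]; simp [hr2]
    have hs3' : b.repr (ψ.symm (b 5)) 3 = 0 := by
      rw [hφ5, map_neg]
      simp only [Finsupp.neg_apply, hr3, hq0', hq1']
      ring
    have hs4' : b.repr (ψ.symm (b 5)) 4 = 0 := by
      rw [hφ5, map_neg]
      simp only [Finsupp.neg_apply, hr4, hq0', hq2']
      ring
    -- centrality of b 6 and b 7
    have cent6 : ∀ y : L, ⁅b 6, y⁆ = 0 := fun y => by
      rw [brk (b 6) y]; simp [Finsupp.single_apply]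
    have cent7 : ∀ y : L, ⁅b 7, y⁆ = 0 := fun y => by
      rw [brk (b 7) y]; simp [Finsupp.single_apply]
    have cψ6 : ⁅ψ (b 6), b 0⁆ = 0 := by
      have := hbr (b 6) (ψ.symm (b 0))
      rw [cent6, map_zero, ψ.apply_symm_apply] at this
      exact this.symm
    have cψ7 : ⁅ψ (b 7), b 0⁆ = 0 := by
      have := hbr (b 7) (ψ.symm (b 0))
      rw [cent7, map_zero, ψ.apply_symm_apply] at this
      exact this.symm
    have hm56 : b.repr (ψ (b 6)) 5 = 0 := by
      have e := congrArg (fun v => b.repr v 7) cψ6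
      simp only [hr7, map_zero, Finsupp.zero_apply, Module.Basis.repr_self] at e
      simp [Finsupp.single_apply] at e
      linarith [e]
    have hm57 : b.repr (ψ (b 7)) 5 = 0 := by
      have e := congrArg (fun v => b.repr v 7) cψ7
      simp only [hr7, map_zero, Finsupp.zero_apply, Module.Basis.repr_self] at e
      simp [Finsupp.single_apply] at e
      linarith [e]
    -- 1 = s' * s
    have hb5exp : b 5 = ∑ j, b.repr (ψ.symm (b 5)) j • ψ (b j) := by
      conv_lhs => rw [← ψ.apply_symm_apply (b 5), ← b.sum_repr (ψ.symm (b 5))]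
      rw [map_sum]
      simp only [map_smul]
    have hone : (1 : ℝ) = b.repr (ψ.symm (b 5)) 5 * b.repr (ψ (b 5)) 5 := by
      have e := congrArg (fun v => b.repr v 5) hb5exp
      simp only [Fin.sum_univ_eight, map_add, map_smul, Finsupp.add_apply,
        Finsupp.smul_apply, smul_eq_mul, Module.Basis.repr_self,
        hs0', hs1', hs2', hs3', hs4', hm56, hm57] at e
      simp [Finsupp.single_apply] at e
      linarith [e]
    have hsne : b.repr (ψ (b 5)) 5 ≠ 0 := by
      intro h0
      rw [h0, mul_zero] at hone
      norm_num at hone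
    have hts : b.repr (ψ (b 4)) 4 = b.repr (ψ (b 5)) 5 := by
      rw [ht, hs, hq3p2]
    rw [hts] at hkey
    exact mul_right_cancel₀ hsne hkey
  · rintro rfl
    refine ⟨LinearEquiv.refl ℝ L, fun x y => rfl, fun x => ?_⟩
    have hJJ' : J = J' := by
      apply b.ext
      intro i
      fin_cases i
      · exact hJ0.trans hJ'0.symm
      · exact hJ1.trans hJ'1.symm
      · exact hJ2.trans hJ'2.symm
      · exact hJ3.trans hJ'3.symm
      · exact hJ4.trans hJ'4.symm
      · exact hJ5.trans hJ'5.symm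
      · exact hJ6.trans hJ'6.symm
      · exact hJ7.trans hJ'7.symm
    simp [hJJ']
end

section
/- Let 𝔥 be the 8-dimensional real Lie algebra with basis e₁,…,e₈ and nonzero brackets [e₁,e₂] = −e₄, [e₁,e₃] = −e₅, [e₁,e₄] = −e₆, [e₂,e₃] = −e₆, [e₁,e₅] = −e₇, [e₁,e₆] = −e₈, [e₂,e₅] = −2e₈, [e₃,e₄] = −e₈, and fix c > 0. Let J_c : 𝔥 → 𝔥 be the linear map with J_c(e₁) = ((c+1)/c)e₂, J_c(e₂) = −(c/(c+1))e₁, J_c(e₃) = −e₄, J_c(e₄) = e₃, J_c(e₅) = (1/c)e₆, J_c(e₆) = −c·e₅, J_c(e₇) = ((3+2c)/c)e₈, J_c(e₈) = −(c/(3+2c))e₇. Set ω̂_cs = (c+1)(2c+3)e¹⁷ − c²e²⁸ + c·e³⁵ + c²e⁴⁶ and ω̂_pK = (c+1)(2c+3)e¹⁷ + c²e²⁸ + c·e³⁵ − c²e⁴⁶, let Ê = ω̂_pK⁻¹ ∘ ω̂_cs and ĝ(X,Y) = ω̂_pK(X, J_c Y). Then (J_c, Ê, ĝ) is a hypersymplectic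 structure on 𝔥. -/
set_option maxHeartbeats 4000000 in
theorem stmt17 {L : Type*} [LieRing L] [LieAlgebra ℝ L]
    (b : Module.Basis (Fin 8) ℝ L)
    (hb01 : ⁅b 0, b 1⁆ = -b 3) (hb02 : ⁅b 0, b 2⁆ = -b 4)
    (hb03 : ⁅b 0, b 3⁆ = -b 5) (hb12 : ⁅b 1, b 2⁆ = -b 5)
    (hb04 : ⁅b 0, b 4⁆ = -b 6) (hb05 : ⁅b 0, b 5⁆ = -b 7)
    (hb14 : ⁅b 1, b 4⁆ = -((2 : ℝ) • b 7)) (hb23 : ⁅b 2, b 3⁆ = -b 7)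
    (hbz : ∀ i j : Fin 8, i < j →
      (i, j) ∉ ([(0, 1), (0, 2), (0, 3), (1, 2), (0, 4), (0, 5), (1, 4),
        (2, 3)] : List (Fin 8 × Fin 8)) → ⁅b i, b j⁆ = 0)
    (c : ℝ) (hc : 0 < c) (J : L →ₗ[ℝ] L)
    (hJ0 : J (b 0) = ((c + 1) / c) • b 1) (hJ1 : J (b 1) = -((c / (c + 1)) • b 0))
    (hJ2 : J (b 2) = -b 3) (hJ3 : J (b 3) = b 2)
    (hJ4 : J (b 4) = (1 / c) • b 5) (hJ5 : J (b 5) = -(c • b 4))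
    (hJ6 : J (b 6) = ((3 + 2 * c) / c) • b 7) (hJ7 : J (b 7) = -((c / (3 + 2 * c)) • b 6))
    (ωcs ωpK : L →ₗ[ℝ] L →ₗ[ℝ] ℝ)
    (hωcs : ∀ X Y, ωcs X Y =
      (c + 1) * (2 * c + 3) * e2 b 0 6 X Y - c ^ 2 * e2 b 1 7 X Y
        + c * e2 b 2 4 X Y + c ^ 2 * e2 b 3 5 X Y)
    (hωpK : ∀ X Y, ωpK X Y =
      (c + 1) * (2 * c + 3) * e2 b 0 6 X Y + c ^ 2 * e2 b 1 7 X Y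
        + c * e2 b 2 4 X Y - c ^ 2 * e2 b 3 5 X Y)
    (E : L →ₗ[ℝ] L) (hE : ∀ X Y, ωpK (E X) Y = ωcs X Y)
    (g : L →ₗ[ℝ] L →ₗ[ℝ] ℝ) (hg : ∀ X Y, g X Y = ωpK X (J Y)) :
    IsHypersymplectic J E g := by
  have hc0 : c ≠ 0 := ne_of_gt hc
  have hcp1 : c + 1 ≠ 0 := ne_of_gt (by linarith)
  have hc23 : 2 * c + 3 ≠ 0 := ne_of_gt (by linarith)
  have hc32 : 3 + 2 * c ≠ 0 := ne_of_gt (by linarith)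
  have K00 : ⁅b 0, b 0⁆ = 0 := lie_self _
  have K01 : ⁅b 0, b 1⁆ = -b 3 := hb01
  have K02 : ⁅b 0, b 2⁆ = -b 4 := hb02
  have K03 : ⁅b 0, b 3⁆ = -b 5 := hb03
  have K04 : ⁅b 0, b 4⁆ = -b 6 := hb04
  have K05 : ⁅b 0, b 5⁆ = -b 7 := hb05
  have K06 : ⁅b 0, b 6⁆ = 0 := hbz 0 6 (by decide) (by decide)
  have K07 : ⁅b 0, b 7⁆ = 0 := hbz 0 7 (by decide) (by decide)
  have K10 : ⁅b 1, b 0⁆ = b 3 := by rw [← lie_skew, K01, neg_neg]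
  have K11 : ⁅b 1, b 1⁆ = 0 := lie_self _
  have K12 : ⁅b 1, b 2⁆ = -b 5 := hb12
  have K13 : ⁅b 1, b 3⁆ = 0 := hbz 1 3 (by decide) (by decide)
  have K14 : ⁅b 1, b 4⁆ = -((2 : ℝ) • b 7) := hb14
  have K15 : ⁅b 1, b 5⁆ = 0 := hbz 1 5 (by decide) (by decide)
  have K16 : ⁅b 1, b 6⁆ = 0 := hbz 1 6 (by decide) (by decide)
  have K17 : ⁅b 1, b 7⁆ = 0 := hbz 1 7 (by decide) (by decide)
  have K20 : ⁅b 2, b 0⁆ = b 4 := by rw [← lie_skew, K02, neg_neg]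
  have K21 : ⁅b 2, b 1⁆ = b 5 := by rw [← lie_skew, K12, neg_neg]
  have K22 : ⁅b 2, b 2⁆ = 0 := lie_self _
  have K23 : ⁅b 2, b 3⁆ = -b 7 := hb23
  have K24 : ⁅b 2, b 4⁆ = 0 := hbz 2 4 (by decide) (by decide)
  have K25 : ⁅b 2, b 5⁆ = 0 := hbz 2 5 (by decide) (by decide)
  have K26 : ⁅b 2, b 6⁆ = 0 := hbz 2 6 (by decide) (by decide)
  have K27 : ⁅b 2, b 7⁆ = 0 := hbz 2 7 (by decide) (by decide)
  have K30 : ⁅b 3, b 0⁆ = b 5 := by rw [← lie_skew, K03, neg_neg]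
  have K31 : ⁅b 3, b 1⁆ = 0 := by rw [← lie_skew, K13, neg_zero]
  have K32 : ⁅b 3, b 2⁆ = b 7 := by rw [← lie_skew, K23, neg_neg]
  have K33 : ⁅b 3, b 3⁆ = 0 := lie_self _
  have K34 : ⁅b 3, b 4⁆ = 0 := hbz 3 4 (by decide) (by decide)
  have K35 : ⁅b 3, b 5⁆ = 0 := hbz 3 5 (by decide) (by decide)
  have K36 : ⁅b 3, b 6⁆ = 0 := hbz 3 6 (by decide) (by decide)
  have K37 : ⁅b 3, b 7⁆ = 0 := hbz 3 7 (by decide) (by decide)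
  have K40 : ⁅b 4, b 0⁆ = b 6 := by rw [← lie_skew, K04, neg_neg]
  have K41 : ⁅b 4, b 1⁆ = (2 : ℝ) • b 7 := by rw [← lie_skew, K14, neg_neg]
  have K42 : ⁅b 4, b 2⁆ = 0 := by rw [← lie_skew, K24, neg_zero]
  have K43 : ⁅b 4, b 3⁆ = 0 := by rw [← lie_skew, K34, neg_zero]
  have K44 : ⁅b 4, b 4⁆ = 0 := lie_self _
  have K45 : ⁅b 4, b 5⁆ = 0 := hbz 4 5 (by decide) (by decide)
  have K46 : ⁅b 4, b 6⁆ = 0 := hbz 4 6 (by decide) (by decide)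
  have K47 : ⁅b 4, b 7⁆ = 0 := hbz 4 7 (by decide) (by decide)
  have K50 : ⁅b 5, b 0⁆ = b 7 := by rw [← lie_skew, K05, neg_neg]
  have K51 : ⁅b 5, b 1⁆ = 0 := by rw [← lie_skew, K15, neg_zero]
  have K52 : ⁅b 5, b 2⁆ = 0 := by rw [← lie_skew, K25, neg_zero]
  have K53 : ⁅b 5, b 3⁆ = 0 := by rw [← lie_skew, K35, neg_zero]
  have K54 : ⁅b 5, b 4⁆ = 0 := by rw [← lie_skew, K45, neg_zero]
  have K55 : ⁅b 5, b 5⁆ = 0 := lie_self _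
  have K56 : ⁅b 5, b 6⁆ = 0 := hbz 5 6 (by decide) (by decide)
  have K57 : ⁅b 5, b 7⁆ = 0 := hbz 5 7 (by decide) (by decide)
  have K60 : ⁅b 6, b 0⁆ = 0 := by rw [← lie_skew, K06, neg_zero]
  have K61 : ⁅b 6, b 1⁆ = 0 := by rw [← lie_skew, K16, neg_zero]
  have K62 : ⁅b 6, b 2⁆ = 0 := by rw [← lie_skew, K26, neg_zero]
  have K63 : ⁅b 6, b 3⁆ = 0 := by rw [← lie_skew, K36, neg_zero]
  have K64 : ⁅b 6, b 4⁆ = 0 := by rw [← lie_skew, K46, neg_zero]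
  have K65 : ⁅b 6, b 5⁆ = 0 := by rw [← lie_skew, K56, neg_zero]
  have K66 : ⁅b 6, b 6⁆ = 0 := lie_self _
  have K67 : ⁅b 6, b 7⁆ = 0 := hbz 6 7 (by decide) (by decide)
  have K70 : ⁅b 7, b 0⁆ = 0 := by rw [← lie_skew, K07, neg_zero]
  have K71 : ⁅b 7, b 1⁆ = 0 := by rw [← lie_skew, K17, neg_zero]
  have K72 : ⁅b 7, b 2⁆ = 0 := by rw [← lie_skew, K27, neg_zero]
  have K73 : ⁅b 7, b 3⁆ = 0 := by rw [← lie_skew, K37, neg_zero]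
  have K74 : ⁅b 7, b 4⁆ = 0 := by rw [← lie_skew, K47, neg_zero]
  have K75 : ⁅b 7, b 5⁆ = 0 := by rw [← lie_skew, K57, neg_zero]
  have K76 : ⁅b 7, b 6⁆ = 0 := by rw [← lie_skew, K67, neg_zero]
  have K77 : ⁅b 7, b 7⁆ = 0 := lie_self _
  have hrep0 : ∀ Z : L, (∀ j : Fin 8, ωpK Z (b j) = 0) → Z = 0 := by
    intro Z hZ
    have hr0 : b.repr Z 0 = 0 := by
      have h := hZ 6
      rw [hωpK] at h
      simp only [e2, Module.Basis.repr_self, Finsupp.single_apply, Fin.reduceEq, if_true, if_false,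
        reduceIte, mul_zero, zero_mul, sub_zero, zero_sub, add_zero, zero_add, mul_one,
        mul_neg, neg_zero, neg_eq_zero, mul_eq_zero, hc0, hcp1, hc23, false_or, or_false,
        pow_eq_zero_iff] at h
      first
      | exact h
      | exact h.resolve_left (pow_ne_zero 2 hc0)
      | exact h.resolve_left hc0
    have hr1 : b.repr Z 1 = 0 := by
      have h := hZ 7
      rw [hωpK] at h
      simp only [e2, Module.Basis.repr_self, Finsupp.single_apply, Fin.reduceEq, if_true, if_false,
        reduceIte, mul_zero, zero_mul, sub_zero, zero_sub, add_zero, zero_add, mul_one,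
        mul_neg, neg_zero, neg_eq_zero, mul_eq_zero, hc0, hcp1, hc23, false_or, or_false,
        pow_eq_zero_iff] at h
      first
      | exact h
      | exact h.resolve_left (pow_ne_zero 2 hc0)
      | exact h.resolve_left hc0
    have hr2 : b.repr Z 2 = 0 := by
      have h := hZ 4
      rw [hωpK] at h
      simp only [e2, Module.Basis.repr_self, Finsupp.single_apply, Fin.reduceEq, if_true, if_false,
        reduceIte, mul_zero, zero_mul, sub_zero, zero_sub, add_zero, zero_add, mul_one,
        mul_neg, neg_zero, neg_eq_zero, mul_eq_zero, hc0, hcp1, hc23, false_or, or_false,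
        pow_eq_zero_iff] at h
      first
      | exact h
      | exact h.resolve_left (pow_ne_zero 2 hc0)
      | exact h.resolve_left hc0
    have hr3 : b.repr Z 3 = 0 := by
      have h := hZ 5
      rw [hωpK] at h
      simp only [e2, Module.Basis.repr_self, Finsupp.single_apply, Fin.reduceEq, if_true, if_false,
        reduceIte, mul_zero, zero_mul, sub_zero, zero_sub, add_zero, zero_add, mul_one,
        mul_neg, neg_zero, neg_eq_zero, mul_eq_zero, hc0, hcp1, hc23, false_or, or_false,
        pow_eq_zero_iff] at h
      first
      | exact h
      | exact h.resolve_left (pow_ne_zero 2 hc0)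
      | exact h.resolve_left hc0
    have hr4 : b.repr Z 4 = 0 := by
      have h := hZ 2
      rw [hωpK] at h
      simp only [e2, Module.Basis.repr_self, Finsupp.single_apply, Fin.reduceEq, if_true, if_false,
        reduceIte, mul_zero, zero_mul, sub_zero, zero_sub, add_zero, zero_add, mul_one,
        mul_neg, neg_zero, neg_eq_zero, mul_eq_zero, hc0, hcp1, hc23, false_or, or_false,
        pow_eq_zero_iff] at h
      first
      | exact h
      | exact h.resolve_left (pow_ne_zero 2 hc0)
      | exact h.resolve_left hc0
    have hr5 : b.repr Z 5 = 0 := by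
      have h := hZ 3
      rw [hωpK] at h
      simp only [e2, Module.Basis.repr_self, Finsupp.single_apply, Fin.reduceEq, if_true, if_false,
        reduceIte, mul_zero, zero_mul, sub_zero, zero_sub, add_zero, zero_add, mul_one,
        mul_neg, neg_zero, neg_eq_zero, mul_eq_zero, hc0, hcp1, hc23, false_or, or_false,
        pow_eq_zero_iff] at h
      first
      | exact h
      | exact h.resolve_left (pow_ne_zero 2 hc0)
      | exact h.resolve_left hc0
    have hr6 : b.repr Z 6 = 0 := by
      have h := hZ 0
      rw [hωpK] at h
      simp only [e2, Module.Basis.repr_self, Finsupp.single_apply, Fin.reduceEq, if_true, if_false,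
        reduceIte, mul_zero, zero_mul, sub_zero, zero_sub, add_zero, zero_add, mul_one,
        mul_neg, neg_zero, neg_eq_zero, mul_eq_zero, hc0, hcp1, hc23, false_or, or_false,
        pow_eq_zero_iff] at h
      first
      | exact h
      | exact h.resolve_left (pow_ne_zero 2 hc0)
      | exact h.resolve_left hc0
    have hr7 : b.repr Z 7 = 0 := by
      have h := hZ 1
      rw [hωpK] at h
      simp only [e2, Module.Basis.repr_self, Finsupp.single_apply, Fin.reduceEq, if_true, if_false,
        reduceIte, mul_zero, zero_mul, sub_zero, zero_sub, add_zero, zero_add, mul_one,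
        mul_neg, neg_zero, neg_eq_zero, mul_eq_zero, hc0, hcp1, hc23, false_or, or_false,
        pow_eq_zero_iff] at h
      first
      | exact h
      | exact h.resolve_left (pow_ne_zero 2 hc0)
      | exact h.resolve_left hc0
    have hZr : b.repr Z = 0 := by
      ext i
      fin_cases i
      · simpa using hr0
      · simpa using hr1
      · simpa using hr2
      · simpa using hr3
      · simpa using hr4
      · simpa using hr5
      · simpa using hr6
      · simpa using hr7
    exact b.repr.map_eq_zero_iff.mp hZr
  have hEt0 : E (b 0) = b 0 := by
    refine sub_eq_zero.mp (hrep0 _ ?_)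
    intro j
    have h1 : ωpK (E (b 0) - (b 0)) (b j) = ωcs (b 0) (b j) - ωpK (b 0) (b j) := by
      rw [map_sub, LinearMap.sub_apply, hE]
    rw [h1, hωcs, hωpK]
    fin_cases j <;>
      (simp only [Fin.reduceFinMk, Fin.isValue, e2, Module.Basis.repr_self, map_neg,
        Finsupp.neg_apply, Finsupp.single_apply, Fin.reduceEq, if_true, if_false, reduceIte,
        mul_zero, zero_mul, mul_one, mul_neg, neg_neg, neg_zero, sub_zero, zero_sub,
        add_zero, zero_add, sub_self, neg_eq_zero];
       try ring)
  have hEt1 : E (b 1) = -b 1 := by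
    refine sub_eq_zero.mp (hrep0 _ ?_)
    intro j
    have h1 : ωpK (E (b 1) - (-b 1)) (b j) = ωcs (b 1) (b j) - ωpK (-b 1) (b j) := by
      rw [map_sub, LinearMap.sub_apply, hE]
    rw [h1, hωcs, hωpK]
    fin_cases j <;>
      (simp only [Fin.reduceFinMk, Fin.isValue, e2, Module.Basis.repr_self, map_neg,
        Finsupp.neg_apply, Finsupp.single_apply, Fin.reduceEq, if_true, if_false, reduceIte,
        mul_zero, zero_mul, mul_one, mul_neg, neg_neg, neg_zero, sub_zero, zero_sub,
        add_zero, zero_add, sub_self, neg_eq_zero];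
       try ring)
  have hEt2 : E (b 2) = b 2 := by
    refine sub_eq_zero.mp (hrep0 _ ?_)
    intro j
    have h1 : ωpK (E (b 2) - (b 2)) (b j) = ωcs (b 2) (b j) - ωpK (b 2) (b j) := by
      rw [map_sub, LinearMap.sub_apply, hE]
    rw [h1, hωcs, hωpK]
    fin_cases j <;>
      (simp only [Fin.reduceFinMk, Fin.isValue, e2, Module.Basis.repr_self, map_neg,
        Finsupp.neg_apply, Finsupp.single_apply, Fin.reduceEq, if_true, if_false, reduceIte,
        mul_zero, zero_mul, mul_one, mul_neg, neg_neg, neg_zero, sub_zero, zero_sub,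
        add_zero, zero_add, sub_self, neg_eq_zero];
       try ring)
  have hEt3 : E (b 3) = -b 3 := by
    refine sub_eq_zero.mp (hrep0 _ ?_)
    intro j
    have h1 : ωpK (E (b 3) - (-b 3)) (b j) = ωcs (b 3) (b j) - ωpK (-b 3) (b j) := by
      rw [map_sub, LinearMap.sub_apply, hE]
    rw [h1, hωcs, hωpK]
    fin_cases j <;>
      (simp only [Fin.reduceFinMk, Fin.isValue, e2, Module.Basis.repr_self, map_neg,
        Finsupp.neg_apply, Finsupp.single_apply, Fin.reduceEq, if_true, if_false, reduceIte,
        mul_zero, zero_mul, mul_one, mul_neg, neg_neg, neg_zero, sub_zero, zero_sub,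
        add_zero, zero_add, sub_self, neg_eq_zero];
       try ring)
  have hEt4 : E (b 4) = b 4 := by
    refine sub_eq_zero.mp (hrep0 _ ?_)
    intro j
    have h1 : ωpK (E (b 4) - (b 4)) (b j) = ωcs (b 4) (b j) - ωpK (b 4) (b j) := by
      rw [map_sub, LinearMap.sub_apply, hE]
    rw [h1, hωcs, hωpK]
    fin_cases j <;>
      (simp only [Fin.reduceFinMk, Fin.isValue, e2, Module.Basis.repr_self, map_neg,
        Finsupp.neg_apply, Finsupp.single_apply, Fin.reduceEq, if_true, if_false, reduceIte,
        mul_zero, zero_mul, mul_one, mul_neg, neg_neg, neg_zero, sub_zero, zero_sub,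
        add_zero, zero_add, sub_self, neg_eq_zero];
       try ring)
  have hEt5 : E (b 5) = -b 5 := by
    refine sub_eq_zero.mp (hrep0 _ ?_)
    intro j
    have h1 : ωpK (E (b 5) - (-b 5)) (b j) = ωcs (b 5) (b j) - ωpK (-b 5) (b j) := by
      rw [map_sub, LinearMap.sub_apply, hE]
    rw [h1, hωcs, hωpK]
    fin_cases j <;>
      (simp only [Fin.reduceFinMk, Fin.isValue, e2, Module.Basis.repr_self, map_neg,
        Finsupp.neg_apply, Finsupp.single_apply, Fin.reduceEq, if_true, if_false, reduceIte,
        mul_zero, zero_mul, mul_one, mul_neg, neg_neg, neg_zero, sub_zero, zero_sub,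
        add_zero, zero_add, sub_self, neg_eq_zero];
       try ring)
  have hEt6 : E (b 6) = b 6 := by
    refine sub_eq_zero.mp (hrep0 _ ?_)
    intro j
    have h1 : ωpK (E (b 6) - (b 6)) (b j) = ωcs (b 6) (b j) - ωpK (b 6) (b j) := by
      rw [map_sub, LinearMap.sub_apply, hE]
    rw [h1, hωcs, hωpK]
    fin_cases j <;>
      (simp only [Fin.reduceFinMk, Fin.isValue, e2, Module.Basis.repr_self, map_neg,
        Finsupp.neg_apply, Finsupp.single_apply, Fin.reduceEq, if_true, if_false, reduceIte,
        mul_zero, zero_mul, mul_one, mul_neg, neg_neg, neg_zero, sub_zero, zero_sub,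
        add_zero, zero_add, sub_self, neg_eq_zero];
       try ring)
  have hEt7 : E (b 7) = -b 7 := by
    refine sub_eq_zero.mp (hrep0 _ ?_)
    intro j
    have h1 : ωpK (E (b 7) - (-b 7)) (b j) = ωcs (b 7) (b j) - ωpK (-b 7) (b j) := by
      rw [map_sub, LinearMap.sub_apply, hE]
    rw [h1, hωcs, hωpK]
    fin_cases j <;>
      (simp only [Fin.reduceFinMk, Fin.isValue, e2, Module.Basis.repr_self, map_neg,
        Finsupp.neg_apply, Finsupp.single_apply, Fin.reduceEq, if_true, if_false, reduceIte,
        mul_zero, zero_mul, mul_one, mul_neg, neg_neg, neg_zero, sub_zero, zero_sub,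
        add_zero, zero_add, sub_self, neg_eq_zero];
       try ring)
  have hbr : ∀ X Y : L, ⁅X, Y⁆ = (-(b.repr X 0 * b.repr Y 1 - b.repr X 1 * b.repr Y 0)) • b 3 + (-(b.repr X 0 * b.repr Y 2 - b.repr X 2 * b.repr Y 0)) • b 4 + ((-(b.repr X 0 * b.repr Y 3 - b.repr X 3 * b.repr Y 0) - (b.repr X 1 * b.repr Y 2 - b.repr X 2 * b.repr Y 1))) • b 5 + (-(b.repr X 0 * b.repr Y 4 - b.repr X 4 * b.repr Y 0)) • b 6 + ((-(b.repr X 0 * b.repr Y 5 - b.repr X 5 * b.repr Y 0) - 2 * (b.repr X 1 * b.repr Y 4 - b.repr X 4 * b.repr Y 1) - (b.repr X 2 * b.repr Y 3 - b.repr X 3 * b.repr Y 2))) • b 7 := by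
    intro X Y
    conv_lhs => rw [← b.sum_repr X, ← b.sum_repr Y]
    rw [Fin.sum_univ_eight, Fin.sum_univ_eight]
    simp only [add_lie, lie_add, smul_lie, lie_smul, K00, K01, K02, K03, K04, K05, K06, K07, K10, K11, K12, K13, K14, K15, K16, K17, K20, K21, K22, K23, K24, K25, K26, K27, K30, K31, K32, K33, K34, K35, K36, K37, K40, K41, K42, K43, K44, K45, K46, K47, K50, K51, K52, K53, K54, K55, K56, K57, K60, K61, K62, K63, K64, K65, K66, K67, K70, K71, K72, K73, K74, K75, K76, K77, smul_neg, smul_zero, neg_zero,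
      add_zero, zero_add, smul_smul]
    module
  have hrk0 : ∀ X Y : L, b.repr ⁅X, Y⁆ 0 = 0 := by
    intro X Y
    rw [hbr X Y]
    simp only [map_add, map_smul, map_neg, Finsupp.add_apply, Finsupp.smul_apply, Finsupp.neg_apply, Module.Basis.repr_self, Finsupp.single_apply, Fin.reduceEq, if_true, if_false, reduceIte, smul_eq_mul, mul_zero, mul_one, zero_mul, add_zero, zero_add, mul_neg, neg_zero, neg_neg]
    try ring
  have hrk1 : ∀ X Y : L, b.repr ⁅X, Y⁆ 1 = 0 := by
    intro X Y
    rw [hbr X Y]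
    simp only [map_add, map_smul, map_neg, Finsupp.add_apply, Finsupp.smul_apply, Finsupp.neg_apply, Module.Basis.repr_self, Finsupp.single_apply, Fin.reduceEq, if_true, if_false, reduceIte, smul_eq_mul, mul_zero, mul_one, zero_mul, add_zero, zero_add, mul_neg, neg_zero, neg_neg]
    try ring
  have hrk2 : ∀ X Y : L, b.repr ⁅X, Y⁆ 2 = 0 := by
    intro X Y
    rw [hbr X Y]
    simp only [map_add, map_smul, map_neg, Finsupp.add_apply, Finsupp.smul_apply, Finsupp.neg_apply, Module.Basis.repr_self, Finsupp.single_apply, Fin.reduceEq, if_true, if_false, reduceIte, smul_eq_mul, mul_zero, mul_one, zero_mul, add_zero, zero_add, mul_neg, neg_zero, neg_neg]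
    try ring
  have hrk3 : ∀ X Y : L, b.repr ⁅X, Y⁆ 3 = -(b.repr X 0 * b.repr Y 1 - b.repr X 1 * b.repr Y 0) := by
    intro X Y
    rw [hbr X Y]
    simp only [map_add, map_smul, map_neg, Finsupp.add_apply, Finsupp.smul_apply, Finsupp.neg_apply, Module.Basis.repr_self, Finsupp.single_apply, Fin.reduceEq, if_true, if_false, reduceIte, smul_eq_mul, mul_zero, mul_one, zero_mul, add_zero, zero_add, mul_neg, neg_zero, neg_neg]
    try ring
  have hrk4 : ∀ X Y : L, b.repr ⁅X, Y⁆ 4 = -(b.repr X 0 * b.repr Y 2 - b.repr X 2 * b.repr Y 0) := by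
    intro X Y
    rw [hbr X Y]
    simp only [map_add, map_smul, map_neg, Finsupp.add_apply, Finsupp.smul_apply, Finsupp.neg_apply, Module.Basis.repr_self, Finsupp.single_apply, Fin.reduceEq, if_true, if_false, reduceIte, smul_eq_mul, mul_zero, mul_one, zero_mul, add_zero, zero_add, mul_neg, neg_zero, neg_neg]
    try ring
  have hrk5 : ∀ X Y : L, b.repr ⁅X, Y⁆ 5 = (-(b.repr X 0 * b.repr Y 3 - b.repr X 3 * b.repr Y 0) - (b.repr X 1 * b.repr Y 2 - b.repr X 2 * b.repr Y 1)) := by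
    intro X Y
    rw [hbr X Y]
    simp only [map_add, map_smul, map_neg, Finsupp.add_apply, Finsupp.smul_apply, Finsupp.neg_apply, Module.Basis.repr_self, Finsupp.single_apply, Fin.reduceEq, if_true, if_false, reduceIte, smul_eq_mul, mul_zero, mul_one, zero_mul, add_zero, zero_add, mul_neg, neg_zero, neg_neg]
    try ring
  have hrk6 : ∀ X Y : L, b.repr ⁅X, Y⁆ 6 = -(b.repr X 0 * b.repr Y 4 - b.repr X 4 * b.repr Y 0) := by
    intro X Y
    rw [hbr X Y]
    simp only [map_add, map_smul, map_neg, Finsupp.add_apply, Finsupp.smul_apply, Finsupp.neg_apply, Module.Basis.repr_self, Finsupp.single_apply, Fin.reduceEq, if_true, if_false, reduceIte, smul_eq_mul, mul_zero, mul_one, zero_mul, add_zero, zero_add, mul_neg, neg_zero, neg_neg]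
    try ring
  have hrk7 : ∀ X Y : L, b.repr ⁅X, Y⁆ 7 = (-(b.repr X 0 * b.repr Y 5 - b.repr X 5 * b.repr Y 0) - 2 * (b.repr X 1 * b.repr Y 4 - b.repr X 4 * b.repr Y 1) - (b.repr X 2 * b.repr Y 3 - b.repr X 3 * b.repr Y 2)) := by
    intro X Y
    rw [hbr X Y]
    simp only [map_add, map_smul, map_neg, Finsupp.add_apply, Finsupp.smul_apply, Finsupp.neg_apply, Module.Basis.repr_self, Finsupp.single_apply, Fin.reduceEq, if_true, if_false, reduceIte, smul_eq_mul, mul_zero, mul_one, zero_mul, add_zero, zero_add, mul_neg, neg_zero, neg_neg]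
    try ring
  have hJX : ∀ X : L, J X = (-(c / (c + 1) * b.repr X 1)) • b 0 + ((c + 1) / c * b.repr X 0) • b 1 + (b.repr X 3) • b 2 + (-b.repr X 2) • b 3 + (-(c * b.repr X 5)) • b 4 + (b.repr X 4 / c) • b 5 + (-(c / (3 + 2 * c) * b.repr X 7)) • b 6 + ((3 + 2 * c) / c * b.repr X 6) • b 7 := by
    intro X
    conv_lhs => rw [← b.sum_repr X]
    rw [Fin.sum_univ_eight]
    simp only [map_add, map_smul, hJ0, hJ1, hJ2, hJ3, hJ4, hJ5, hJ6, hJ7]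
    match_scalars <;> (field_simp; try ring) <;> try tauto
  have hJr0 : ∀ X : L, b.repr (J X) 0 = -(c / (c + 1) * b.repr X 1) := by
    intro X
    rw [hJX X]
    simp only [map_add, map_smul, map_neg, Finsupp.add_apply, Finsupp.smul_apply, Finsupp.neg_apply, Module.Basis.repr_self, Finsupp.single_apply, Fin.reduceEq, if_true, if_false, reduceIte, smul_eq_mul, mul_zero, mul_one, zero_mul, add_zero, zero_add, mul_neg, neg_zero, neg_neg]
    try ring
  have hJr1 : ∀ X : L, b.repr (J X) 1 = (c + 1) / c * b.repr X 0 := by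
    intro X
    rw [hJX X]
    simp only [map_add, map_smul, map_neg, Finsupp.add_apply, Finsupp.smul_apply, Finsupp.neg_apply, Module.Basis.repr_self, Finsupp.single_apply, Fin.reduceEq, if_true, if_false, reduceIte, smul_eq_mul, mul_zero, mul_one, zero_mul, add_zero, zero_add, mul_neg, neg_zero, neg_neg]
    try ring
  have hJr2 : ∀ X : L, b.repr (J X) 2 = b.repr X 3 := by
    intro X
    rw [hJX X]
    simp only [map_add, map_smul, map_neg, Finsupp.add_apply, Finsupp.smul_apply, Finsupp.neg_apply, Module.Basis.repr_self, Finsupp.single_apply, Fin.reduceEq, if_true, if_false, reduceIte, smul_eq_mul, mul_zero, mul_one, zero_mul, add_zero, zero_add, mul_neg, neg_zero, neg_neg]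
    try ring
  have hJr3 : ∀ X : L, b.repr (J X) 3 = -b.repr X 2 := by
    intro X
    rw [hJX X]
    simp only [map_add, map_smul, map_neg, Finsupp.add_apply, Finsupp.smul_apply, Finsupp.neg_apply, Module.Basis.repr_self, Finsupp.single_apply, Fin.reduceEq, if_true, if_false, reduceIte, smul_eq_mul, mul_zero, mul_one, zero_mul, add_zero, zero_add, mul_neg, neg_zero, neg_neg]
    try ring
  have hJr4 : ∀ X : L, b.repr (J X) 4 = -(c * b.repr X 5) := by
    intro X
    rw [hJX X]
    simp only [map_add, map_smul, map_neg, Finsupp.add_apply, Finsupp.smul_apply, Finsupp.neg_apply, Module.Basis.repr_self, Finsupp.single_apply, Fin.reduceEq, if_true, if_false, reduceIte, smul_eq_mul, mul_zero, mul_one, zero_mul, add_zero, zero_add, mul_neg, neg_zero, neg_neg]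
    try ring
  have hJr5 : ∀ X : L, b.repr (J X) 5 = b.repr X 4 / c := by
    intro X
    rw [hJX X]
    simp only [map_add, map_smul, map_neg, Finsupp.add_apply, Finsupp.smul_apply, Finsupp.neg_apply, Module.Basis.repr_self, Finsupp.single_apply, Fin.reduceEq, if_true, if_false, reduceIte, smul_eq_mul, mul_zero, mul_one, zero_mul, add_zero, zero_add, mul_neg, neg_zero, neg_neg]
    try ring
  have hJr6 : ∀ X : L, b.repr (J X) 6 = -(c / (3 + 2 * c) * b.repr X 7) := by
    intro X
    rw [hJX X]
    simp only [map_add, map_smul, map_neg, Finsupp.add_apply, Finsupp.smul_apply, Finsupp.neg_apply, Module.Basis.repr_self, Finsupp.single_apply, Fin.reduceEq, if_true, if_false, reduceIte, smul_eq_mul, mul_zero, mul_one, zero_mul, add_zero, zero_add, mul_neg, neg_zero, neg_neg]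
    try ring
  have hJr7 : ∀ X : L, b.repr (J X) 7 = (3 + 2 * c) / c * b.repr X 6 := by
    intro X
    rw [hJX X]
    simp only [map_add, map_smul, map_neg, Finsupp.add_apply, Finsupp.smul_apply, Finsupp.neg_apply, Module.Basis.repr_self, Finsupp.single_apply, Fin.reduceEq, if_true, if_false, reduceIte, smul_eq_mul, mul_zero, mul_one, zero_mul, add_zero, zero_add, mul_neg, neg_zero, neg_neg]
    try ring
  have hEX : ∀ X : L, E X = (b.repr X 0) • b 0 + (-b.repr X 1) • b 1 + (b.repr X 2) • b 2 + (-b.repr X 3) • b 3 + (b.repr X 4) • b 4 + (-b.repr X 5) • b 5 + (b.repr X 6) • b 6 + (-b.repr X 7) • b 7 := by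
    intro X
    conv_lhs => rw [← b.sum_repr X]
    rw [Fin.sum_univ_eight]
    simp only [map_add, map_smul, hEt0, hEt1, hEt2, hEt3, hEt4, hEt5, hEt6, hEt7]
    module
  have hEr0 : ∀ X : L, b.repr (E X) 0 = b.repr X 0 := by
    intro X
    rw [hEX X]
    simp only [map_add, map_smul, map_neg, Finsupp.add_apply, Finsupp.smul_apply, Finsupp.neg_apply, Module.Basis.repr_self, Finsupp.single_apply, Fin.reduceEq, if_true, if_false, reduceIte, smul_eq_mul, mul_zero, mul_one, zero_mul, add_zero, zero_add, mul_neg, neg_zero, neg_neg]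
    try ring
  have hEr1 : ∀ X : L, b.repr (E X) 1 = -b.repr X 1 := by
    intro X
    rw [hEX X]
    simp only [map_add, map_smul, map_neg, Finsupp.add_apply, Finsupp.smul_apply, Finsupp.neg_apply, Module.Basis.repr_self, Finsupp.single_apply, Fin.reduceEq, if_true, if_false, reduceIte, smul_eq_mul, mul_zero, mul_one, zero_mul, add_zero, zero_add, mul_neg, neg_zero, neg_neg]
    try ring
  have hEr2 : ∀ X : L, b.repr (E X) 2 = b.repr X 2 := by
    intro X
    rw [hEX X]
    simp only [map_add, map_smul, map_neg, Finsupp.add_apply, Finsupp.smul_apply, Finsupp.neg_apply, Module.Basis.repr_self, Finsupp.single_apply, Fin.reduceEq, if_true, if_false, reduceIte, smul_eq_mul, mul_zero, mul_one, zero_mul, add_zero, zero_add, mul_neg, neg_zero, neg_neg]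
    try ring
  have hEr3 : ∀ X : L, b.repr (E X) 3 = -b.repr X 3 := by
    intro X
    rw [hEX X]
    simp only [map_add, map_smul, map_neg, Finsupp.add_apply, Finsupp.smul_apply, Finsupp.neg_apply, Module.Basis.repr_self, Finsupp.single_apply, Fin.reduceEq, if_true, if_false, reduceIte, smul_eq_mul, mul_zero, mul_one, zero_mul, add_zero, zero_add, mul_neg, neg_zero, neg_neg]
    try ring
  have hEr4 : ∀ X : L, b.repr (E X) 4 = b.repr X 4 := by
    intro X
    rw [hEX X]
    simp only [map_add, map_smul, map_neg, Finsupp.add_apply, Finsupp.smul_apply, Finsupp.neg_apply, Module.Basis.repr_self, Finsupp.single_apply, Fin.reduceEq, if_true, if_false, reduceIte, smul_eq_mul, mul_zero, mul_one, zero_mul, add_zero, zero_add, mul_neg, neg_zero, neg_neg]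
    try ring
  have hEr5 : ∀ X : L, b.repr (E X) 5 = -b.repr X 5 := by
    intro X
    rw [hEX X]
    simp only [map_add, map_smul, map_neg, Finsupp.add_apply, Finsupp.smul_apply, Finsupp.neg_apply, Module.Basis.repr_self, Finsupp.single_apply, Fin.reduceEq, if_true, if_false, reduceIte, smul_eq_mul, mul_zero, mul_one, zero_mul, add_zero, zero_add, mul_neg, neg_zero, neg_neg]
    try ring
  have hEr6 : ∀ X : L, b.repr (E X) 6 = b.repr X 6 := by
    intro X
    rw [hEX X]
    simp only [map_add, map_smul, map_neg, Finsupp.add_apply, Finsupp.smul_apply, Finsupp.neg_apply, Module.Basis.repr_self, Finsupp.single_apply, Fin.reduceEq, if_true, if_false, reduceIte, smul_eq_mul, mul_zero, mul_one, zero_mul, add_zero, zero_add, mul_neg, neg_zero, neg_neg]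
    try ring
  have hEr7 : ∀ X : L, b.repr (E X) 7 = -b.repr X 7 := by
    intro X
    rw [hEX X]
    simp only [map_add, map_smul, map_neg, Finsupp.add_apply, Finsupp.smul_apply, Finsupp.neg_apply, Module.Basis.repr_self, Finsupp.single_apply, Fin.reduceEq, if_true, if_false, reduceIte, smul_eq_mul, mul_zero, mul_one, zero_mul, add_zero, zero_add, mul_neg, neg_zero, neg_neg]
    try ring
  have hJJ : ∀ X : L, J (J X) = -X := by
    have h : J ∘ₗ J = -LinearMap.id := by
      refine b.ext fun i => ?_
      fin_cases i <;>
        (simp only [Fin.reduceFinMk, Fin.isValue, LinearMap.comp_apply, LinearMap.neg_apply,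
          LinearMap.id_apply, hJ0, hJ1, hJ2, hJ3, hJ4, hJ5, hJ6, hJ7, map_smul, map_neg, smul_neg, neg_neg, smul_smul];
         try (match_scalars <;> field_simp <;> try tauto))
    intro X
    simpa using LinearMap.congr_fun h X
  have hNJ : ∀ X Y : L, nijenhuis J X Y = 0 := by
    intro X Y
    simp only [nijenhuis]
    rw [hbr X Y, hbr (J X) Y, hbr X (J Y), hbr (J X) (J Y)]
    simp only [map_add, map_smul, map_neg, smul_neg, neg_neg, hJ0, hJ1, hJ2, hJ3, hJ4, hJ5, hJ6, hJ7, hJr0, hJr1, hJr2, hJr3, hJr4, hJr5, hJr6, hJr7]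
    match_scalars <;> (field_simp; try ring) <;> try tauto
  have hNE : ∀ X Y : L, nijenhuis E X Y = 0 := by
    intro X Y
    simp only [nijenhuis]
    rw [hbr X Y, hbr (E X) Y, hbr X (E Y), hbr (E X) (E Y)]
    simp only [map_add, map_smul, map_neg, smul_neg, neg_neg, hEt0, hEt1, hEt2, hEt3, hEt4, hEt5, hEt6, hEt7, hEr0, hEr1, hEr2, hEr3, hEr4, hEr5, hEr6, hEr7]
    match_scalars <;> ring
  have hEE : E ∘ₗ E = LinearMap.id := by
    refine b.ext fun i => ?_
    fin_cases i <;>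
      simp [Fin.reduceFinMk, Fin.isValue, map_neg, hEt0, hEt1, hEt2, hEt3, hEt4, hEt5, hEt6, hEt7]
  have hEneid : E ≠ LinearMap.id := by
    intro h
    have h1 := hEt1
    rw [h, LinearMap.id_apply] at h1
    have h2 : b 1 + b 1 = 0 := eq_neg_iff_add_eq_zero.mp h1
    have h3 : (2 : ℝ) • b 1 = 0 := by rw [two_smul]; exact h2
    exact b.ne_zero 1 ((smul_eq_zero.mp h3).resolve_left (by norm_num))
  have hEnenegid : E ≠ -LinearMap.id := by
    intro h
    have h1 := hEt0
    rw [h] at h1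
    simp only [LinearMap.neg_apply, LinearMap.id_apply] at h1
    have h2 : b 0 + b 0 = 0 := neg_eq_iff_add_eq_zero.mp h1
    have h3 : (2 : ℝ) • b 0 = 0 := by rw [two_smul]; exact h2
    exact b.ne_zero 0 ((smul_eq_zero.mp h3).resolve_left (by norm_num))
  have hJE : ∀ X : L, J (E X) = -E (J X) := by
    have h : J ∘ₗ E = -(E ∘ₗ J) := by
      refine b.ext fun i => ?_
      fin_cases i <;>
        simp [Fin.reduceFinMk, Fin.isValue, map_smul, map_neg, hEt0, hEt1, hEt2, hEt3, hEt4, hEt5, hEt6, hEt7, hJ0, hJ1, hJ2, hJ3, hJ4, hJ5, hJ6, hJ7, smul_neg, neg_neg]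
    intro X
    simpa using LinearMap.congr_fun h X
  have hgc : ∀ X Y : L, g X Y = -(c * (c + 1)) * (b.repr X 0 * b.repr Y 7 + b.repr X 7 * b.repr Y 0) + c * (2 * c + 3) * (b.repr X 1 * b.repr Y 6 + b.repr X 6 * b.repr Y 1) - c ^ 2 * (b.repr X 2 * b.repr Y 5 + b.repr X 5 * b.repr Y 2) - c * (b.repr X 3 * b.repr Y 4 + b.repr X 4 * b.repr Y 3) := by
    intro X Y
    rw [hg, hωpK]
    simp only [e2, hJr0, hJr1, hJr2, hJr3, hJr4, hJr5, hJr6, hJr7]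
    field_simp
    ring
  have hsym : ∀ X Y : L, g X Y = g Y X := by
    intro X Y
    rw [hgc X Y, hgc Y X]
    ring
  have hnd : ∀ X : L, (∀ Y, g X Y = 0) → X = 0 := by
    intro X hX
    refine hrep0 X fun j => ?_
    have h := hX (-(J (b j)))
    rw [hg] at h
    have h2 : J (-(J (b j))) = b j := by
      rw [map_neg, hJJ (b j), neg_neg]
    rw [h2] at h
    exact h
  have hgJ : ∀ X Y : L, g (J X) (J Y) = g X Y := by
    intro X Y
    rw [hgc (J X) (J Y), hgc X Y]
    simp only [hJr0, hJr1, hJr2, hJr3, hJr4, hJr5, hJr6, hJr7]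
    field_simp
    ring
  have hgE : ∀ X Y : L, g (E X) (E Y) = -g X Y := by
    intro X Y
    rw [hgc (E X) (E Y), hgc X Y]
    simp only [hEr0, hEr1, hEr2, hEr3, hEr4, hEr5, hEr6, hEr7]
    ring
  have hcl1 : ∀ X Y Z : L, g (J ⁅X, Y⁆) Z + g (J ⁅Y, Z⁆) X + g (J ⁅Z, X⁆) Y = 0 := by
    intro X Y Z
    rw [hgc (J ⁅X, Y⁆) Z, hgc (J ⁅Y, Z⁆) X, hgc (J ⁅Z, X⁆) Y]
    simp only [hJr0, hJr1, hJr2, hJr3, hJr4, hJr5, hJr6, hJr7]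
    simp only [hrk0, hrk1, hrk2, hrk3, hrk4, hrk5, hrk6, hrk7]
    field_simp
    ring
  have hcl2 : ∀ X Y Z : L,
      g (J (E ⁅X, Y⁆)) Z + g (J (E ⁅Y, Z⁆)) X + g (J (E ⁅Z, X⁆)) Y = 0 := by
    intro X Y Z
    rw [hgc (J (E ⁅X, Y⁆)) Z, hgc (J (E ⁅Y, Z⁆)) X, hgc (J (E ⁅Z, X⁆)) Y]
    simp only [hJr0, hJr1, hJr2, hJr3, hJr4, hJr5, hJr6, hJr7]
    simp only [hEr0, hEr1, hEr2, hEr3, hEr4, hEr5, hEr6, hEr7]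
    simp only [hrk0, hrk1, hrk2, hrk3, hrk4, hrk5, hrk6, hrk7]
    field_simp
    ring
  exact ⟨⟨hJJ, hNJ⟩, hEE, hEneid, hEnenegid, hNE, hJE, hsym, hnd, hgJ, hgE, hcl1, hcl2⟩
end
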